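/- arXiv:2110.13722 — 8 statements merged into one kernel-verified Lean document; each statement's English description precedes it below -/
import Mathlib

section
/- Let X be a normed space, C ⊆ X, and let f : C → C be a non-expansive mapping. Then the set R(f) := {x ∈ C : Lip(f,x) = 1} is a relatively G_δ subset of C, i.e. it is a countable intersection of relatively open subsets of C. -/
open Filter Metric Set Topology

section Nonexpansive

variable {X : Type*} [NormedAddCommGroup X]

/-- `Lip(f,x,r)`: the Lipschitz constant of `f` witnessed at `x` at scale `r`, i.e.
`sup {‖f(y)-f(x)‖/‖y-x‖ : y ∈ C, 0 < ‖y-x‖ ≤ r}`.  (In the subtype `↥C`, `dist y x`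
is exactly `‖(y:X) - (x:X)‖`.) -/
noncomputable def LipScale {C : Set X} (f : ↥C → ↥C) (x : ↥C) (r : ℝ) : ℝ :=
  sSup ((fun y : ↥C => dist (f y) (f x) / dist y x) '' {y : ↥C | 0 < dist y x ∧ dist y x ≤ r})

/-- `Lip(f,x) = lim_{r → 0+} Lip(f,x,r)`; since `r ↦ Lip(f,x,r)` is nonnegative and
monotone, this limit is the infimum over `r > 0`. -/
noncomputable def LipPt {C : Set X} (f : ↥C → ↥C) (x : ↥C) : ℝ :=
  sInf ((fun r : ℝ => LipScale f x r) '' Set.Ioi 0)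

/-- `Lip(f)`: the (global) Lipschitz constant of `f`. -/
noncomputable def LipGlobal {C : Set X} (f : ↥C → ↥C) : ℝ :=
  sSup {L : ℝ | ∃ x y : ↥C, y ≠ x ∧ L = dist (f y) (f x) / dist y x}

/-- The space `M(C)` of non-expansive mappings `C → C`, equipped with the supremum
metric (as a subspace of the bounded continuous functions `↥C →ᵇ ↥C`; every
non-expansive self-map of a bounded set is bounded and continuous). -/
abbrev NonexpMap (C : Set X) : Type _ :=
  {f : BoundedContinuousFunction ↥C ↥C // LipschitzWith 1 ⇑f}

end Nonexpansive

/-- For a non-expansive mapping `f : C → C` of a subset `C` of a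
normed space, the set `R(f) = {x ∈ C : Lip(f,x) = 1}` is a relatively `G_δ` subset
of `C`. -/
theorem stmt_2 {X : Type*} [NormedAddCommGroup X] (C : Set X)
    (f : ↥C → ↥C) (hf : LipschitzWith 1 f) :
    IsGδ {x : ↥C | LipPt f x = 1} := by
  have hratio : ∀ x y : ↥C, dist (f y) (f x) / dist y x ≤ 1 := by
    intro x y
    rcases eq_or_ne y x with rfl | h
    · simp
    · rw [div_le_one (dist_pos.2 h)]
      simpa using hf.dist_le_mul y x
  have hBdd : ∀ (x : ↥C) (r : ℝ), BddAbove
      ((fun y : ↥C => dist (f y) (f x) / dist y x) '' {y : ↥C | 0 < dist y x ∧ dist y x ≤ r}) := by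
    intro x r
    exact ⟨1, by rintro _ ⟨y, -, rfl⟩; exact hratio x y⟩
  have hscale_le : ∀ (x : ↥C) (r : ℝ), LipScale f x r ≤ 1 := by
    intro x r
    apply Real.sSup_le
    · rintro _ ⟨y, -, rfl⟩; exact hratio x y
    · norm_num
  have hscale_nonneg : ∀ (x : ↥C) (r : ℝ), 0 ≤ LipScale f x r := by
    intro x r
    apply Real.sSup_nonneg
    rintro _ ⟨y, ⟨hy, -⟩, rfl⟩
    exact div_nonneg dist_nonneg dist_nonneg
  have hpt_le : ∀ x : ↥C, LipPt f x ≤ 1 := by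
    intro x
    have h1 : LipScale f x 1 ∈ (fun r : ℝ => LipScale f x r) '' Set.Ioi 0 :=
      ⟨1, by norm_num, rfl⟩
    exact le_trans (csInf_le ⟨0, by rintro _ ⟨r, -, rfl⟩; exact hscale_nonneg x r⟩ h1)
      (hscale_le x 1)
  have key : {x : ↥C | LipPt f x = 1} = ⋂ n : ℕ, ⋃ y : ↥C,
      {x : ↥C | 0 < dist y x ∧ dist y x < 1 / (n + 1) ∧
        (1 - 1 / (n + 1)) * dist y x < dist (f y) (f x)} := by
    ext x
    simp only [Set.mem_setOf_eq, Set.mem_iInter, Set.mem_iUnion]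
    constructor
    · intro hx n
      have hrpos : (0:ℝ) < 1 / (n + 1) / 2 := by positivity
      have hge : (1:ℝ) ≤ LipScale f x (1 / (n + 1) / 2) := by
        have h := csInf_le (s := (fun r : ℝ => LipScale f x r) '' Set.Ioi 0)
          ⟨0, by rintro _ ⟨r, -, rfl⟩; exact hscale_nonneg x r⟩
          ⟨1 / (n + 1) / 2, hrpos, rfl⟩
        rw [← LipPt, hx] at h
        exact h
      set S := (fun y : ↥C => dist (f y) (f x) / dist y x) ''
        {y : ↥C | 0 < dist y x ∧ dist y x ≤ 1 / (n + 1) / 2} with hS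
      have hne : S.Nonempty := by
        by_contra h
        rw [Set.not_nonempty_iff_eq_empty] at h
        have : LipScale f x (1 / (n + 1) / 2) = 0 := by
          rw [LipScale, ← hS, h, Real.sSup_empty]
        linarith [hge, this]
      have hlt : (1:ℝ) - 1 / (n + 1) < sSup S := by
        have : (1:ℝ) - 1 / (n + 1) < 1 := by
          have : (0:ℝ) < 1 / (n + 1) := by positivity
          linarith
        exact lt_of_lt_of_le this hge
      obtain ⟨b, hbS, hb⟩ := exists_lt_of_lt_csSup hne hlt
      obtain ⟨y, ⟨hy1, hy2⟩, rfl⟩ := hbS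
      refine ⟨y, hy1, ?_, ?_⟩
      · calc dist y x ≤ 1 / (n + 1) / 2 := hy2
          _ < 1 / (n + 1) := by linarith [hrpos]
      · exact (lt_div_iff₀ hy1).1 hb
    · intro hx
      refine le_antisymm (hpt_le x) ?_
      refine le_csInf ⟨LipScale f x 1, ⟨1, by norm_num, rfl⟩⟩ ?_
      rintro _ ⟨r, hr, rfl⟩
      by_contra hcon
      push_neg at hcon
      set ε := 1 - LipScale f x r with hε
      have hεpos : 0 < ε := by simp only [hε]; linarith
      obtain ⟨n, hn⟩ := exists_nat_one_div_lt (lt_min hεpos hr)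
      obtain ⟨y, hy1, hy2, hy3⟩ := hx n
      have hd : dist y x ≤ r := le_of_lt (lt_of_lt_of_le hy2
        (le_trans (le_of_lt hn) (min_le_right _ _)))
      have hmem : dist (f y) (f x) / dist y x ∈
          (fun y : ↥C => dist (f y) (f x) / dist y x) ''
            {y : ↥C | 0 < dist y x ∧ dist y x ≤ r} := ⟨y, ⟨hy1, hd⟩, rfl⟩
      have hle := le_csSup (hBdd x r) hmem
      have hgt : 1 - ε < dist (f y) (f x) / dist y x := by
        rw [lt_div_iff₀ hy1]
        calc (1 - ε) * dist y x ≤ (1 - 1 / (n + 1)) * dist y x := by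
              have : (1:ℝ) / (n + 1) < ε := lt_of_lt_of_le hn (min_le_left _ _)
              nlinarith
          _ < dist (f y) (f x) := hy3
      have : 1 - ε < LipScale f x r := lt_of_lt_of_le hgt hle
      simp only [hε] at this
      linarith
  rw [key]
  apply IsGδ.iInter_of_isOpen
  intro n
  apply isOpen_iUnion
  intro y
  have h1 : IsOpen {x : ↥C | 0 < dist y x} :=
    isOpen_lt continuous_const (continuous_const.dist continuous_id)
  have h2 : IsOpen {x : ↥C | dist y x < 1 / (n + 1)} :=
    isOpen_lt (continuous_const.dist continuous_id) continuous_const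
  have h3 : IsOpen {x : ↥C | (1 - 1 / (n + 1)) * dist y x < dist (f y) (f x)} :=
    isOpen_lt (continuous_const.mul (continuous_const.dist continuous_id))
      (continuous_const.dist hf.continuous)
  exact h1.and (h2.and h3)
end

section
/- Let (M,d) be a perfect metric space, P ⊆ M, q ∈ M, η > 0, and let φ : (0,η) → (0,∞) be a strictly increasing concave function with lim_{t→0} φ(t) = 0. Then P is φ-upper porous at q if and only if there exists α ∈ (0,1) such that for every ε > 0 there exists q' ∈ M with 0 < d(q,q') ≤ ε and B(q', φ^{-1}(α·d(q,q'))) ∩ P = ∅. -/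
open Filter Metric Set Topology

section Porosity

variable {α : Type*} [MetricSpace α]

/-- The set of radii `s > 0` such that some open ball of radius `s` is contained in
`ball x r \ P`.  Its supremum is the quantity `γ(x,r,P)` (with `sup ∅ = -∞`, i.e. the
set being nonempty is exactly the condition `γ(x,r,P) > 0`). -/
def porHoles (P : Set α) (x : α) (r : ℝ) : Set ℝ :=
  {s : ℝ | 0 < s ∧ ∃ y : α, Metric.ball y s ⊆ Metric.ball x r \ P}

/-- `γ(x,r,P)`, as a real number. -/
noncomputable def porGamma (P : Set α) (x : α) (r : ℝ) : ℝ :=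
  sSup (porHoles P x r)

/-- `P` is `φ`-upper porous at `x`:  `γ(x,r,P) > 0` for all `r > 0` and
`limsup_{r → 0+} φ(γ(x,r,P))/r > 0` (the limsup taken in the extended reals). -/
def IsPhiUpperPorousAt (φ : ℝ → ℝ) (P : Set α) (x : α) : Prop :=
  (∀ r > 0, (porHoles P x r).Nonempty) ∧
    0 < Filter.limsup (fun r : ℝ => ((φ (porGamma P x r) / r : ℝ) : EReal))
        (nhdsWithin 0 (Set.Ioi 0))

/-- `P` is `φ`-lower porous at `x`:  `γ(x,r,P) > 0` for all `r > 0` and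
`liminf_{r → 0+} φ(γ(x,r,P))/r > 0` (the liminf taken in the extended reals). -/
def IsPhiLowerPorousAt (φ : ℝ → ℝ) (P : Set α) (x : α) : Prop :=
  (∀ r > 0, (porHoles P x r).Nonempty) ∧
    0 < Filter.liminf (fun r : ℝ => ((φ (porGamma P x r) / r : ℝ) : EReal))
        (nhdsWithin 0 (Set.Ioi 0))

def IsPhiUpperPorous (φ : ℝ → ℝ) (P : Set α) : Prop :=
  ∀ x ∈ P, IsPhiUpperPorousAt φ P x

def IsPhiLowerPorous (φ : ℝ → ℝ) (P : Set α) : Prop :=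
  ∀ x ∈ P, IsPhiLowerPorousAt φ P x

def IsSigmaPhiUpperPorous (φ : ℝ → ℝ) (P : Set α) : Prop :=
  ∃ F : ℕ → Set α, P = ⋃ n, F n ∧ ∀ n, IsPhiUpperPorous φ (F n)

def IsSigmaPhiLowerPorous (φ : ℝ → ℝ) (P : Set α) : Prop :=
  ∃ F : ℕ → Set α, P = ⋃ n, F n ∧ ∀ n, IsPhiLowerPorous φ (F n)

/-- Ordinary lower porosity is `φ`-lower porosity with `φ = id`. -/
def IsLowerPorousAt (P : Set α) (x : α) : Prop :=
  IsPhiLowerPorousAt (fun t => t) P x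

def IsLowerPorous (P : Set α) : Prop :=
  IsPhiLowerPorous (fun t => t) P

def IsSigmaLowerPorous (P : Set α) : Prop :=
  IsSigmaPhiLowerPorous (fun t => t) P

end Porosity

lemma concave_chord {η : ℝ} {φ : ℝ → ℝ} (hφ_conc : ConcaveOn ℝ (Set.Ioo 0 η) φ)
    (hφ_pos : ∀ t ∈ Set.Ioo 0 η, 0 < φ t) {t₀ s : ℝ}
    (ht₀ : t₀ ∈ Set.Ioo 0 η) (hs0 : 0 < s) (hst : s ≤ t₀) :
    s / t₀ * φ t₀ ≤ φ s := by
  rcases eq_or_lt_of_le hst with rfl | hlt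
  · rw [div_self (ne_of_gt hs0), one_mul]
  · have key : ∀ u ∈ Set.Ioo (0:ℝ) s, (s - u) / (t₀ - u) * φ t₀ ≤ φ s := by
      rintro u ⟨hu1, hu2⟩
      have hden : 0 < t₀ - u := by linarith
      set lam := (t₀ - s) / (t₀ - u) with hlam
      have hlam0 : 0 ≤ lam := div_nonneg (by linarith) hden.le
      have hlam1 : lam ≤ 1 := (div_le_one hden).2 (by linarith)
      have huI : u ∈ Set.Ioo (0:ℝ) η := ⟨hu1, by linarith [ht₀.2]⟩
      have hcomb := hφ_conc.2 huI ht₀ hlam0 (show (0:ℝ) ≤ 1 - lam by linarith) (show lam + (1 - lam) = 1 by ring)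
      have harg : lam * u + (1 - lam) * t₀ = s := by
        rw [hlam]; field_simp; ring
      simp only [smul_eq_mul, harg] at hcomb
      have h1lam : 1 - lam = (s - u) / (t₀ - u) := by
        rw [hlam]; field_simp; ring
      have hφu : 0 < φ u := hφ_pos u huI
      have hprod : 0 ≤ lam * φ u := mul_nonneg hlam0 hφu.le
      rw [← h1lam]
      linarith
    have htend : Filter.Tendsto (fun u : ℝ => (s - u) / (t₀ - u) * φ t₀)
        (nhdsWithin 0 (Set.Ioi 0)) (nhds (s / t₀ * φ t₀)) := by
      have hc : ContinuousAt (fun u : ℝ => (s - u) / (t₀ - u) * φ t₀) 0 := by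
        have : ContinuousAt (fun u : ℝ => (s - u) / (t₀ - u)) 0 :=
          ContinuousAt.div (by fun_prop) (by fun_prop) (by simpa using ht₀.1.ne')
        exact this.mul continuousAt_const
      have h2 := hc.tendsto.mono_left (nhdsWithin_le_nhds (s := Set.Ioi 0))
      simpa using h2
    refine le_of_tendsto htend ?_
    filter_upwards [Ioo_mem_nhdsGT_of_mem (by exact ⟨le_rfl, hs0⟩)] with u hu
    exact key u hu

section PorAux
variable {α : Type*} [MetricSpace α]

lemma porHoles_mono {P : Set α} {x : α} {r r' : ℝ} (h : r ≤ r') :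
    porHoles P x r ⊆ porHoles P x r' := by
  rintro s ⟨hs, y, hy⟩
  exact ⟨hs, y, hy.trans (Set.diff_subset_diff_left (Metric.ball_subset_ball h))⟩

lemma porHoles_bound {P : Set α} {q p : α} (_hp : p ≠ q) {r s : ℝ}
    (hr : r ≤ dist q p) (hs : s ∈ porHoles P q r) : s < r + dist q p := by
  obtain ⟨hs0, y, hy⟩ := hs
  have hyq : y ∈ Metric.ball q r := (hy (Metric.mem_ball_self hs0)).1
  have hpball : p ∉ Metric.ball q r := by
    simp only [Metric.mem_ball, not_lt, dist_comm p q]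
    exact hr
  have hpy : p ∉ Metric.ball y s := fun h => hpball (hy h).1
  have h1 : s ≤ dist p y := by
    by_contra h
    exact hpy (by simpa [Metric.mem_ball] using lt_of_not_ge h)
  have h2 : dist p y ≤ dist p q + dist q y := dist_triangle p q y
  have h3 : dist q y < r := by simpa [Metric.mem_ball, dist_comm] using hyq
  rw [dist_comm p q] at h2
  linarith

end PorAux

lemma exists_phi_eq {η : ℝ} {φ : ℝ → ℝ}
    (hφ_conc : ConcaveOn ℝ (Set.Ioo 0 η) φ)
    (hφ_lim : Filter.Tendsto φ (nhdsWithin 0 (Set.Ioi 0)) (nhds 0))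
    {s v : ℝ} (hs : s ∈ Set.Ioo 0 η) (hv : 0 < v) (hvs : v ≤ φ s) :
    ∃ t ∈ Set.Ioc 0 s, φ t = v := by
  have hev : ∀ᶠ u in nhdsWithin 0 (Set.Ioi 0), φ u < v :=
    hφ_lim.eventually (gt_mem_nhds hv)
  have hmem : Set.Ioo (0:ℝ) s ∈ nhdsWithin 0 (Set.Ioi 0) :=
    Ioo_mem_nhdsGT_of_mem ⟨le_rfl, hs.1⟩
  obtain ⟨t₁, ht₁v, ht₁mem⟩ := (hev.and (Filter.eventually_of_mem hmem (fun _ h => h))).exists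
  have hsub : Set.Icc t₁ s ⊆ Set.Ioo 0 η :=
    fun x hx => ⟨lt_of_lt_of_le ht₁mem.1 hx.1, lt_of_le_of_lt hx.2 hs.2⟩
  have hcont : ContinuousOn φ (Set.Icc t₁ s) :=
    (hφ_conc.continuousOn isOpen_Ioo).mono hsub
  have hIVT := intermediate_value_Icc ht₁mem.2.le hcont
  have hvIcc : v ∈ Set.Icc (φ t₁) (φ s) := ⟨ht₁v.le, hvs⟩
  obtain ⟨t, htmem, htφ⟩ := hIVT hvIcc
  exact ⟨t, ⟨lt_of_lt_of_le ht₁mem.1 htmem.1, htmem.2⟩, htφ⟩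

/-- In a perfect metric space, for a strictly increasing concave
`φ : (0,η) → (0,∞)` with `φ(t) → 0` as `t → 0`,  a set `P` is `φ`-upper porous at `q`
iff there is `α ∈ (0,1)` such that for every `ε > 0` there is `q'` with
`0 < d(q,q') ≤ ε` and `B(q', φ⁻¹(α·d(q,q'))) ∩ P = ∅`.  (The inverse value
`φ⁻¹(α·d(q,q'))` is encoded as the unique `t ∈ (0,η)` with `φ t = α·d(q,q')`.) -/
theorem stmt_3 {α : Type*} [MetricSpace α]
    (hperf : ∀ x : α, Filter.NeBot (nhdsWithin x {x}ᶜ))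
    (P : Set α) (q : α) (η : ℝ) (hη : 0 < η) (φ : ℝ → ℝ)
    (hφ_mono : StrictMonoOn φ (Set.Ioo 0 η))
    (hφ_conc : ConcaveOn ℝ (Set.Ioo 0 η) φ)
    (hφ_pos : ∀ t ∈ Set.Ioo 0 η, 0 < φ t)
    (hφ_lim : Filter.Tendsto φ (nhdsWithin 0 (Set.Ioi 0)) (nhds 0)) :
    IsPhiUpperPorousAt φ P q ↔
      ∃ a ∈ Set.Ioo (0 : ℝ) 1, ∀ ε > 0, ∃ q' : α,
        0 < dist q q' ∧ dist q q' ≤ ε ∧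
        ∃ t ∈ Set.Ioo 0 η, φ t = a * dist q q' ∧ Metric.ball q' t ∩ P = ∅ := by
  have hclose : ∀ δ > (0:ℝ), ∃ p : α, p ≠ q ∧ dist q p < δ := by
    intro δ hδ
    have hne : (Metric.ball q δ ∩ {q}ᶜ).Nonempty := by
      have := hperf q
      exact Filter.nonempty_of_mem
        (Filter.inter_mem (mem_nhdsWithin_of_mem_nhds (Metric.ball_mem_nhds q hδ))
          self_mem_nhdsWithin)
    obtain ⟨p, hp1, hp2⟩ := hne
    exact ⟨p, hp2, by simpa [dist_comm] using hp1⟩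
  constructor
  · rintro ⟨hne, hlim⟩
    obtain ⟨p, hpq, hpc⟩ := hclose (η/4) (by linarith)
    have hc0 : 0 < dist q p := dist_pos.2 (Ne.symm hpq)
    set c := dist q p with hcdef
    obtain ⟨b, hb0, hbl⟩ := exists_between hlim
    have hbtop : b ≠ ⊤ := (lt_of_lt_of_le hbl le_top).ne
    have hbbot : b ≠ ⊥ := fun hb => absurd hb0 (by rw [hb]; exact not_lt_bot)
    set β := b.toReal with hβdef
    have hbeq : b = (β : EReal) := (EReal.coe_toReal hbtop hbbot).symm
    have hβ0 : 0 < β := by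
      rw [hbeq] at hb0; exact_mod_cast hb0
    have hfreq : ∃ᶠ r in nhdsWithin 0 (Set.Ioi 0),
        b < ((φ (porGamma P q r) / r : ℝ) : EReal) :=
      Filter.frequently_lt_of_lt_limsup (by isBoundedDefault) hbl
    set a := min (β/2) (1/2 : ℝ) with hadef
    have ha0 : 0 < a := lt_min (by linarith) (by norm_num)
    have ha1 : a < 1 := lt_of_le_of_lt (min_le_right _ _) (by norm_num)
    refine ⟨a, ⟨ha0, ha1⟩, ?_⟩
    intro ε hε
    have hev : ∀ᶠ r in nhdsWithin 0 (Set.Ioi 0), 0 < r ∧ r < ε ∧ r ≤ c := by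
      filter_upwards [Ioo_mem_nhdsGT_of_mem (Set.left_mem_Ico.2 (lt_min hε hc0))]
        with r hr
      exact ⟨hr.1, lt_of_lt_of_le hr.2 (min_le_left _ _),
        le_of_lt (lt_of_lt_of_le hr.2 (min_le_right _ _))⟩
    obtain ⟨r, hrb, hr0, hrε, hrc⟩ := (hfreq.and_eventually hev).exists
    have hbdd : BddAbove (porHoles P q r) :=
      ⟨r + c, fun s hs => (porHoles_bound hpq hrc hs).le⟩
    obtain ⟨s₀, hs₀⟩ := hne r hr0
    set γ := porGamma P q r with hγdef
    have hγ0 : 0 < γ := lt_of_lt_of_le hs₀.1 (le_csSup hbdd hs₀)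
    have hγη : γ < η := by
      have : γ ≤ r + c := csSup_le ⟨s₀, hs₀⟩ (fun s hs => (porHoles_bound hpq hrc hs).le)
      have : γ ≤ c + c := le_trans this (by linarith)
      linarith
    have hγI : γ ∈ Set.Ioo (0:ℝ) η := ⟨hγ0, hγη⟩
    have hrφ : β * r < φ γ := by
      rw [hbeq] at hrb
      have : β < φ γ / r := by exact_mod_cast hrb
      calc β * r < (φ γ / r) * r := by exact mul_lt_mul_of_pos_right this hr0
        _ = φ γ := by field_simp
    obtain ⟨s, hsmem, hs2⟩ := exists_lt_of_lt_csSup ⟨s₀, hs₀⟩ (by linarith : γ/2 < γ)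
    have hs_le : s ≤ γ := le_csSup hbdd hsmem
    have hsI : s ∈ Set.Ioo (0:ℝ) η := ⟨hsmem.1, lt_of_le_of_lt hs_le hγη⟩
    have hφγ0 : 0 < φ γ := hφ_pos γ hγI
    have hφs : β/2 * r < φ s := by
      have hch := concave_chord hφ_conc hφ_pos hγI hsmem.1 hs_le
      have h12 : (1:ℝ)/2 < s / γ := by
        rw [lt_div_iff₀ hγ0]; linarith
      have : (1:ℝ)/2 * φ γ < s / γ * φ γ := mul_lt_mul_of_pos_right h12 hφγ0
      nlinarith
    obtain ⟨hs0', y, hy⟩ := hsmem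
    by_cases hyq : y = q
    · rw [hyq] at hy
      have hsh : (0:ℝ) < s/2 := by linarith
      have hs2I : s/2 ∈ Set.Ioo (0:ℝ) η := ⟨hsh, by linarith [hsI.2]⟩
      have hφs2 : 0 < φ (s/2) := hφ_pos _ hs2I
      obtain ⟨q', hq'q, hq'd⟩ := hclose (min (min ε (s/2)) (φ (s/2)))
        (lt_min (lt_min hε hsh) hφs2)
      set d := dist q q' with hddef
      have hd0 : 0 < d := dist_pos.2 (Ne.symm hq'q)
      have hdε : d < ε := lt_of_lt_of_le hq'd (le_trans (min_le_left _ _) (min_le_left _ _))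
      have hds : d < s/2 := lt_of_lt_of_le hq'd (le_trans (min_le_left _ _) (min_le_right _ _))
      have hdφ : d < φ (s/2) := lt_of_lt_of_le hq'd (min_le_right _ _)
      have had : a * d < φ (s/2) :=
        lt_of_le_of_lt (by nlinarith : a * d ≤ d) hdφ
      obtain ⟨t, htIoc, htφ⟩ := exists_phi_eq hφ_conc hφ_lim hs2I
        (mul_pos ha0 hd0) had.le
      refine ⟨q', hd0, hdε.le, t, ⟨htIoc.1, lt_of_le_of_lt htIoc.2 hs2I.2⟩, htφ, ?_⟩
      rw [Set.eq_empty_iff_forall_notMem]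
      rintro z ⟨hz1, hz2⟩
      have hzq : z ∈ Metric.ball q s := by
        simp only [Metric.mem_ball] at hz1 ⊢
        have h1 : dist z q ≤ dist z q' + dist q' q := dist_triangle z q' q
        have h2 : dist q' q = d := by rw [hddef, dist_comm]
        linarith [htIoc.2]
      exact (hy hzq).2 hz2
    · set d := dist q y with hddef
      have hd0 : 0 < d := dist_pos.2 (Ne.symm hyq)
      have hdr : d < r := by
        have := (hy (Metric.mem_ball_self hs0')).1
        simpa [Metric.mem_ball, dist_comm] using this
      have had : a * d < φ s := by
        have h1 : a * d ≤ β/2 * d := mul_le_mul_of_nonneg_right (min_le_left _ _) hd0.le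
        have h2 : β/2 * d < β/2 * r := by nlinarith
        linarith
      obtain ⟨t, htIoc, htφ⟩ := exists_phi_eq hφ_conc hφ_lim hsI
        (mul_pos ha0 hd0) had.le
      refine ⟨y, hd0, (lt_trans hdr hrε).le, t, ⟨htIoc.1, lt_of_le_of_lt htIoc.2 hsI.2⟩,
        htφ, ?_⟩
      rw [Set.eq_empty_iff_forall_notMem]
      rintro z ⟨hz1, hz2⟩
      exact (hy (Metric.ball_subset_ball htIoc.2 hz1)).2 hz2
  · rintro ⟨a, ⟨ha0, ha1⟩, h⟩
    set t₀ := η/2 with ht₀def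
    have ht₀I : t₀ ∈ Set.Ioo (0:ℝ) η := ⟨by linarith, by linarith⟩
    have hK : 0 < φ t₀ := hφ_pos _ ht₀I
    set C := a * t₀ / φ t₀ with hCdef
    have hC0 : 0 < C := div_pos (mul_pos ha0 ht₀I.1) hK
    have main : ∀ ε > (0:ℝ), ∃ d t : ℝ, 0 < d ∧ d ≤ ε ∧ 0 < t ∧
        t ∈ porHoles P q (d + t) ∧ φ t = a * d ∧ t ≤ C * d := by
      intro ε hε
      set ε' := min ε (φ t₀ / 2) with hε'def
      have hε'0 : 0 < ε' := lt_min hε (by linarith)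
      obtain ⟨q', hd0, hdε, t, htI, htφ, htP⟩ := h ε' hε'0
      set d := dist q q' with hddef
      have hadφ : a * d < φ t₀ := by
        have h1 : a * d ≤ d := by nlinarith
        have h2 : d ≤ φ t₀ / 2 := le_trans hdε (min_le_right _ _)
        linarith
      have htt₀ : t < t₀ := by
        by_contra hcon
        push_neg at hcon
        have := hφ_mono.monotoneOn ht₀I htI hcon
        rw [htφ] at this
        linarith
      have hch := concave_chord hφ_conc hφ_pos ht₀I htI.1 htt₀.le
      rw [htφ] at hch
      have htC : t ≤ C * d := by
        rw [div_mul_eq_mul_div, div_le_iff₀ ht₀I.1] at hch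
        rw [hCdef, div_mul_eq_mul_div, le_div_iff₀ hK]
        nlinarith [hch]
      have hmem : t ∈ porHoles P q (d + t) := by
        refine ⟨htI.1, q', fun z hz => ⟨?_, ?_⟩⟩
        · simp only [Metric.mem_ball] at hz ⊢
          calc dist z q ≤ dist z q' + dist q' q := dist_triangle z q' q
            _ < t + d := by rw [dist_comm q' q]; exact add_lt_add_of_lt_of_le hz le_rfl
            _ = d + t := by ring
        · intro hzP
          have : z ∈ Metric.ball q' t ∩ P := ⟨hz, hzP⟩
          rw [htP] at this
          exact this
      exact ⟨d, t, hd0, le_trans hdε (min_le_left _ _), htI.1, hmem, htφ, htC⟩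
    obtain ⟨p, hpq, hpc⟩ := hclose (η/4) (by linarith)
    have hc0 : 0 < dist q p := dist_pos.2 (Ne.symm hpq)
    set c := dist q p with hcdef
    constructor
    · intro r hr
      obtain ⟨d, t, hd0, hdε, ht0, hmem, _, htC⟩ := main (r / (1 + C))
        (div_pos hr (by linarith))
      have hdt : d + t ≤ r := by
        have h1 : d + t ≤ (1 + C) * d := by linarith
        have h2 : (1 + C) * d ≤ (1 + C) * (r / (1 + C)) :=
          mul_le_mul_of_nonneg_left hdε (by linarith)
        have h3 : (1 + C) * (r / (1 + C)) = r := by field_simp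
        linarith
      exact ⟨t, porHoles_mono hdt hmem⟩
    · set βb := a / (1 + C) with hβbdef
      have hβb0 : 0 < βb := div_pos ha0 (by linarith)
      refine lt_of_lt_of_le (show (0:EReal) < ((βb : ℝ) : EReal) by exact_mod_cast hβb0)
        (Filter.le_limsup_of_frequently_le' ?_)
      rw [(nhdsGT_basis (0:ℝ)).frequently_iff]
      intro δ hδ
      set ε := min δ (2*c) / (2 * (1 + C)) with hεdef
      have hε0 : 0 < ε := div_pos (lt_min hδ (by linarith)) (by linarith)
      obtain ⟨d, t, hd0, hdε, ht0, hmem, htφ, htC⟩ := main ε hε0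
      set r := d + t with hrdef
      have hr0 : 0 < r := by linarith
      have hrbound : r ≤ min δ (2*c) / 2 := by
        have h1 : r ≤ (1 + C) * d := by linarith
        have h2 : (1 + C) * d ≤ (1 + C) * ε := mul_le_mul_of_nonneg_left hdε (by linarith)
        have h3 : (1 + C) * ε = min δ (2*c) / 2 := by rw [hεdef]; field_simp
        linarith
      have hrδ : r < δ := by
        have := min_le_left δ (2*c)
        have hmin : 0 < min δ (2*c) := lt_min hδ (by linarith)
        linarith
      have hrc : r ≤ c := by
        have := min_le_right δ (2*c)
        linarith
      refine ⟨r, ⟨hr0, hrδ⟩, ?_⟩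
      have hbdd : BddAbove (porHoles P q r) :=
        ⟨r + c, fun s hs => (porHoles_bound hpq hrc hs).le⟩
      set γ := porGamma P q r with hγdef
      have hγt : t ≤ γ := le_csSup hbdd hmem
      have hγ0 : 0 < γ := lt_of_lt_of_le ht0 hγt
      have hγη : γ < η := by
        have h1 : γ ≤ r + c := csSup_le ⟨t, hmem⟩ (fun s hs => (porHoles_bound hpq hrc hs).le)
        linarith
      have htI2 : t ∈ Set.Ioo (0:ℝ) η := ⟨ht0, lt_of_le_of_lt hγt hγη⟩
      have hφmono : φ t ≤ φ γ := hφ_mono.monotoneOn htI2 ⟨hγ0, hγη⟩ hγt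
      have hfinal : βb ≤ φ γ / r := by
        rw [hβbdef, div_le_div_iff₀ (by linarith) hr0]
        have h1 : a * r ≤ a * ((1 + C) * d) := by
          have : r ≤ (1 + C) * d := by linarith
          exact mul_le_mul_of_nonneg_left this ha0.le
        have h2 : a * d ≤ φ γ := by rw [← htφ]; exact hφmono
        have h3 := mul_le_mul_of_nonneg_right h2 (show (0:ℝ) ≤ 1 + C by linarith)
        linarith
      exact EReal.coe_le_coe_iff.2 hfinal
end

section
/- Let (M,d) be a perfect metric space, P ⊆ M, q ∈ M, η > 0, and let φ : (0,η) → (0,∞) be a strictly increasing concave function with lim_{t→0} φ(t) = 0. Then P is φ-lower porous at q if and only if there exist ε₀ > 0 and β ∈ (0,1) such that for every ε ∈ (0,ε₀) there exists q' ∈ M with d(q,q') ≤ ε and B(q', φ^{-1}(β·ε)) ∩ P = ∅. -/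
open Filter Metric Set Topology

section AuxPor

variable {α : Type*} [MetricSpace α]

lemma porHoles_down {P : Set α} {q : α} {r s t : ℝ} (ht : 0 < t) (hts : t ≤ s)
    (hs : s ∈ porHoles P q r) : t ∈ porHoles P q r := by
  obtain ⟨_, y, hy⟩ := hs
  exact ⟨ht, y, (Metric.ball_subset_ball hts).trans hy⟩

lemma porHoles_mono_r {P : Set α} {q : α} {r r' : ℝ} (h : r ≤ r') :
    porHoles P q r ⊆ porHoles P q r' := by
  rintro s ⟨hs, y, hy⟩
  exact ⟨hs, y, hy.trans (Set.diff_subset_diff_left (Metric.ball_subset_ball h))⟩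

/-- In a perfect space, holes inside `ball q r` have radius at most `r + δ`,
once `r` is small enough (depending on `δ`). -/
lemma porHoles_bound_s4 {P : Set α} {q : α}
    (hperf : Filter.NeBot (nhdsWithin q {q}ᶜ)) {δ : ℝ} (hδ : 0 < δ) :
    ∃ r₀ > (0 : ℝ), ∀ r, 0 < r → r ≤ r₀ → ∀ s ∈ porHoles P q r, s ≤ r + δ := by
  have hball : Metric.ball q δ ∩ {q}ᶜ ∈ nhdsWithin q {q}ᶜ :=
    Filter.inter_mem (mem_nhdsWithin_of_mem_nhds (Metric.ball_mem_nhds q hδ))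
      self_mem_nhdsWithin
  obtain ⟨z, hz1, hz2⟩ := hperf.nonempty_of_mem hball
  have hqz : 0 < dist q z := by
    rw [dist_pos]; exact fun h => hz2 h.symm
  refine ⟨dist q z, hqz, ?_⟩
  intro r hr hrr s hs
  obtain ⟨hs0, y, hy⟩ := hs
  have hyq : y ∈ Metric.ball q r := (hy (Metric.mem_ball_self hs0)).1
  have hz3 : z ∉ Metric.ball y s := by
    intro hzy
    have h1 : z ∈ Metric.ball q r := (hy hzy).1
    rw [Metric.mem_ball, dist_comm] at h1
    linarith
  have hsz : s ≤ dist z y := by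
    by_contra h
    exact hz3 (by rw [Metric.mem_ball]; linarith)
  have h2 : dist z y ≤ dist z q + dist q y := dist_triangle z q y
  rw [Metric.mem_ball] at hyq hz1
  rw [dist_comm z q] at h2
  rw [dist_comm q y] at h2
  rw [dist_comm] at hz1
  linarith

/-- Lower bound for positive concave functions vanishing at `0+`. -/
lemma concave_lb {η : ℝ} {φ : ℝ → ℝ} (hconc : ConcaveOn ℝ (Set.Ioo 0 η) φ)
    (hpos : ∀ u ∈ Set.Ioo 0 η, 0 < φ u) {s₀ t : ℝ} (hs₀ : s₀ ∈ Set.Ioo 0 η)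
    (ht : 0 < t) (hts : t ≤ s₀) : t / s₀ * φ s₀ ≤ φ t := by
  rcases eq_or_lt_of_le hts with rfl | hlt
  · rw [div_self (ne_of_gt hs₀.1), one_mul]
  · have key : ∀ u ∈ Set.Ioo (0:ℝ) t, (t - u) / (s₀ - u) * φ s₀ ≤ φ t := by
      intro u hu
      have hu' : u ∈ Set.Ioo 0 η := ⟨hu.1, lt_trans (hu.2.trans_le hts) hs₀.2⟩
      have hden : 0 < s₀ - u := by
        have := hu.2; linarith
      have ha : (0:ℝ) ≤ (s₀ - t) / (s₀ - u) := div_nonneg (by linarith) hden.le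
      have hb : (0:ℝ) ≤ (t - u) / (s₀ - u) := div_nonneg (by linarith [hu.2]) hden.le
      have hab : (s₀ - t) / (s₀ - u) + (t - u) / (s₀ - u) = 1 := by
        field_simp
        ring
      have hcomb : ((s₀ - t) / (s₀ - u)) • u + ((t - u) / (s₀ - u)) • s₀ = t := by
        simp only [smul_eq_mul]
        field_simp
        ring
      have hineq := hconc.2 hu' hs₀ ha hb hab
      rw [hcomb] at hineq
      simp only [smul_eq_mul] at hineq
      nlinarith [hpos u hu', mul_nonneg ha (hpos u hu').le]
    have hcont : ContinuousAt (fun u : ℝ => (t - u) / (s₀ - u) * φ s₀) 0 := by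
      apply ContinuousAt.mul _ continuousAt_const
      exact ContinuousAt.div (by fun_prop) (by fun_prop) (by simpa using ne_of_gt hs₀.1)
    have htend : Filter.Tendsto (fun u : ℝ => (t - u) / (s₀ - u) * φ s₀)
        (nhdsWithin 0 (Set.Ioi 0)) (nhds (t / s₀ * φ s₀)) := by
      have h0 : (t - (0:ℝ)) / (s₀ - 0) * φ s₀ = t / s₀ * φ s₀ := by norm_num
      have h1 := hcont.tendsto.mono_left
        (nhdsWithin_le_nhds (s := Set.Ioi (0:ℝ)) (a := (0:ℝ)))
      rwa [h0] at h1
    refine le_of_tendsto htend ?_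
    filter_upwards [Ioo_mem_nhdsGT_of_mem (Set.mem_Ico.mpr ⟨le_refl (0:ℝ), ht⟩)] with u hu
    exact key u hu

end AuxPor

/-- In a perfect metric space, for a strictly increasing concave
`φ : (0,η) → (0,∞)` with `φ(t) → 0` as `t → 0`,  a set `P` is `φ`-lower porous at `q`
iff there are `ε₀ > 0` and `β ∈ (0,1)` such that for every `ε ∈ (0,ε₀)` there is `q'`
with `d(q,q') ≤ ε` and `B(q', φ⁻¹(β·ε)) ∩ P = ∅`.  (The inverse value `φ⁻¹(β·ε)` is
encoded as the unique `t ∈ (0,η)` with `φ t = β·ε`.) -/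
theorem stmt_4 {α : Type*} [MetricSpace α]
    (hperf : ∀ x : α, Filter.NeBot (nhdsWithin x {x}ᶜ))
    (P : Set α) (q : α) (η : ℝ) (hη : 0 < η) (φ : ℝ → ℝ)
    (hφ_mono : StrictMonoOn φ (Set.Ioo 0 η))
    (hφ_conc : ConcaveOn ℝ (Set.Ioo 0 η) φ)
    (hφ_pos : ∀ t ∈ Set.Ioo 0 η, 0 < φ t)
    (hφ_lim : Filter.Tendsto φ (nhdsWithin 0 (Set.Ioi 0)) (nhds 0)) :
    IsPhiLowerPorousAt φ P q ↔
      ∃ ε₀ > (0 : ℝ), ∃ β ∈ Set.Ioo (0 : ℝ) 1, ∀ ε ∈ Set.Ioo 0 ε₀, ∃ q' : α,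
        dist q q' ≤ ε ∧
        ∃ t ∈ Set.Ioo 0 η, φ t = β * ε ∧ Metric.ball q' t ∩ P = ∅ := by
  set s₀ : ℝ := η / 2 with hs₀def
  have hs₀ : s₀ ∈ Set.Ioo 0 η := ⟨by positivity, by simp only [hs₀def]; linarith⟩
  have hφs₀ : 0 < φ s₀ := hφ_pos _ hs₀
  have hmono : MonotoneOn φ (Set.Ioo 0 η) := hφ_mono.monotoneOn
  have hcont : ContinuousOn φ (Set.Ioo 0 η) := hφ_conc.continuousOn isOpen_Ioo
  constructor
  · rintro ⟨hne, hlim⟩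
    obtain ⟨c, hc0, hclt⟩ : ∃ c : ℝ, 0 < c ∧
        (c : EReal) < Filter.liminf (fun r : ℝ => ((φ (porGamma P q r) / r : ℝ) : EReal))
          (nhdsWithin 0 (Set.Ioi 0)) := by
      obtain ⟨x, hx0, hxl⟩ := exists_between hlim
      obtain ⟨c, hc1, hc2⟩ := EReal.exists_between_coe_real hx0
      refine ⟨c, ?_, hc2.trans hxl⟩
      exact_mod_cast hc1
    have hev : ∀ᶠ r in nhdsWithin (0:ℝ) (Set.Ioi 0),
        (c : EReal) < ((φ (porGamma P q r) / r : ℝ) : EReal) :=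
      Filter.eventually_lt_of_lt_liminf hclt
    obtain ⟨u, hu, hsub⟩ := mem_nhdsGT_iff_exists_Ioo_subset.mp hev
    obtain ⟨r₂, hr₂0, hr₂⟩ := porHoles_bound_s4 (P := P) (hperf q)
      (show (0:ℝ) < η / 4 by linarith)
    refine ⟨min (min r₂ u) (η / 2), lt_min (lt_min hr₂0 hu) (by linarith),
      min c 1 / 2, ⟨by have := lt_min hc0 one_pos; linarith, by
        have : min c 1 ≤ 1 := min_le_right _ _
        linarith⟩, ?_⟩
    set β := min c 1 / 2 with hβdef
    have hβc : β < c := by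
      have : min c 1 ≤ c := min_le_left _ _
      simp only [hβdef]; linarith
    have hβ0 : 0 < β := by
      have := lt_min hc0 one_pos
      simp only [hβdef]; linarith
    intro ε hε
    obtain ⟨hε0, hεlt⟩ := hε
    have hεr₂ : ε ≤ r₂ := le_of_lt (hεlt.trans_le ((min_le_left _ _).trans (min_le_left _ _)))
    have hεu : ε < u := hεlt.trans_le ((min_le_left _ _).trans (min_le_right _ _))
    have hεη : ε ≤ η / 2 := le_of_lt (hεlt.trans_le (min_le_right _ _))
    have hubd : ∀ s ∈ porHoles P q ε, s ≤ ε + η / 4 := hr₂ ε hε0 hεr₂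
    have hbdd : BddAbove (porHoles P q ε) := ⟨ε + η / 4, fun s hs => hubd s hs⟩
    obtain ⟨s, hsmem⟩ := hne ε hε0
    have hγ0 : 0 < porGamma P q ε := lt_of_lt_of_le hsmem.1 (le_csSup hbdd hsmem)
    have hγη : porGamma P q ε < η := by
      have : porGamma P q ε ≤ ε + η / 4 := Real.sSup_le (fun s hs => hubd s hs) (by linarith)
      linarith
    have hcφ : c < φ (porGamma P q ε) / ε := by
      have := hsub ⟨hε0, hεu⟩
      exact_mod_cast this
    have hβεφ : β * ε < φ (porGamma P q ε) := by
      have h1 : c * ε < φ (porGamma P q ε) := (lt_div_iff₀ hε0).mp hcφ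
      nlinarith
    have hβε0 : 0 < β * ε := by positivity
    -- find a small `a` with `φ a < β * ε`
    have hev2 : ∀ᶠ v in nhdsWithin (0:ℝ) (Set.Ioi 0), φ v < β * ε :=
      hφ_lim.eventually_lt_const hβε0
    have hev3 : ∀ᶠ v in nhdsWithin (0:ℝ) (Set.Ioi 0),
        v ∈ Set.Ioo (0:ℝ) (porGamma P q ε) :=
      Filter.eventually_of_mem
        (Ioo_mem_nhdsGT_of_mem (Set.mem_Ico.mpr ⟨le_refl (0:ℝ), hγ0⟩)) (fun x hx => hx)
    obtain ⟨a, hφa, haIoo⟩ := (hev2.and hev3).exists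
    have ha0 : 0 < a := haIoo.1
    have haγ : a < porGamma P q ε := haIoo.2
    have hIccsub : Set.Icc a (porGamma P q ε) ⊆ Set.Ioo 0 η := fun x hx =>
      ⟨lt_of_lt_of_le ha0 hx.1, lt_of_le_of_lt hx.2 hγη⟩
    have hIVT := intermediate_value_Icc (le_of_lt haγ) (hcont.mono hIccsub)
    obtain ⟨t, htIcc, hφt⟩ := hIVT ⟨le_of_lt hφa, le_of_lt hβεφ⟩
    have ht0 : 0 < t := lt_of_lt_of_le ha0 htIcc.1
    have htγ : t < porGamma P q ε := by
      rcases lt_or_eq_of_le htIcc.2 with h | h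
      · exact h
      · exfalso; rw [h] at hφt; linarith
    obtain ⟨s', hs'mem, hts'⟩ := exists_lt_of_lt_csSup (hne ε hε0) htγ
    have htmem : t ∈ porHoles P q ε := porHoles_down ht0 (le_of_lt hts') hs'mem
    obtain ⟨_, y, hy⟩ := htmem
    have hyball : y ∈ Metric.ball q ε := (hy (Metric.mem_ball_self ht0)).1
    refine ⟨y, ?_, t, ⟨ht0, htγ.trans hγη⟩, hφt, ?_⟩
    · rw [Metric.mem_ball, dist_comm] at hyball
      exact le_of_lt hyball
    · rw [Set.eq_empty_iff_forall_notMem]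
      rintro z ⟨hz1, hz2⟩
      exact (hy hz1).2 hz2
  · rintro ⟨ε₀, hε₀, β, ⟨hβ0, hβ1⟩, hmain⟩
    set C : ℝ := s₀ / φ s₀ with hCdef
    have hC : 0 < C := div_pos hs₀.1 hφs₀
    have hD : 0 < 1 + C * β := by positivity
    have key : ∀ ε : ℝ, 0 < ε → ε < ε₀ → β * ε < φ s₀ →
        ∃ t, 0 < t ∧ t < η ∧ φ t = β * ε ∧ t ∈ porHoles P q (ε * (1 + C * β)) := by
      intro ε hε hεε₀ hβε
      obtain ⟨q', hq', t, htmem, hφt, hball⟩ := hmain ε ⟨hε, hεε₀⟩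
      have hts₀ : t ≤ s₀ := by
        by_contra h
        push_neg at h
        have := hφ_mono hs₀ htmem h
        rw [hφt] at this
        linarith
      have htC : t ≤ C * (β * ε) := by
        have hlb := concave_lb hφ_conc hφ_pos hs₀ htmem.1 hts₀
        rw [hφt] at hlb
        have h1 : t / s₀ * φ s₀ ≤ β * ε := hlb
        rw [div_mul_eq_mul_div, div_le_iff₀ hs₀.1] at h1
        rw [hCdef, div_mul_eq_mul_div, le_div_iff₀ hφs₀]
        nlinarith
      refine ⟨t, htmem.1, htmem.2, hφt, htmem.1, q', ?_⟩
      intro z hz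
      rw [Metric.mem_ball] at hz
      constructor
      · rw [Metric.mem_ball]
        have h1 : dist z q ≤ dist z q' + dist q' q := dist_triangle z q' q
        have h2 : dist q' q ≤ ε := by rw [dist_comm]; exact hq'
        nlinarith
      · intro hzP
        have : z ∈ Metric.ball q' t ∩ P := ⟨by rwa [Metric.mem_ball], hzP⟩
        rw [hball] at this
        exact this
    have hne : ∀ r > (0:ℝ), (porHoles P q r).Nonempty := by
      intro r hr
      set ε := min (min (ε₀ / 2) (φ s₀ / (2 * β))) (r / (1 + C * β)) with hεdef
      have hε : 0 < ε := lt_min (lt_min (by linarith) (by positivity)) (by positivity)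
      have h1 : ε < ε₀ := by
        have : ε ≤ ε₀ / 2 := (min_le_left _ _).trans (min_le_left _ _)
        linarith
      have h2 : β * ε < φ s₀ := by
        have hle : ε ≤ φ s₀ / (2 * β) := (min_le_left _ _).trans (min_le_right _ _)
        rw [le_div_iff₀ (by positivity)] at hle
        nlinarith
      obtain ⟨t, ht0, _, _, htmem⟩ := key ε hε h1 h2
      have hεr : ε * (1 + C * β) ≤ r := by
        have : ε ≤ r / (1 + C * β) := min_le_right _ _
        rw [le_div_iff₀ hD] at this
        exact this
      exact ⟨t, porHoles_mono_r hεr htmem⟩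
    refine ⟨hne, ?_⟩
    obtain ⟨r₂, hr₂0, hr₂⟩ := porHoles_bound_s4 (P := P) (hperf q)
      (show (0:ℝ) < η / 4 by linarith)
    set c : ℝ := β / (1 + C * β) with hcdef
    have hc : 0 < c := div_pos hβ0 hD
    have hevbound : ∀ᶠ r in nhdsWithin (0:ℝ) (Set.Ioi 0),
        (c : EReal) ≤ ((φ (porGamma P q r) / r : ℝ) : EReal) := by
      set rmin := min (min r₂ (η / 2)) (min (ε₀ / 2) (φ s₀ / (2 * β)) * (1 + C * β))
        with hrmindef
      have hrmin : 0 < rmin := by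
        apply lt_min (lt_min hr₂0 (by linarith))
        apply mul_pos (lt_min (by linarith) (by positivity)) hD
      filter_upwards [Ioo_mem_nhdsGT_of_mem (Set.mem_Ico.mpr ⟨le_refl (0:ℝ), hrmin⟩)]
        with r hr
      obtain ⟨hr0, hrlt⟩ := hr
      rw [EReal.coe_le_coe_iff]
      set ε := r / (1 + C * β) with hεdef
      have hε : 0 < ε := by positivity
      have hrsplit : r < min (ε₀ / 2) (φ s₀ / (2 * β)) * (1 + C * β) :=
        hrlt.trans_le (min_le_right _ _)
      have hεsmall : ε < min (ε₀ / 2) (φ s₀ / (2 * β)) := by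
        rw [hεdef, div_lt_iff₀ hD]
        exact hrsplit
      have hεε₀ : ε < ε₀ := by
        have : ε < ε₀ / 2 := hεsmall.trans_le (min_le_left _ _)
        linarith
      have hβεs : β * ε < φ s₀ := by
        have hle : ε < φ s₀ / (2 * β) := hεsmall.trans_le (min_le_right _ _)
        rw [lt_div_iff₀ (by positivity)] at hle
        nlinarith
      obtain ⟨t, ht0, htη, hφt, htmem⟩ := key ε hε hεε₀ hβεs
      have hεr : ε * (1 + C * β) = r := by
        rw [hεdef]
        field_simp
      rw [hεr] at htmem
      have hrr₂ : r ≤ r₂ := le_of_lt (hrlt.trans_le ((min_le_left _ _).trans (min_le_left _ _)))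
      have hrη : r ≤ η / 2 := le_of_lt (hrlt.trans_le ((min_le_left _ _).trans (min_le_right _ _)))
      have hubd : ∀ s ∈ porHoles P q r, s ≤ r + η / 4 := hr₂ r hr0 hrr₂
      have hγt : t ≤ porGamma P q r :=
        le_csSup ⟨r + η / 4, fun s hs => hubd s hs⟩ htmem
      have hγub : porGamma P q r ≤ 3 * η / 4 :=
        Real.sSup_le (fun s hs => (hubd s hs).trans (by linarith)) (by linarith)
      have hγmem : porGamma P q r ∈ Set.Ioo 0 η := ⟨lt_of_lt_of_le ht0 hγt, by linarith⟩
      have hφγ : φ t ≤ φ (porGamma P q r) := hmono ⟨ht0, htη⟩ hγmem hγt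
      rw [hφt] at hφγ
      rw [le_div_iff₀ hr0]
      calc c * r = β * ε := by rw [hcdef, hεdef]; field_simp
        _ ≤ φ (porGamma P q r) := hφγ
    calc (0 : EReal) < (c : EReal) := by exact_mod_cast hc
      _ ≤ _ := Filter.le_liminf_of_le (by isBoundedDefault) hevbound
end

section
/- Let η ∈ (0,1) and let φ : (0,η) → (0,∞) be a strictly increasing concave function with lim_{t→0} φ(t)/t = ∞. Then there exist K > 1/η and a strictly increasing concave function ξ : (0,1/K) → (0,∞) such that t/K ≤ φ(t)·ξ(t) ≤ K·t for all t ∈ (0,1/K), and lim_{t→0} ξ(t) = 0. -/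
open Filter Metric Set Topology

/-- For a concave positive function on `(0,η)`, the slope `φ t / t` is nonincreasing:
`t * φ s ≤ s * φ t` for `0 < t ≤ s < η`. -/
private lemma key_slope {η : ℝ} {φ : ℝ → ℝ}
    (hφ_conc : ConcaveOn ℝ (Set.Ioo 0 η) φ)
    (hφ_pos : ∀ t ∈ Set.Ioo 0 η, 0 < φ t)
    {t s : ℝ} (ht : 0 < t) (hts : t ≤ s) (hs : s < η) :
    t * φ s ≤ s * φ t := by
  rcases eq_or_lt_of_le hts with rfl | hlt
  · exact le_of_eq (by ring)
  have hs0 : 0 < s := ht.trans hlt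
  have hineq : ∀ ε ∈ Set.Ioo (0:ℝ) t, (t-ε)/(s-ε) * φ s ≤ φ t := by
    intro ε hε
    have hε0 := hε.1
    have hεt := hε.2
    have hεη : ε ∈ Set.Ioo (0:ℝ) η := ⟨hε0, lt_trans (hεt.trans hlt) hs⟩
    have hsη : s ∈ Set.Ioo (0:ℝ) η := ⟨hs0, hs⟩
    have hse : 0 < s - ε := by linarith
    set lam := (t-ε)/(s-ε) with hlam
    have hlam0 : 0 ≤ lam := div_nonneg (by linarith) hse.le
    have hlam1 : lam ≤ 1 := by rw [div_le_one hse]; linarith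
    have hms : lam * (s - ε) = t - ε := div_mul_cancel₀ _ hse.ne'
    have hcomb : lam • s + (1 - lam) • ε = t := by
      simp only [smul_eq_mul]
      linear_combination hms
    have hcc := hφ_conc.2 hsη hεη hlam0 (show (0:ℝ) ≤ 1 - lam by linarith) (show lam + (1 - lam) = 1 by ring)
    rw [hcomb] at hcc
    have hφε : 0 < φ ε := hφ_pos ε hεη
    have h2 : (0:ℝ) ≤ (1 - lam) * φ ε := mul_nonneg (by linarith) hφε.le
    simp only [smul_eq_mul] at hcc ⊢
    linarith
  have hlim : Tendsto (fun ε : ℝ => (t-ε)/(s-ε) * φ s) (𝓝[>] 0) (𝓝 (t/s * φ s)) := by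
    have hc : ContinuousAt (fun ε : ℝ => (t-ε)/(s-ε) * φ s) 0 := by
      apply ContinuousAt.mul _ continuousAt_const
      exact ContinuousAt.div (by fun_prop) (by fun_prop) (by simpa using hs0.ne')
    have h2 : Tendsto (fun ε : ℝ => (t-ε)/(s-ε) * φ s) (𝓝[>] 0) (𝓝 ((t-0)/(s-0) * φ s)) :=
      hc.tendsto.mono_left nhdsWithin_le_nhds
    simpa using h2
  have hle : t/s * φ s ≤ φ t :=
    le_of_tendsto hlim
      (eventually_of_mem (Ioo_mem_nhdsGT_of_mem ⟨le_refl 0, ht⟩) hineq)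
  rw [div_mul_eq_mul_div, div_le_iff₀ hs0] at hle
  linarith

/-- For `η ∈ (0,1)` and a strictly increasing concave
`φ : (0,η) → (0,∞)` with `φ(t)/t → ∞` as `t → 0`, there exist `K > 1/η` and a strictly
increasing concave `ξ : (0,1/K) → (0,∞)` with `t/K ≤ φ(t)ξ(t) ≤ K·t` on `(0,1/K)` and
`ξ(t) → 0` as `t → 0`. -/
theorem stmt_5 (η : ℝ) (hη : η ∈ Set.Ioo (0 : ℝ) 1) (φ : ℝ → ℝ)
    (hφ_mono : StrictMonoOn φ (Set.Ioo 0 η))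
    (hφ_conc : ConcaveOn ℝ (Set.Ioo 0 η) φ)
    (hφ_pos : ∀ t ∈ Set.Ioo 0 η, 0 < φ t)
    (hφ_lim : Filter.Tendsto (fun t => φ t / t) (nhdsWithin 0 (Set.Ioi 0)) Filter.atTop) :
    ∃ K : ℝ, 1 / η < K ∧ ∃ ξ : ℝ → ℝ,
      StrictMonoOn ξ (Set.Ioo 0 (1 / K)) ∧
      ConcaveOn ℝ (Set.Ioo 0 (1 / K)) ξ ∧
      (∀ t ∈ Set.Ioo 0 (1 / K), 0 < ξ t) ∧
      (∀ t ∈ Set.Ioo 0 (1 / K), t / K ≤ φ t * ξ t ∧ φ t * ξ t ≤ K * t) ∧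
      Filter.Tendsto ξ (nhdsWithin 0 (Set.Ioi 0)) (nhds 0) := by
  obtain ⟨hη0, hη1⟩ := hη
  set a : ℝ := η / 2 with ha
  have ha0 : 0 < a := by positivity
  have haη : a < η := by rw [ha]; linarith
  have haI : a ∈ Set.Ioo (0:ℝ) η := ⟨ha0, haη⟩
  have hφa : 0 < φ a := hφ_pos a haI
  set K : ℝ := max 2 (2 / η) with hK
  have hK2 : (2:ℝ) ≤ K := le_max_left _ _
  have hK0 : 0 < K := by linarith
  have hKη : 2 / η ≤ K := le_max_right _ _
  have hKgt : 1 / η < K := lt_of_lt_of_le (by rw [div_lt_div_iff₀ hη0 hη0]; linarith) hKη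
  have hKa : 1 / K ≤ a := by
    rw [div_le_iff₀ hK0, ha]
    rw [div_le_iff₀ hη0] at hKη
    linarith
  set ξ : ℝ → ℝ := fun t => sInf ((fun s => (s + t) / φ s) '' Set.Ioo 0 a) with hξ
  have hne : ∀ t : ℝ, ((fun s => (s + t) / φ s) '' Set.Ioo 0 a).Nonempty :=
    fun t => (Set.nonempty_Ioo.2 ha0).image _
  have hbdd : ∀ t : ℝ, 0 ≤ t → BddBelow ((fun s => (s + t) / φ s) '' Set.Ioo 0 a) := by
    intro t ht
    refine ⟨0, ?_⟩
    rintro x ⟨s, hs, rfl⟩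
    have hφs : 0 < φ s := hφ_pos s ⟨hs.1, hs.2.trans haη⟩
    exact div_nonneg (by linarith [hs.1]) hφs.le
  -- lower bound : ξ t ≥ t / φ t
  have hlow : ∀ t ∈ Set.Ioo (0:ℝ) (1/K), t / φ t ≤ ξ t := by
    intro t ht
    have htη : t ∈ Set.Ioo (0:ℝ) η := ⟨ht.1, lt_of_lt_of_le ht.2 (hKa.trans haη.le)⟩
    have hφt : 0 < φ t := hφ_pos t htη
    apply le_csInf (hne t)
    rintro x ⟨s, hs, rfl⟩
    show t / φ t ≤ (s + t) / φ s
    have hsη : s ∈ Set.Ioo (0:ℝ) η := ⟨hs.1, hs.2.trans haη⟩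
    have hφs : 0 < φ s := hφ_pos s hsη
    rw [div_le_div_iff₀ hφt hφs]
    rcases le_total s t with hst | hts
    · have hmono : φ s ≤ φ t := by
        rcases eq_or_lt_of_le hst with rfl | h
        · exact le_refl _
        · exact (hφ_mono hsη htη h).le
      nlinarith [mul_le_mul_of_nonneg_left hmono ht.1.le, mul_pos hs.1 hφt]
    · have hkey : t * φ s ≤ s * φ t := key_slope hφ_conc hφ_pos ht.1 hts hsη.2
      nlinarith [mul_pos ht.1 hφt]
  -- upper bound : ξ t ≤ 2 t / φ t
  have hupp : ∀ t ∈ Set.Ioo (0:ℝ) (1/K), ξ t ≤ 2 * t / φ t := by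
    intro t ht
    have hta : t ∈ Set.Ioo (0:ℝ) a := ⟨ht.1, lt_of_lt_of_le ht.2 hKa⟩
    have h := csInf_le (hbdd t ht.1.le) (Set.mem_image_of_mem _ hta)
    calc ξ t ≤ (t + t) / φ t := h
      _ = 2 * t / φ t := by ring_nf
  -- positivity
  have hpos : ∀ t ∈ Set.Ioo (0:ℝ) (1/K), 0 < ξ t := by
    intro t ht
    have htη : t ∈ Set.Ioo (0:ℝ) η := ⟨ht.1, lt_of_lt_of_le ht.2 (hKa.trans haη.le)⟩
    have hφt : 0 < φ t := hφ_pos t htη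
    exact lt_of_lt_of_le (div_pos ht.1 hφt) (hlow t ht)
  refine ⟨K, hKgt, ξ, ?_, ?_, hpos, ?_, ?_⟩
  · -- strict mono
    intro t₁ ht₁ t₂ ht₂ hlt
    have hstep : ξ t₁ + (t₂ - t₁) / φ a ≤ ξ t₂ := by
      apply le_csInf (hne t₂)
      rintro x ⟨s, hs, rfl⟩
      show ξ t₁ + (t₂ - t₁) / φ a ≤ (s + t₂) / φ s
      have hsη : s ∈ Set.Ioo (0:ℝ) η := ⟨hs.1, hs.2.trans haη⟩
      have hφs : 0 < φ s := hφ_pos s hsη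
      have h1 : ξ t₁ ≤ (s + t₁) / φ s := csInf_le (hbdd t₁ ht₁.1.le) ⟨s, hs, rfl⟩
      have h2 : (t₂ - t₁) / φ a ≤ (t₂ - t₁) / φ s := by
        gcongr
        exact (hφ_mono hsη haI hs.2).le
      have heq : (s + t₂) / φ s = (s + t₁) / φ s + (t₂ - t₁) / φ s := by ring
      rw [heq]
      linarith
    have hp : 0 < (t₂ - t₁) / φ a := div_pos (by linarith) hφa
    linarith
  · -- concave
    refine ⟨convex_Ioo _ _, ?_⟩
    intro x hx y hy p q hp hq hpq
    simp only [smul_eq_mul]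
    apply le_csInf (hne _)
    rintro z ⟨s, hs, rfl⟩
    show p * ξ x + q * ξ y ≤ (s + (p * x + q * y)) / φ s
    have hsη : s ∈ Set.Ioo (0:ℝ) η := ⟨hs.1, hs.2.trans haη⟩
    have hφs : 0 < φ s := hφ_pos s hsη
    have h1 : ξ x ≤ (s + x) / φ s := csInf_le (hbdd x hx.1.le) ⟨s, hs, rfl⟩
    have h2 : ξ y ≤ (s + y) / φ s := csInf_le (hbdd y hy.1.le) ⟨s, hs, rfl⟩
    have hnum : p * (s + x) + q * (s + y) = s + (p * x + q * y) := by
      linear_combination s * hpq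
    calc p * ξ x + q * ξ y
        ≤ p * ((s + x) / φ s) + q * ((s + y) / φ s) := by
          have := mul_le_mul_of_nonneg_left h1 hp
          have := mul_le_mul_of_nonneg_left h2 hq
          linarith
      _ = (p * (s + x) + q * (s + y)) / φ s := by ring
      _ = (s + (p * x + q * y)) / φ s := by rw [hnum]
  · -- bounds
    intro t ht
    have htη : t ∈ Set.Ioo (0:ℝ) η := ⟨ht.1, lt_of_lt_of_le ht.2 (hKa.trans haη.le)⟩
    have hφt : 0 < φ t := hφ_pos t htη
    have h1 := hlow t ht
    have h2 := hupp t ht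
    rw [div_le_iff₀ hφt] at h1
    have h2' := mul_le_mul_of_nonneg_left h2 hφt.le
    have heq : φ t * (2 * t / φ t) = 2 * t := by field_simp
    rw [heq] at h2'
    constructor
    · calc t / K ≤ t := by rw [div_le_iff₀ hK0]; nlinarith [ht.1]
        _ ≤ φ t * ξ t := by nlinarith
    · calc φ t * ξ t ≤ 2 * t := h2'
        _ ≤ K * t := by nlinarith [ht.1]
  · -- tendsto 0
    have hto : Tendsto (fun t => t / φ t) (𝓝[>] 0) (𝓝 0) := by
      have h := hφ_lim.inv_tendsto_atTop
      have heq : (fun t => φ t / t)⁻¹ = fun t => t / φ t := by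
        funext t; simp [Pi.inv_apply, inv_div]
      rwa [heq] at h
    have hto2 : Tendsto (fun t => 2 * t / φ t) (𝓝[>] 0) (𝓝 0) := by
      have h := hto.const_mul 2
      simp only [mul_zero] at h
      convert h using 2 with t
      ring
    apply squeeze_zero'
    · exact eventually_of_mem (Ioo_mem_nhdsGT_of_mem ⟨le_refl 0, by positivity⟩)
        (fun t ht => (hpos t ht).le)
    · exact eventually_of_mem (Ioo_mem_nhdsGT_of_mem ⟨le_refl 0, by positivity⟩)
        (fun t ht => hupp t ht)
    · exact hto2
end

section
/- Let X be a normed space, let C ⊆ X be a convex set containing the origin 0_X, and let 0 < δ < r. Then there exists a mapping Φ : C → C such that: (i) Φ(x) = 0_X for all x ∈ C with ‖x‖ ≤ δ; (ii) Φ(x) = x for all x ∈ C with ‖x‖ ≥ r; (iii) Lip(Φ) ≤ 1 + δ/(r−δ); (iv) ‖Φ(x) − x‖ ≤ δ for all x ∈ C. -/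
open Filter Metric Set Topology

set_option maxHeartbeats 1000000 in
/-- For a convex set `C` containing the origin in a normed space and
`0 < δ < r`, there is a mapping `Φ : C → C` vanishing on `C ∩ B̄(0,δ)`, equal to the
identity outside `B(0,r)`, with `Lip(Φ) ≤ 1 + δ/(r-δ)` and `‖Φ(x) - x‖ ≤ δ` on `C`. -/
theorem stmt_7 {X : Type*} [NormedAddCommGroup X] [NormedSpace ℝ X]
    (C : Set X) (hC_conv : Convex ℝ C) (h0 : (0 : X) ∈ C)
    (δ r : ℝ) (hδ : 0 < δ) (hδr : δ < r) :
    ∃ Φ : ↥C → ↥C,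
      (∀ x : ↥C, ‖(x : X)‖ ≤ δ → ((Φ x : X) = 0)) ∧
      (∀ x : ↥C, r ≤ ‖(x : X)‖ → ((Φ x : X) = (x : X))) ∧
      (∀ x y : ↥C, ‖(Φ y : X) - (Φ x : X)‖ ≤ (1 + δ / (r - δ)) * ‖(y : X) - (x : X)‖) ∧
      (∀ x : ↥C, ‖(Φ x : X) - (x : X)‖ ≤ δ) := by
  have hrδ : 0 < r - δ := by linarith
  set K : ℝ := 1 + δ / (r - δ) with hK
  have hKr : K = r / (r - δ) := by rw [hK]; field_simp; ring
  have hKrδ : K * (r - δ) = r := by rw [hKr]; field_simp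
  have hK1 : 1 ≤ K := by
    rw [hK]; nlinarith [div_nonneg hδ.le hrδ.le]
  have hK0 : 0 < K := by linarith
  set h : ℝ → ℝ := fun t => min 1 (max 0 (K * (t - δ) / t)) with hh
  have h_nonneg : ∀ t, 0 ≤ h t := fun t => le_min zero_le_one (le_max_left _ _)
  have h_le_one : ∀ t, h t ≤ 1 := fun t => min_le_left _ _
  have h_zero : ∀ t, 0 ≤ t → t ≤ δ → h t = 0 := by
    intro t ht htδ
    have : K * (t - δ) / t ≤ 0 :=
      div_nonpos_of_nonpos_of_nonneg (mul_nonpos_of_nonneg_of_nonpos hK0.le (by linarith)) ht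
    simp only [hh]
    rw [max_eq_left this, min_eq_right zero_le_one]
  have h_one : ∀ t, r ≤ t → h t = 1 := by
    intro t hrt
    have ht0 : 0 < t := lt_of_lt_of_le (hδ.trans hδr) hrt
    have h1 : 1 ≤ K * (t - δ) / t := by
      rw [le_div_iff₀ ht0, one_mul]
      nlinarith
    simp only [hh]
    rw [min_eq_left (le_trans h1 (le_max_right _ _))]
  -- monotonicity of the raw ratio
  have raw_mono : ∀ s t, 0 < s → s ≤ t → K * (s - δ) / s ≤ K * (t - δ) / t := by
    intro s t hs hst
    have ht : 0 < t := lt_of_lt_of_le hs hst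
    rw [div_le_div_iff₀ hs ht]
    nlinarith [mul_nonneg (mul_nonneg hK0.le hδ.le) (sub_nonneg.2 hst)]
  have h_mono : ∀ s t, 0 ≤ s → s ≤ t → h s ≤ h t := by
    intro s t hs hst
    rcases eq_or_lt_of_le hs with hs0 | hs0
    · have : h s = 0 := h_zero s hs (by nlinarith)
      rw [this]; exact h_nonneg t
    · exact min_le_min le_rfl (max_le_max le_rfl (raw_mono s t hs0 hst))
  -- key scalar Lipschitz inequality
  have key : ∀ s t d : ℝ, 0 ≤ s → s ≤ t → 0 ≤ d → t - s ≤ d →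
      h t * d + (h t - h s) * s ≤ K * d := by
    intro s t d hs hst hd htsd
    rcases le_or_gt t δ with htδ | htδ
    · rw [h_zero t (hs.trans hst) htδ, h_zero s hs (hst.trans htδ)]
      simpa using mul_nonneg hK0.le hd
    have ht0 : 0 < t := hδ.trans htδ
    rcases le_or_gt 1 (K * (t - δ) / t) with h1 | h1
    · -- h t = 1, and r ≤ t
      have hht : h t = 1 := by
        simp only [hh]; rw [min_eq_left (le_trans h1 (le_max_right _ _))]
      have htK : t ≤ K * (t - δ) := by
        rw [le_div_iff₀ ht0, one_mul] at h1; linarith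
      have hrt : r ≤ t := by nlinarith [hKrδ]
      rcases le_or_gt s δ with hsδ | hsδ
      · rw [hht, h_zero s hs hsδ]
        -- d + s ≤ K * d
        nlinarith [mul_nonneg (show (0:ℝ) ≤ K - 1 by linarith)
            (show (0:ℝ) ≤ d - (r - s) by linarith),
          mul_nonneg (show (0:ℝ) ≤ δ - s by linarith) (show (0:ℝ) ≤ r by linarith), hKrδ]
      · have hs0 : 0 < s := hδ.trans hsδ
        rcases le_or_gt 1 (K * (s - δ) / s) with h2 | h2
        · have hhs : h s = 1 := by
            simp only [hh]; rw [min_eq_left (le_trans h2 (le_max_right _ _))]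
          rw [hht, hhs]
          nlinarith
        · have hB0 : 0 ≤ K * (s - δ) / s :=
            div_nonneg (mul_nonneg hK0.le (by linarith)) hs0.le
          have hhs : h s = K * (s - δ) / s := by
            simp only [hh]; rw [max_eq_right hB0, min_eq_right h2.le]
          rw [hht, hhs]
          have e : (1 - K * (s - δ) / s) * s = s - K * (s - δ) := by
            field_simp
          rw [one_mul, e]
          -- d + (s - K*(s-δ)) ≤ K*d
          nlinarith [mul_nonneg (show (0:ℝ) ≤ K - 1 by linarith)
              (show (0:ℝ) ≤ d + s - r by linarith), hKrδ]
    · -- h t = K*(t-δ)/t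
      have hA0 : 0 ≤ K * (t - δ) / t := div_nonneg (mul_nonneg hK0.le (by linarith)) ht0.le
      have hht : h t = K * (t - δ) / t := by
        simp only [hh]; rw [max_eq_right hA0, min_eq_right h1.le]
      rcases le_or_gt s δ with hsδ | hsδ
      · rw [hht, h_zero s hs hsδ, sub_zero]
        have e : K * (t - δ) / t * d + K * (t - δ) / t * s = K * ((t - δ) * (d + s)) / t := by
          field_simp
        rw [e, div_le_iff₀ ht0]
        have inner : (t - δ) * (d + s) ≤ d * t := by
          nlinarith [mul_nonneg hδ.le (show (0:ℝ) ≤ d - (t - s) by linarith),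
            mul_nonneg (show (0:ℝ) ≤ δ - s by linarith) ht0.le]
        nlinarith [mul_le_mul_of_nonneg_left inner hK0.le]
      · have hs0 : 0 < s := hδ.trans hsδ
        have h2 : K * (s - δ) / s < 1 := lt_of_le_of_lt (raw_mono s t hs0 hst) h1
        have hB0 : 0 ≤ K * (s - δ) / s :=
          div_nonneg (mul_nonneg hK0.le (by linarith)) hs0.le
        have hhs : h s = K * (s - δ) / s := by
          simp only [hh]; rw [max_eq_right hB0, min_eq_right h2.le]
        rw [hht, hhs]
        have e : K * (t - δ) / t * d + (K * (t - δ) / t - K * (s - δ) / s) * s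
            = K * ((t - δ) * d + δ * (t - s)) / t := by
          field_simp; ring
        rw [e, div_le_iff₀ ht0]
        have inner : (t - δ) * d + δ * (t - s) ≤ d * t := by
          nlinarith [mul_nonneg hδ.le (show (0:ℝ) ≤ d - (t - s) by linarith)]
        nlinarith [mul_le_mul_of_nonneg_left inner hK0.le]
  -- the map
  refine ⟨fun x => ⟨h ‖(x : X)‖ • (x : X),
      hC_conv.smul_mem_of_zero_mem h0 x.2 ⟨h_nonneg _, h_le_one _⟩⟩, ?_, ?_, ?_, ?_⟩
  · intro x hx
    simp only
    rw [h_zero _ (norm_nonneg _) hx, zero_smul]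
  · intro x hx
    simp only
    rw [h_one _ hx, one_smul]
  · have main : ∀ x y : ↥C, ‖(x : X)‖ ≤ ‖(y : X)‖ →
        ‖h ‖(y : X)‖ • (y : X) - h ‖(x : X)‖ • (x : X)‖ ≤ K * ‖(y : X) - (x : X)‖ := by
      intro x y hxy
      set s := ‖(x : X)‖
      set t := ‖(y : X)‖
      have decomp : h t • (y : X) - h s • (x : X)
          = h t • ((y : X) - (x : X)) + (h t - h s) • (x : X) := by
        rw [smul_sub, sub_smul]; abel
      calc ‖h t • (y : X) - h s • (x : X)‖
          ≤ ‖h t • ((y : X) - (x : X))‖ + ‖(h t - h s) • (x : X)‖ := by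
            rw [decomp]; exact norm_add_le _ _
        _ = h t * ‖(y : X) - (x : X)‖ + (h t - h s) * s := by
            rw [norm_smul, norm_smul, Real.norm_eq_abs, Real.norm_eq_abs,
              abs_of_nonneg (h_nonneg t),
              abs_of_nonneg (sub_nonneg.2 (h_mono s t (norm_nonneg _) hxy))]
        _ ≤ K * ‖(y : X) - (x : X)‖ :=
            key s t _ (norm_nonneg _) hxy (norm_nonneg _)
              (by simpa using norm_sub_norm_le (y : X) (x : X))
    intro x y
    rcases le_total ‖(x : X)‖ ‖(y : X)‖ with hle | hle
    · exact main x y hle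
    · rw [norm_sub_rev, norm_sub_rev ((y : X))]
      exact main y x hle
  · intro x
    simp only
    have e : h ‖(x : X)‖ • (x : X) - (x : X) = (h ‖(x : X)‖ - 1) • (x : X) := by
      rw [sub_smul, one_smul]
    rw [e, norm_smul, Real.norm_eq_abs,
      abs_of_nonpos (by linarith [h_le_one ‖(x : X)‖])]
    set t := ‖(x : X)‖
    have ht0 : 0 ≤ t := norm_nonneg _
    -- (1 - h t) * t ≤ δ
    rcases le_or_gt t δ with htδ | htδ
    · calc -(h t - 1) * t ≤ 1 * t := by
            nlinarith [h_nonneg t]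
        _ ≤ δ := by linarith
    · have ht0' : 0 < t := hδ.trans htδ
      rcases le_or_gt 1 (K * (t - δ) / t) with h1 | h1
      · have hht : h t = 1 := by
          simp only [hh]; rw [min_eq_left (le_trans h1 (le_max_right _ _))]
        rw [hht]; simpa using hδ.le
      · have hA0 : 0 ≤ K * (t - δ) / t := div_nonneg (mul_nonneg hK0.le (by linarith)) ht0'.le
        have hht : h t = K * (t - δ) / t := by
          simp only [hh]; rw [max_eq_right hA0, min_eq_right h1.le]
        rw [hht]
        have e2 : -(K * (t - δ) / t - 1) * t = t - K * (t - δ) := by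
          field_simp; ring
        rw [e2]
        nlinarith [mul_nonneg (show (0:ℝ) ≤ K - 1 by linarith)
          (show (0:ℝ) ≤ t - δ by linarith)]
end

section
/- Let X be a normed space, let C ⊆ X be a convex and bounded set containing the origin 0_X, let s ∈ (0,1), let Γ ⊆ C be an s-separated set containing at least two points, let f : C → C be a non-expansive mapping, and let ε ∈ (0,1). Then there exists a non-expansive mapping g : C → C such that sup_{z∈C} ‖g(z)−f(z)‖ ≤ ε and ‖g(y)−g(x)‖ = ‖y−x‖ for all x ∈ Γ and all y ∈ C with ‖y−x‖ ≤ ε·s/(12·(1+diam C)). -/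
open Filter Metric Set Topology

noncomputable def psiF (δ ρ t : ℝ) : ℝ := min t (max ((t - 2*ρ)/(1-δ)) 0)

noncomputable def betaF (ρ t : ℝ) : ℝ := max 0 (min t (2*ρ - t))

section auxx
variable {δ ρ t a b : ℝ}

lemma psiF_nonneg (ht : 0 ≤ t) : 0 ≤ psiF δ ρ t :=
  le_min ht (le_max_right _ _)

lemma psiF_le_self : psiF δ ρ t ≤ t := min_le_left _ _

lemma psiF_eq_zero (hδ1 : δ < 1) (ht0 : 0 ≤ t) (ht : t ≤ 2*ρ) : psiF δ ρ t = 0 := by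
  unfold psiF
  have h1 : (t - 2*ρ)/(1-δ) ≤ 0 := div_nonpos_of_nonpos_of_nonneg (by linarith) (by linarith)
  rw [max_eq_right h1, min_eq_right ht0]

lemma psiF_sub_le (hδ0 : 0 < δ) (hδ1 : δ < 1) (hρ0 : 0 ≤ ρ) (ht0 : 0 ≤ t) :
    t - psiF δ ρ t ≤ 2*ρ := by
  have : t - 2*ρ ≤ psiF δ ρ t := by
    rcases le_or_gt t (2*ρ) with h | h
    · have := psiF_nonneg (δ := δ) (ρ := ρ) ht0
      linarith
    · refine le_min (by linarith) (le_max_of_le_left ?_)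
      exact le_div_self (by linarith) (by linarith) (by linarith)
  linarith

lemma psiF_mono (hδ1 : δ < 1) (hba : b ≤ a) : psiF δ ρ b ≤ psiF δ ρ a := by
  unfold psiF
  refine min_le_min hba (max_le_max ?_ le_rfl)
  exact (div_le_div_iff_of_pos_right (by linarith)).2 (by linarith)

lemma psiF_lip (hδ0 : 0 < δ) (hδ1 : δ < 1) (hba : b ≤ a) :
    (1-δ) * (psiF δ ρ a - psiF δ ρ b) ≤ a - b := by
  have hc : 0 ≤ (a-b)/(1-δ) := div_nonneg (by linarith) (by linarith)
  have h1 : psiF δ ρ a ≤ psiF δ ρ b + (a-b)/(1-δ) := by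
    unfold psiF
    rw [← min_add_add_right]
    refine min_le_min ?_ ?_
    · have : a - b ≤ (a-b)/(1-δ) := le_div_self (by linarith) (by linarith) (by linarith)
      linarith
    · refine max_le ?_ (by positivity)
      have : (a - 2*ρ)/(1-δ) = (b - 2*ρ)/(1-δ) + (a-b)/(1-δ) := by
        rw [← add_div]; ring_nf
      rw [this]
      exact add_le_add_left (le_max_left _ _) _
  have h2 : (1-δ) * ((a-b)/(1-δ)) = a - b := by
    rw [mul_comm, div_mul_cancel₀]
    exact ne_of_gt (by linarith)
  nlinarith [h1, sub_pos.2 hδ1]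

lemma psiF_upper (hδ1 : δ < 1) (ht : 2*ρ ≤ t) : (1-δ) * psiF δ ρ t ≤ t - 2*ρ := by
  have h1 : psiF δ ρ t ≤ (t - 2*ρ)/(1-δ) :=
    (min_le_right _ _).trans_eq (max_eq_left (div_nonneg (by linarith) (by linarith)))
  have h2 : (1-δ) * ((t - 2*ρ)/(1-δ)) = t - 2*ρ := by
    rw [mul_comm, div_mul_cancel₀]
    exact ne_of_gt (by linarith)
  nlinarith [h1]

lemma psiF_eq_self (hδ0 : 0 < δ) (hδ1 : δ < 1) (ht0 : 0 ≤ t) (ht : 2*ρ ≤ δ*t) :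
    psiF δ ρ t = t := by
  unfold psiF
  refine min_eq_left (le_max_of_le_left ?_)
  rw [le_div_iff₀ (by linarith)]
  nlinarith

lemma psiF_ratio (hδ0 : 0 < δ) (hδ1 : δ < 1) (hρ0 : 0 ≤ ρ) (hb : 2*ρ ≤ b) (hba : b ≤ a) :
    a * psiF δ ρ b ≤ b * psiF δ ρ a := by
  have ha : 2*ρ ≤ a := hb.trans hba
  have hb0 : 0 ≤ b := le_trans (by linarith) hb
  have ha0 : 0 ≤ a := hb0.trans hba
  have hfb : psiF δ ρ b = min b ((b - 2*ρ)/(1-δ)) := by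
    unfold psiF
    rw [max_eq_left (div_nonneg (by linarith) (by linarith))]
  have hfa : psiF δ ρ a = min a ((a - 2*ρ)/(1-δ)) := by
    unfold psiF
    rw [max_eq_left (div_nonneg (by linarith) (by linarith))]
  rw [hfb, hfa]
  have h1 : b * min a ((a - 2*ρ)/(1-δ)) = min (b*a) (b*((a - 2*ρ)/(1-δ))) := by
    rcases min_cases a ((a - 2*ρ)/(1-δ)) with ⟨h, h'⟩ | ⟨h, h'⟩ <;> rw [h] <;>
      [exact (min_eq_left (by nlinarith)).symm; exact (min_eq_right (by nlinarith)).symm]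
  rw [h1]
  refine le_min ?_ ?_
  · calc a * min b ((b - 2*ρ)/(1-δ)) ≤ a * b := by
          exact mul_le_mul_of_nonneg_left (min_le_left _ _) ha0
      _ = b * a := mul_comm _ _
  · calc a * min b ((b - 2*ρ)/(1-δ)) ≤ a * ((b - 2*ρ)/(1-δ)) := by
          exact mul_le_mul_of_nonneg_left (min_le_right _ _) ha0
      _ ≤ b * ((a - 2*ρ)/(1-δ)) := by
          rw [← mul_div_assoc, ← mul_div_assoc]
          exact (div_le_div_iff_of_pos_right (by linarith)).2 (by nlinarith)

lemma betaF_nonneg : 0 ≤ betaF ρ t := le_max_left _ _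

lemma betaF_le_rho (hρ0 : 0 ≤ ρ) : betaF ρ t ≤ ρ := by
  refine max_le hρ0 ?_
  rcases le_total t ρ with h | h
  · exact (min_le_left _ _).trans h
  · exact (min_le_right _ _).trans (by linarith)

lemma betaF_eq_self (ht0 : 0 ≤ t) (ht : t ≤ ρ) (hρ0 : 0 ≤ ρ) : betaF ρ t = t := by
  unfold betaF
  rw [min_eq_left (by linarith), max_eq_right ht0]

lemma betaF_eq_zero (ht : 2*ρ ≤ t) (ht0 : 0 ≤ t) : betaF ρ t = 0 := by
  unfold betaF
  rcases le_total t (2*ρ - t) with h | h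
  · rw [min_eq_left h, max_eq_left (by linarith)]
  · rw [min_eq_right h, max_eq_left (by linarith)]

lemma betaF_le_sub (ht : t ≤ 2*ρ) : betaF ρ t ≤ 2*ρ - t :=
  max_le (by linarith) (min_le_right _ _)

lemma betaF_lip : |betaF ρ a - betaF ρ b| ≤ |a - b| := by
  unfold betaF
  refine (abs_max_sub_max_le_max _ _ _ _).trans ?_
  rw [sub_self, abs_zero]
  refine max_le (abs_nonneg _) ?_
  refine (abs_min_sub_min_le_max _ _ _ _).trans ?_
  refine max_le le_rfl ?_
  have : 2*ρ - a - (2*ρ - b) = -(a - b) := by ring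
  rw [this, abs_neg]

lemma Gle (hδ0 : 0 < δ) (hδ1 : δ < 1) (hρ0 : 0 < ρ) (ht0 : 0 ≤ t) (ht : δ*t ≤ 2*ρ) :
    t - (1-δ) * psiF δ ρ t + betaF ρ t ≤ 2*ρ := by
  rcases le_or_gt t (2*ρ) with h | h
  · rw [psiF_eq_zero hδ1 ht0 h]
    have := betaF_le_sub (ρ := ρ) (t := t) h
    linarith
  · rw [betaF_eq_zero h.le ht0]
    have h1 : psiF δ ρ t = (t - 2*ρ)/(1-δ) := by
      unfold psiF
      rw [max_eq_left (div_nonneg (by linarith) (by linarith))]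
      refine min_eq_right ?_
      rw [div_le_iff₀ (by linarith)]
      nlinarith
    rw [h1, mul_comm, div_mul_cancel₀ _ (ne_of_gt (show (0:ℝ) < 1-δ by linarith))]
    linarith

lemma rad_aux {X : Type*} [NormedAddCommGroup X] [NormedSpace ℝ X]
    {δ ρ : ℝ} (hδ0 : 0 < δ) (hδ1 : δ < 1) (hρ0 : 0 < ρ)
    (x z w : X) :
    (1-δ) * ‖(psiF δ ρ ‖z - x‖ / ‖z - x‖) • (z - x) -
        (psiF δ ρ ‖w - x‖ / ‖w - x‖) • (w - x)‖
      + |betaF ρ ‖z - x‖ - betaF ρ ‖w - x‖| ≤ ‖z - w‖ := by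
  have hmain : ∀ z w : X, ‖w - x‖ ≤ ‖z - x‖ →
      (1-δ) * ‖(psiF δ ρ ‖z - x‖ / ‖z - x‖) • (z - x) -
          (psiF δ ρ ‖w - x‖ / ‖w - x‖) • (w - x)‖
        + |betaF ρ ‖z - x‖ - betaF ρ ‖w - x‖| ≤ ‖z - w‖ := by
    clear z w
    intro z w hba
    set a := ‖z - x‖ with hadef
    set b := ‖w - x‖ with hbdef
    have ha0 : 0 ≤ a := norm_nonneg _
    have hb0 : 0 ≤ b := norm_nonneg _
    have hD : a - b ≤ ‖z - w‖ := by
      have h1 : a - b ≤ ‖(z - x) - (w - x)‖ := norm_sub_norm_le _ _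
      rwa [sub_sub_sub_cancel_right] at h1
    have hD0 : 0 ≤ ‖z - w‖ := norm_nonneg _
    rcases le_or_gt a (2*ρ) with hc1 | hc1
    · -- both radii small : psi = 0
      rw [psiF_eq_zero hδ1 ha0 hc1, psiF_eq_zero hδ1 hb0 (hba.trans hc1)]
      simp only [zero_div, zero_smul, sub_zero, norm_zero, mul_zero, zero_add]
      refine betaF_lip.trans ?_
      rw [abs_of_nonneg (by linarith)]
      exact hD
    rcases le_or_gt b (2*ρ) with hc2 | hc2
    · -- b small, a big
      have ha' : 0 < a := by linarith
      rw [psiF_eq_zero hδ1 hb0 hc2, zero_div, zero_smul, sub_zero]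
      rw [norm_smul, Real.norm_eq_abs, abs_of_nonneg (div_nonneg (psiF_nonneg ha0) ha0),
        ← hadef, div_mul_cancel₀ _ (ne_of_gt ha')]
      rw [betaF_eq_zero hc1.le ha0, zero_sub, abs_neg,
        abs_of_nonneg (betaF_nonneg)]
      have h1 : (1-δ) * psiF δ ρ a ≤ a - 2*ρ := psiF_upper hδ1 hc1.le
      have h2 : betaF ρ b ≤ 2*ρ - b := betaF_le_sub hc2
      linarith
    · -- both big
      have ha' : 0 < a := by linarith
      have hb' : 0 < b := by linarith
      rw [betaF_eq_zero hc1.le ha0, betaF_eq_zero hc2.le hb0, sub_self, abs_zero, add_zero]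
      set u := psiF δ ρ a with hudef
      set v := psiF δ ρ b with hvdef
      have hu0 : 0 ≤ u := psiF_nonneg ha0
      have hv0 : 0 ≤ v := psiF_nonneg hb0
      have hu_le : u ≤ a := psiF_le_self
      have hv_le : v ≤ b := psiF_le_self
      have hratio : a * v ≤ b * u := psiF_ratio hδ0 hδ1 hρ0.le hc2.le hba
      have hlip : (1-δ) * (u - v) ≤ a - b := psiF_lip hδ0 hδ1 hba
      have hkey : (u/a) • (z - x) - (v/b) • (w - x)
          = (u/a) • (z - w) + (u/a - v/b) • (w - x) := by
        module
      rw [hkey]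
      have hsign : v/b ≤ u/a := by
        rw [div_le_div_iff₀ hb' ha']
        nlinarith
      have hnorm : ‖(u/a) • (z - w) + (u/a - v/b) • (w - x)‖
          ≤ (u/a) * ‖z - w‖ + (u/a - v/b) * b := by
        refine (norm_add_le _ _).trans ?_
        rw [norm_smul, norm_smul, Real.norm_eq_abs, Real.norm_eq_abs,
          abs_of_nonneg (div_nonneg hu0 ha0), abs_of_nonneg (by linarith)]
      have hexp : (u/a) * ‖z - w‖ + (u/a - v/b) * b = (u * ‖z - w‖ + u*b - v*a)/a := by
        field_simp
        ring
      have hfin : (1-δ) * ((u * ‖z - w‖ + u*b - v*a)/a) ≤ ‖z - w‖ := by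
        rw [mul_div_assoc'] at *
        rw [div_le_iff₀ ha']
        nlinarith [mul_le_mul_of_nonneg_left hD (show (0:ℝ) ≤ a - (1-δ)*u by nlinarith),
          mul_le_mul_of_nonneg_right hlip ha0]
      calc (1-δ) * ‖(u/a) • (z - w) + (u/a - v/b) • (w - x)‖
          ≤ (1-δ) * ((u * ‖z - w‖ + u*b - v*a)/a) := by
            rw [← hexp]
            exact mul_le_mul_of_nonneg_left hnorm (by linarith)
        _ ≤ ‖z - w‖ := hfin
  rcases le_total ‖w - x‖ ‖z - x‖ with h | h
  · exact hmain z w h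
  · have h2 := hmain w z h
    rw [norm_sub_rev w z] at h2
    rw [norm_sub_rev ((psiF δ ρ ‖w - x‖ / ‖w - x‖) • (w - x)), abs_sub_comm] at h2
    exact h2

open Filter Metric Set Topology

set_option maxHeartbeats 1000000 in
/-- Let `C` be a convex bounded set containing the origin, `s ∈ (0,1)`,
`Γ ⊆ C` an `s`-separated set with at least two points, `f : C → C` non-expansive and
`ε ∈ (0,1)`.  Then there is a non-expansive `g : C → C` with `‖g - f‖_∞ ≤ ε` and
`‖g(y) - g(x)‖ = ‖y - x‖` for all `x ∈ Γ` and `y ∈ C` with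
`‖y - x‖ ≤ ε·s / (12·(1 + diam C))`. -/
theorem stmt_9 {X : Type*} [NormedAddCommGroup X] [NormedSpace ℝ X]
    (C : Set X) (hC_conv : Convex ℝ C) (hC_bdd : Bornology.IsBounded C)
    (h0 : (0 : X) ∈ C)
    (s : ℝ) (hs : s ∈ Set.Ioo (0 : ℝ) 1)
    (Γ : Set X) (hΓC : Γ ⊆ C)
    (hΓ_sep : ∀ x ∈ Γ, ∀ y ∈ Γ, x ≠ y → s ≤ ‖y - x‖)
    (hΓ_nontriv : Γ.Nontrivial)
    (f : ↥C → ↥C) (hf : LipschitzWith 1 f)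
    (ε : ℝ) (hε : ε ∈ Set.Ioo (0 : ℝ) 1) :
    ∃ g : ↥C → ↥C, LipschitzWith 1 g ∧
      (∀ z : ↥C, ‖(g z : X) - (f z : X)‖ ≤ ε) ∧
      (∀ x y : ↥C, (x : X) ∈ Γ →
        ‖(y : X) - (x : X)‖ ≤ ε * s / (12 * (1 + Metric.diam C)) →
        ‖(g y : X) - (g x : X)‖ = ‖(y : X) - (x : X)‖) := by
  classical
  obtain ⟨hs0, hs1⟩ := hs
  obtain ⟨hε0, hε1⟩ := hε
  set d : ℝ := Metric.diam C with hd_def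
  have hd0 : 0 ≤ d := Metric.diam_nonneg
  set δ : ℝ := ε / (2*(1+d)) with hδ_def
  have hδ0 : 0 < δ := div_pos hε0 (by linarith)
  have hδε : δ * (2*(1+d)) = ε := by
    rw [hδ_def]; field_simp
  have hδ1 : δ < 1 := by nlinarith
  set ρ : ℝ := ε * s / (12 * (1 + d)) with hρ_def
  have hρ0 : 0 < ρ := by
    apply div_pos (by nlinarith) (by linarith)
  have hρδ : 6 * ρ = δ * s := by
    rw [hρ_def, hδ_def]; field_simp; ring
  set R : ℝ := s/3 with hR_def
  have hR0 : 0 < R := by rw [hR_def]; linarith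
  have h2ρR : 2*ρ = δ*R := by rw [hR_def]; linarith
  have hρR : ρ < R := by nlinarith
  have h2ρR' : 2*ρ < R := by nlinarith
  have h2R_s : 2*R < s := by rw [hR_def]; linarith
  have hdiam : ∀ u ∈ C, ∀ v ∈ C, ‖u - v‖ ≤ d := by
    intro u hu v hv
    rw [← dist_eq_norm]
    exact Metric.dist_le_diam_of_mem hC_bdd hu hv
  -- a direction vector inside C
  obtain ⟨p, hp, q, hq, hpq⟩ := hΓ_nontriv
  have hpq' : s ≤ ‖q - p‖ := hΓ_sep p hp q hq hpq
  obtain ⟨c, hcC, hc⟩ : ∃ c, c ∈ C ∧ s/2 ≤ ‖c‖ := by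
    rcases le_total (s/2) ‖p‖ with h | h
    · exact ⟨p, hΓC hp, h⟩
    · refine ⟨q, hΓC hq, ?_⟩
      have h1 : ‖q - p‖ ≤ ‖q‖ + ‖p‖ := norm_sub_le _ _
      linarith
  have hc0 : c ≠ 0 := by
    intro h; rw [h, norm_zero] at hc; linarith
  set e : X := ‖c‖⁻¹ • c with he_def
  have he : ‖e‖ = 1 := norm_smul_inv_norm hc0
  -- chart chooser
  have hch : ∀ z : X, ∃ y : X,
      ((∃ x0, x0 ∈ Γ ∧ ‖z - x0‖ < R) → (y ∈ Γ ∧ ‖z - y‖ < R)) ∧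
      (¬(∃ x0, x0 ∈ Γ ∧ ‖z - x0‖ < R) → y = z) := by
    intro z
    by_cases h : ∃ x0, x0 ∈ Γ ∧ ‖z - x0‖ < R
    · exact ⟨h.choose, fun _ => h.choose_spec, fun h' => absurd h h'⟩
    · exact ⟨z, fun h' => absurd h' h, fun _ => rfl⟩
  choose χ hχ1 hχ2 using hch
  have hχ_eq : ∀ z x0, x0 ∈ Γ → ‖z - x0‖ < R → χ z = x0 := by
    intro z x0 hx0 hlt
    obtain ⟨h1, h2⟩ := hχ1 z ⟨x0, hx0, hlt⟩
    by_contra hne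
    have hsep := hΓ_sep (χ z) h1 x0 hx0 hne
    have h3 : ‖x0 - χ z‖ ≤ ‖z - x0‖ + ‖z - χ z‖ := by
      calc ‖x0 - χ z‖ = ‖(x0 - z) + (z - χ z)‖ := by rw [sub_add_sub_cancel]
        _ ≤ ‖x0 - z‖ + ‖z - χ z‖ := norm_add_le _ _
        _ = ‖z - x0‖ + ‖z - χ z‖ := by rw [norm_sub_rev]
    linarith
  -- the maps m and β
  set m : X → X := fun z => χ z + (psiF δ ρ ‖z - χ z‖ / ‖z - χ z‖) • (z - χ z) with hm_def
  set β : X → ℝ := fun z => betaF ρ ‖z - χ z‖ with hβ_def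
  have hm_nochart : ∀ z : X, ¬(∃ x0, x0 ∈ Γ ∧ ‖z - x0‖ < R) → m z = z ∧ β z = 0 := by
    intro z h
    have hzz := hχ2 z h
    constructor
    · simp only [hm_def, hzz, sub_self, smul_zero, add_zero]
    · simp only [hβ_def, hzz, sub_self, norm_zero]
      exact betaF_eq_self le_rfl hρ0.le hρ0.le
  have hβ_nonneg : ∀ z : X, 0 ≤ β z := fun z => betaF_nonneg
  have hβ_le : ∀ z : X, β z ≤ ρ := fun z => betaF_le_rho hρ0.le
  have hm_mem : ∀ z : X, z ∈ C → m z ∈ C := by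
    intro z hz
    by_cases h : ∃ x0, x0 ∈ Γ ∧ ‖z - x0‖ < R
    · obtain ⟨h1, _⟩ := hχ1 z h
      set a := ‖z - χ z‖ with hadef
      set t := psiF δ ρ a / a with htdef
      have ha0 : 0 ≤ a := norm_nonneg _
      have ht0 : 0 ≤ t := div_nonneg (psiF_nonneg ha0) ha0
      have ht1 : t ≤ 1 := by
        rcases eq_or_lt_of_le ha0 with h' | h'
        · rw [htdef, ← h', div_zero]; norm_num
        · rw [htdef]
          exact div_le_one_of_le₀ psiF_le_self ha0
      have hmz : m z = (1 - t) • (χ z) + t • z := by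
        simp only [hm_def, htdef, hadef]
        module
      rw [hmz]
      exact hC_conv (hΓC h1) hz (by linarith) ht0 (by ring)
    · rw [(hm_nochart z h).1]; exact hz
  have hm_close : ∀ z : X, ‖m z - z‖ ≤ ‖z - χ z‖ - psiF δ ρ ‖z - χ z‖ := by
    intro z
    set a := ‖z - χ z‖ with hadef
    have ha0 : 0 ≤ a := norm_nonneg _
    rcases eq_or_lt_of_le ha0 with h | h
    · have hz0 : z - χ z = 0 := by rwa [eq_comm, norm_eq_zero] at h
      have hmz : m z = χ z := by simp only [hm_def, hz0, smul_zero, add_zero]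
      rw [hmz]
      have : χ z - z = 0 := by rw [← neg_sub, hz0, neg_zero]
      rw [this, norm_zero, ← h, psiF_eq_zero hδ1 le_rfl (by linarith)]
      linarith
    · have hident : m z - z = ((psiF δ ρ a)/a - 1) • (z - χ z) := by
        simp only [hm_def, hadef]
        module
      have htle : (psiF δ ρ a)/a ≤ 1 := div_le_one_of_le₀ psiF_le_self ha0
      rw [hident, norm_smul, Real.norm_eq_abs, abs_of_nonpos (by linarith), ← hadef]
      have : -(psiF δ ρ a / a - 1) * a = a - psiF δ ρ a := by
        field_simp
        ring
      rw [this]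
  have hm_close2 : ∀ z : X, ‖m z - z‖ ≤ 2*ρ := by
    intro z
    refine (hm_close z).trans ?_
    have := psiF_sub_le (δ := δ) (ρ := ρ) hδ0 hδ1 hρ0.le (norm_nonneg (z - χ z))
    linarith
  -- mixed case of the key inequality
  have hmixed : ∀ z w : X, (∃ x0, x0 ∈ Γ ∧ ‖z - x0‖ < R) →
      (¬ ∃ x0, x0 ∈ Γ ∧ ‖w - x0‖ < R) →
      (1-δ) * ‖m z - m w‖ + |β z - β w| ≤ ‖z - w‖ := by
    intro z w h1 h2
    obtain ⟨hxΓ, hxlt⟩ := hχ1 z h1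
    push_neg at h2
    have hwx : R ≤ ‖w - χ z‖ := not_lt.1 (by exact fun hh => (h2 (χ z) hxΓ).not_gt hh)
    have hwpos : 0 < ‖w - χ z‖ := lt_of_lt_of_le hR0 hwx
    have hψw : psiF δ ρ ‖w - χ z‖ = ‖w - χ z‖ := by
      refine psiF_eq_self hδ0 hδ1 (norm_nonneg _) ?_
      rw [h2ρR]
      exact mul_le_mul_of_nonneg_left hwx hδ0.le
    have key := rad_aux hδ0 hδ1 hρ0 (χ z) z w
    rw [hψw, div_self (ne_of_gt hwpos), one_smul] at key
    have hmw : m w = w := by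
      have h2' : ¬ ∃ x0, x0 ∈ Γ ∧ ‖w - x0‖ < R := by
        push_neg; exact h2
      exact (hm_nochart w h2').1
    have hβw : β w = 0 := by
      have h2' : ¬ ∃ x0, x0 ∈ Γ ∧ ‖w - x0‖ < R := by
        push_neg; exact h2
      exact (hm_nochart w h2').2
    have hmm : m z - m w = (psiF δ ρ ‖z - χ z‖ / ‖z - χ z‖) • (z - χ z) - (w - χ z) := by
      rw [hmw]
      simp only [hm_def]
      abel
    have hβz : β z = betaF ρ ‖z - χ z‖ := by simp only [hβ_def]
    have hbw0 : betaF ρ ‖w - χ z‖ = 0 :=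
      betaF_eq_zero (by linarith) (norm_nonneg _)
    rw [hmm, hβz, hβw]
    rw [hbw0] at key
    exact key
  -- the key inequality
  have hstar : ∀ z w : X, (1-δ) * ‖m z - m w‖ + |β z - β w| ≤ ‖z - w‖ := by
    intro z w
    by_cases h1 : ∃ x0, x0 ∈ Γ ∧ ‖z - x0‖ < R
    · by_cases h2 : ∃ x0, x0 ∈ Γ ∧ ‖w - x0‖ < R
      · obtain ⟨hz1, hz2⟩ := hχ1 z h1
        obtain ⟨hw1, hw2⟩ := hχ1 w h2
        by_cases hcc : χ z = χ w
        · -- same chart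
          have key := rad_aux hδ0 hδ1 hρ0 (χ z) z w
          have hmm : m z - m w =
              (psiF δ ρ ‖z - χ z‖ / ‖z - χ z‖) • (z - χ z) -
              (psiF δ ρ ‖w - χ z‖ / ‖w - χ z‖) • (w - χ z) := by
            simp only [hm_def, ← hcc]
            abel
          have hββ : β z - β w = betaF ρ ‖z - χ z‖ - betaF ρ ‖w - χ z‖ := by
            simp only [hβ_def, ← hcc]
          rw [hmm, hββ]
          exact key
        · -- different charts
          set a := ‖z - χ z‖ with hadef
          set b := ‖w - χ w‖ with hbdef
          have ha0 : 0 ≤ a := norm_nonneg _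
          have hb0 : 0 ≤ b := norm_nonneg _
          have hsep : s ≤ ‖χ w - χ z‖ := hΓ_sep (χ z) hz1 (χ w) hw1 hcc
          have htri : ‖χ w - χ z‖ ≤ b + ‖z - w‖ + a := by
            calc ‖χ w - χ z‖ = ‖(χ w - w) + ((w - z) + (z - χ z))‖ := by
                  congr 1; abel
              _ ≤ ‖χ w - w‖ + ‖(w - z) + (z - χ z)‖ := norm_add_le _ _
              _ ≤ ‖χ w - w‖ + (‖w - z‖ + ‖z - χ z‖) :=
                  add_le_add_right (norm_add_le _ _) _
              _ = b + ‖z - w‖ + a := by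
                  rw [norm_sub_rev (χ w) w, norm_sub_rev w z]; ring
          have hGa : a - (1-δ) * psiF δ ρ a + betaF ρ a ≤ 2*ρ := by
            refine Gle hδ0 hδ1 hρ0 ha0 ?_
            rw [h2ρR]
            exact (mul_le_mul_of_nonneg_left hz2.le hδ0.le)
          have hGb : b - (1-δ) * psiF δ ρ b + betaF ρ b ≤ 2*ρ := by
            refine Gle hδ0 hδ1 hρ0 hb0 ?_
            rw [h2ρR]
            exact (mul_le_mul_of_nonneg_left hw2.le hδ0.le)
          have hmzc : ‖m z - z‖ ≤ a - psiF δ ρ a := hm_close z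
          have hmwc : ‖m w - w‖ ≤ b - psiF δ ρ b := hm_close w
          have htri2 : ‖m z - m w‖ ≤ ‖m z - z‖ + ‖z - w‖ + ‖m w - w‖ := by
            calc ‖m z - m w‖ = ‖(m z - z) + ((z - w) + (w - m w))‖ := by
                  congr 1; abel
              _ ≤ ‖m z - z‖ + ‖(z - w) + (w - m w)‖ := norm_add_le _ _
              _ ≤ ‖m z - z‖ + (‖z - w‖ + ‖w - m w‖) :=
                  add_le_add_right (norm_add_le _ _) _
              _ = ‖m z - z‖ + ‖z - w‖ + ‖m w - w‖ := by
                  rw [norm_sub_rev w (m w)]; ring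
          have h6 : ‖m z - m w‖ ≤ (a - psiF δ ρ a) + ‖z - w‖ + (b - psiF δ ρ b) := by
            linarith
          have hx1 := mul_le_mul_of_nonneg_left h6 (show (0:ℝ) ≤ 1-δ by linarith)
          have hβab : |β z - β w| ≤ betaF ρ a + betaF ρ b := by
            have h7 : β z = betaF ρ a := by simp only [hβ_def, hadef]
            have h8 : β w = betaF ρ b := by simp only [hβ_def, hbdef]
            rw [h7, h8]
            have b1 : (0:ℝ) ≤ betaF ρ a := betaF_nonneg
            have b2 : (0:ℝ) ≤ betaF ρ b := betaF_nonneg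
            rw [abs_le]
            constructor <;> linarith
          have hmul : δ * s ≤ δ * (b + ‖z - w‖ + a) :=
            mul_le_mul_of_nonneg_left (hsep.trans htri) hδ0.le
          linarith [hx1, hβab, hGa, hGb, hmul, hρδ, hρ0.le]
      · exact hmixed z w h1 h2
    · by_cases h2 : ∃ x0, x0 ∈ Γ ∧ ‖w - x0‖ < R
      · have h3 := hmixed w z h2 h1
        rw [norm_sub_rev (m w) (m z), abs_sub_comm (β w) (β z), norm_sub_rev w z] at h3
        exact h3
      · rw [(hm_nochart z h1).1, (hm_nochart w h2).1, (hm_nochart z h1).2,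
          (hm_nochart w h2).2, sub_self, abs_zero, add_zero]
        nlinarith [norm_nonneg (z - w)]
  -- the map g
  have hf' : ∀ u v : ↥C, ‖(↑(f u) : X) - ↑(f v)‖ ≤ ‖(↑u : X) - ↑v‖ := by
    intro u v
    have h1 := hf.dist_le_mul u v
    rwa [Subtype.dist_eq, Subtype.dist_eq, dist_eq_norm, dist_eq_norm,
      NNReal.coe_one, one_mul] at h1
  set M : ↥C → ↥C := fun z => ⟨m ↑z, hm_mem _ z.2⟩ with hM_def
  set g0 : ↥C → X := fun z => (1-δ) • (↑(f (M z)) : X) + β ↑z • e with hg0_def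
  have hρδc : ρ ≤ δ * ‖c‖ := by nlinarith
  have hg0_mem : ∀ z : ↥C, g0 z ∈ C := by
    intro z
    have hβz0 : 0 ≤ β ↑z := hβ_nonneg _
    have hβzρ : β ↑z ≤ ρ := hβ_le _
    have hcpos : 0 < ‖c‖ := by linarith
    have hv : (β ↑z / δ) • e ∈ C := by
      have hveq : (β ↑z/δ) • e = (β ↑z/(δ*‖c‖)) • c + (1 - β ↑z/(δ*‖c‖)) • (0:X) := by
        rw [smul_zero, add_zero, he_def, smul_smul]
        congr 1
        field_simp
      rw [hveq]
      refine hC_conv hcC h0 ?_ ?_ (by ring)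
      · exact div_nonneg hβz0 (by positivity)
      · rw [sub_nonneg, div_le_one (by positivity)]
        linarith
    have hsplit : g0 z = (1-δ) • (↑(f (M z)) : X) + δ • ((β ↑z/δ) • e) := by
      have hscal : δ * (β ↑z / δ) = β ↑z := by field_simp
      simp only [hg0_def]
      congr 1
      conv_rhs => rw [smul_smul, hscal]
    rw [hsplit]
    exact hC_conv (f (M z)).2 hv (by linarith) hδ0.le (by ring)
  refine ⟨fun z => ⟨g0 z, hg0_mem z⟩, ?_, ?_, ?_⟩
  · -- Lipschitz
    refine LipschitzWith.of_dist_le_mul fun z w => ?_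
    rw [NNReal.coe_one, one_mul, Subtype.dist_eq, Subtype.dist_eq, dist_eq_norm,
      dist_eq_norm]
    show ‖g0 z - g0 w‖ ≤ ‖(↑z : X) - ↑w‖
    have hdiff : g0 z - g0 w =
        (1-δ) • ((↑(f (M z)) : X) - ↑(f (M w))) + (β ↑z - β ↑w) • e := by
      simp only [hg0_def]
      module
    rw [hdiff]
    calc ‖(1-δ) • ((↑(f (M z)) : X) - ↑(f (M w))) + (β ↑z - β ↑w) • e‖
        ≤ ‖(1-δ) • ((↑(f (M z)) : X) - ↑(f (M w)))‖ + ‖(β ↑z - β ↑w) • e‖ :=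
          norm_add_le _ _
      _ = (1-δ) * ‖(↑(f (M z)) : X) - ↑(f (M w))‖ + |β ↑z - β ↑w| := by
          rw [norm_smul, norm_smul, Real.norm_eq_abs, Real.norm_eq_abs,
            abs_of_nonneg (by linarith : (0:ℝ) ≤ 1-δ), he, mul_one]
      _ ≤ (1-δ) * ‖m ↑z - m ↑w‖ + |β ↑z - β ↑w| := by
          have := hf' (M z) (M w)
          have hmm : ‖(↑(M z) : X) - ↑(M w)‖ = ‖m ↑z - m ↑w‖ := rfl
          rw [hmm] at this
          nlinarith
      _ ≤ ‖(↑z : X) - ↑w‖ := hstar _ _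
  · -- closeness
    intro z
    show ‖g0 z - ↑(f z)‖ ≤ ε
    have hsplit : g0 z - ↑(f z) =
        (1-δ) • ((↑(f (M z)) : X) - ↑(f z)) + (-δ) • (↑(f z) : X) + β ↑z • e := by
      simp only [hg0_def]
      module
    have h1 : ‖(↑(f (M z)) : X) - ↑(f z)‖ ≤ 2*ρ := by
      refine (hf' (M z) z).trans ?_
      exact hm_close2 ↑z
    have h2 : ‖(↑(f z) : X)‖ ≤ d := by
      have := hdiam _ (f z).2 _ h0
      rwa [sub_zero] at this
    have h3 : β ↑z ≤ ρ := hβ_le _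
    have h4 : 0 ≤ β ↑z := hβ_nonneg _
    have hδs : δ * s ≤ δ := by nlinarith
    calc ‖g0 z - ↑(f z)‖
        ≤ ‖(1-δ) • ((↑(f (M z)) : X) - ↑(f z)) + (-δ) • (↑(f z) : X)‖ + ‖β ↑z • e‖ := by
          rw [hsplit]; exact norm_add_le _ _
      _ ≤ ‖(1-δ) • ((↑(f (M z)) : X) - ↑(f z))‖ + ‖(-δ) • (↑(f z) : X)‖ + ‖β ↑z • e‖ :=
          add_le_add_left (norm_add_le _ _) _
      _ = (1-δ) * ‖(↑(f (M z)) : X) - ↑(f z)‖ + δ * ‖(↑(f z) : X)‖ + β ↑z := by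
          rw [norm_smul, norm_smul, norm_smul, Real.norm_eq_abs, Real.norm_eq_abs,
            Real.norm_eq_abs, abs_of_nonneg (by linarith : (0:ℝ) ≤ 1-δ),
            abs_neg, abs_of_nonneg hδ0.le, abs_of_nonneg h4, he, mul_one]
      _ ≤ ε := by nlinarith [mul_le_mul_of_nonneg_left h1 (show (0:ℝ) ≤ 1-δ by linarith),
            mul_le_mul_of_nonneg_left h2 hδ0.le]
  · -- local isometry
    intro x y hxΓ hxy
    have hχx : χ ↑x = ↑x := hχ_eq _ _ hxΓ (by rw [sub_self, norm_zero]; exact hR0)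
    have hχy : χ ↑y = ↑x := hχ_eq _ _ hxΓ (lt_of_le_of_lt hxy hρR)
    have hmx : m ↑x = ↑x := by
      simp only [hm_def, hχx, sub_self, smul_zero, add_zero]
    have hmy : m ↑y = ↑x := by
      simp only [hm_def, hχy]
      rw [psiF_eq_zero hδ1 (norm_nonneg _) (by linarith), zero_div, zero_smul, add_zero]
    have hβx : β ↑x = 0 := by
      simp only [hβ_def, hχx, sub_self, norm_zero]
      exact betaF_eq_self le_rfl hρ0.le hρ0.le
    have hβy : β ↑y = ‖(↑y : X) - ↑x‖ := by
      simp only [hβ_def, hχy]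
      exact betaF_eq_self (norm_nonneg _) hxy hρ0.le
    have hMM : M y = M x := Subtype.ext (by rw [show (↑(M y) : X) = m ↑y from rfl,
      show (↑(M x) : X) = m ↑x from rfl, hmy, hmx])
    show ‖g0 y - g0 x‖ = ‖(↑y : X) - ↑x‖
    have hdiff : g0 y - g0 x = ‖(↑y : X) - ↑x‖ • e := by
      simp only [hg0_def, hMM, hβx, hβy]
      module
    rw [hdiff, norm_smul, Real.norm_eq_abs, abs_of_nonneg (norm_nonneg _), he, mul_one]
end auxx
end

section
/- Let X be a normed space, let C ⊆ X be a bounded, convex, non-empty set, and let M = M(C) denote the space of non-expansive mappings C → C equipped with the supremum metric. Let s ∈ (0,1), let Γ ⊆ C be an s-separated set containing at least two points, let λ ∈ (0,1), and let N_{λ,Γ,s} := {f ∈ M : inf_{x∈Γ} Lip(f,x,s) ≤ λ}. Then N_{λ,Γ,s} is lower porous at every point of M (in particular, it is a lower porous subset of M). -/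
open Filter Metric Set Topology

set_option linter.unusedSectionVars false
set_option maxHeartbeats 2000000

set_option linter.unusedSectionVars false

noncomputable def chiF (rho R t : ℝ) : ℝ :=
  max 0 ((rho / max t rho - rho / R) / (1 - rho / R))

noncomputable def tentF (del t : ℝ) : ℝ := max 0 (min t (2 * del - t))

section chi
variable {rho R : ℝ} (hrho : 0 < rho) (hR : 8 * rho ≤ R)
include hrho hR

lemma hR0 : 0 < R := lt_of_lt_of_le (by linarith) hR

lemma heps_le : rho / R ≤ 1 / 8 := by
  rw [div_le_div_iff₀ (hR0 hrho hR) (by norm_num)]; linarith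

lemma heps_pos : 0 < rho / R := div_pos hrho (hR0 hrho hR)

lemma hsig_pos : 0 < 1 - rho / R := by
  have := heps_le hrho hR; linarith

lemma chi_nonneg (t : ℝ) : 0 ≤ chiF rho R t := le_max_left _ _

lemma chi_le_one (t : ℝ) : chiF rho R t ≤ 1 := by
  have h1 : rho / max t rho ≤ 1 := by
    rw [div_le_one (lt_of_lt_of_le hrho (le_max_right _ _))]
    exact le_max_right _ _
  have h2 := heps_pos hrho hR
  have h3 := hsig_pos hrho hR
  apply max_le (by norm_num)
  rw [div_le_one h3]; linarith

lemma chi_eq_one {t : ℝ} (ht : t ≤ rho) : chiF rho R t = 1 := by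
  have h3 := hsig_pos hrho hR
  rw [chiF, max_eq_right ht, div_self (ne_of_gt hrho), div_self (ne_of_gt h3)]
  norm_num

lemma chi_eq_zero {t : ℝ} (ht : R ≤ t) : chiF rho R t = 0 := by
  have hRpos := hR0 hrho hR
  have h3 := hsig_pos hrho hR
  have hmax : max t rho = t := max_eq_left (le_trans (by linarith) ht)
  rw [chiF, hmax, max_eq_left]
  apply div_nonpos_of_nonpos_of_nonneg _ (le_of_lt h3)
  have : rho / t ≤ rho / R := div_le_div_of_nonneg_left (le_of_lt hrho) hRpos ht
  linarith

lemma chi_interior {t : ℝ} (h1 : rho ≤ t) (h2 : t ≤ R) :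
    chiF rho R t = (rho / t - rho / R) / (1 - rho / R) := by
  have h3 := hsig_pos hrho hR
  have htpos : 0 < t := lt_of_lt_of_le hrho h1
  have hnum : 0 ≤ rho / t - rho / R := by
    have : rho / R ≤ rho / t := div_le_div_of_nonneg_left (le_of_lt hrho) htpos h2
    linarith
  rw [chiF, max_eq_left h1, max_eq_right (div_nonneg hnum (le_of_lt h3))]

lemma chi_anti {t t' : ℝ} (h : t' ≤ t) : chiF rho R t ≤ chiF rho R t' := by
  apply max_le_max (le_refl 0)
  apply div_le_div_of_nonneg_right _ (le_of_lt (hsig_pos hrho hR))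
  have h1 : (0:ℝ) < max t' rho := lt_of_lt_of_le hrho (le_max_right _ _)
  have h2 : max t' rho ≤ max t rho := max_le_max h (le_refl _)
  have := div_le_div_of_nonneg_left (le_of_lt hrho) h1 h2
  linarith

lemma chi_mul_le {t : ℝ} (ht : 0 ≤ t) : chiF rho R t * t ≤ 2 * rho := by
  have h3 := hsig_pos hrho hR
  have he := heps_le hrho hR
  rcases le_total t rho with h | h
  · rw [chi_eq_one hrho hR h]; linarith
  rcases le_total t R with h2 | h2
  · rw [chi_interior hrho hR h h2]
    have htpos : 0 < t := lt_of_lt_of_le hrho h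
    have key : (rho / t - rho / R) / (1 - rho / R) ≤ rho / t / (1 - rho / R) := by
      apply div_le_div_of_nonneg_right _ (le_of_lt h3)
      have := heps_pos hrho hR; linarith
    have key2 : rho / t / (1 - rho / R) * t = rho / (1 - rho / R) := by
      field_simp
    calc (rho / t - rho / R) / (1 - rho / R) * t ≤ rho / t / (1 - rho / R) * t := by
          apply mul_le_mul_of_nonneg_right key ht
      _ = rho / (1 - rho / R) := key2
      _ ≤ 2 * rho := by
          rw [div_le_iff₀ h3]; nlinarith
  · rw [chi_eq_zero hrho hR h2]; nlinarith

/-- master inequality for the harmonic cutoff -/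
lemma chi_master {t t' : ℝ} (ht' : 0 ≤ t') (htt : t' ≤ t) :
    (chiF rho R t' - chiF rho R t) * t' ≤ (chiF rho R t + 2 * (rho / R)) * (t - t') := by
  have h3 := hsig_pos hrho hR
  have he := heps_le hrho hR
  have hepos := heps_pos hrho hR
  have hRpos := hR0 hrho hR
  have core : ∀ a b : ℝ, rho ≤ a → a ≤ b → b ≤ R →
      (chiF rho R a - chiF rho R b) * a ≤ (chiF rho R b + 2 * (rho / R)) * (b - a) := by
    intro a b ha hab hbR
    have hapos : 0 < a := lt_of_lt_of_le hrho ha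
    have hbpos : 0 < b := lt_of_lt_of_le hapos hab
    rw [chi_interior hrho hR ha (le_trans hab hbR), chi_interior hrho hR (le_trans ha hab) hbR]
    set e := rho / R with hedef
    set P := rho / a with hPdef
    set Q := rho / b with hQdef
    have hPa : P * a = rho := by rw [hPdef]; field_simp
    have hQb : Q * b = rho := by rw [hQdef]; field_simp
    have lhs1 : ((P - e) / (1 - e) - (Q - e) / (1 - e)) * a = ((P - Q) * a) / (1 - e) := by
      rw [div_sub_div_same, div_mul_eq_mul_div]; ring_nf
    have lhs2 : (P - Q) * a = Q * (b - a) := by linear_combination hPa - hQb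
    rw [lhs1, lhs2, div_le_iff₀ h3]
    have expand : ((Q - e) / (1 - e) + 2 * e) * (b - a) * (1 - e)
        = (Q - e) * (b - a) + 2 * e * (1 - e) * (b - a) := by
      field_simp
    rw [expand]
    have hQe : e ≤ Q := by
      rw [hQdef, hedef]
      exact div_le_div_of_nonneg_left (le_of_lt hrho) hbpos hbR
    nlinarith [sub_nonneg.mpr hab, mul_nonneg (le_of_lt hepos) (sub_nonneg.mpr hab)]
  rcases le_total t rho with hA | hA
  · rw [chi_eq_one hrho hR (le_trans htt hA), chi_eq_one hrho hR hA]
    simp only [sub_self, zero_mul]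
    have h0 : (0:ℝ) ≤ t - t' := by linarith
    have h1 : (0:ℝ) ≤ 1 + 2 * (rho / R) := by positivity
    exact mul_nonneg h1 h0
  rcases le_total R t with hB | hB
  · -- chi t = 0
    rw [chi_eq_zero hrho hR hB]
    rcases le_total t' rho with hC | hC
    · rw [chi_eq_one hrho hR hC]
      have h1 : (1 - 0) * t' ≤ rho := by simpa using hC
      have h2 : 2 * (rho / R) * (R - rho) ≤ 2 * (rho / R) * (t - t') := by
        apply mul_le_mul_of_nonneg_left _ (by positivity)
        linarith
      have h3' : 2 * (rho / R) * (R - rho) = 2 * rho - 2 * ((rho/R) * rho) := by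
        field_simp
      have h4 : (rho / R) * rho ≤ (1/8) * rho := by
        apply mul_le_mul_of_nonneg_right he (le_of_lt hrho)
      nlinarith
    rcases le_total R t' with hD | hD
    · rw [chi_eq_zero hrho hR hD]
      simp only [sub_self, zero_mul, zero_add]
      have h0 : (0:ℝ) ≤ t - t' := by linarith
      positivity
    · rw [chi_interior hrho hR hC hD]
      have ht'pos : 0 < t' := lt_of_lt_of_le hrho hC
      set e := rho / R with hedef
      set Q := rho / t' with hQdef
      have hQt : Q * t' = rho := by rw [hQdef]; field_simp
      have heR : e * R = rho := by rw [hedef]; field_simp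
      have lhs1 : ((Q - e) / (1 - e) - 0) * t' = ((Q - e) * t') / (1 - e) := by
        rw [sub_zero, div_mul_eq_mul_div]
      have lhs2 : (Q - e) * t' = e * (R - t') := by linear_combination hQt - heR
      rw [lhs1, lhs2, div_le_iff₀ h3, zero_add]
      have h5 : e * (R - t') ≤ e * (t - t') :=
        mul_le_mul_of_nonneg_left (by linarith) (le_of_lt hepos)
      have h6 : e * (t - t') ≤ 2 * e * (t - t') * (1 - e) := by
        nlinarith [mul_nonneg (le_of_lt hepos) (sub_nonneg.mpr htt)]
      linarith
  · -- rho < t ≤ R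
    rcases le_total t' rho with hC | hC
    · rw [chi_eq_one hrho hR hC]
      have step := core rho t (le_refl _) hA hB
      rw [chi_eq_one hrho hR (le_refl rho)] at step
      have e1 : (1 - chiF rho R t) * t' ≤ (1 - chiF rho R t) * rho := by
        apply mul_le_mul_of_nonneg_left hC
        have := chi_le_one hrho hR t; linarith
      have e2 : (chiF rho R t + 2 * (rho / R)) * (t - rho)
          ≤ (chiF rho R t + 2 * (rho / R)) * (t - t') := by
        apply mul_le_mul_of_nonneg_left (by linarith)
        have := chi_nonneg hrho hR t; positivity
      linarith
    · exact core t' t hC htt hB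

/-- zone-B2 numeric helper -/
lemma chi_b2 {t : ℝ} (ht : rho ≤ t) :
    (1 - chiF rho R t) * t + rho / 4 ≤ (1 + 3 * (rho / R)) * (t - rho / 2) := by
  have h3 := hsig_pos hrho hR
  have he := heps_le hrho hR
  have hepos := heps_pos hrho hR
  have hRpos := hR0 hrho hR
  have htpos : 0 < t := lt_of_lt_of_le hrho ht
  rcases le_total t R with h2 | h2
  · rw [chi_interior hrho hR ht h2]
    set e := rho / R with hedef
    have key : (1 - (rho / t - e) / (1 - e)) * t = (t - rho) / (1 - e) := by
      field_simp; ring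
    rw [key]
    have k1 : (t - rho) / (1 - e) ≤ (1 + 3 * e) * (t - rho) := by
      rw [div_le_iff₀ h3]
      nlinarith [mul_nonneg (mul_nonneg (sub_nonneg.mpr ht) (le_of_lt hepos))
        (by linarith : (0:ℝ) ≤ 2 - 3 * e)]
    nlinarith [hepos, sub_nonneg.mpr ht, mul_pos hepos hrho]
  · rw [chi_eq_zero hrho hR h2]
    have h7 : rho / R * R ≤ rho / R * t :=
      mul_le_mul_of_nonneg_left h2 (le_of_lt hepos)
    have heRR : rho / R * R = rho := by field_simp
    have h8 : rho / R * rho ≤ (1/8) * rho := mul_le_mul_of_nonneg_right he (le_of_lt hrho)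
    nlinarith [hepos]

end chi

section tent
variable {del : ℝ} (hdel : 0 ≤ del)
include hdel

lemma tent_nonneg (t : ℝ) : 0 ≤ tentF del t := le_max_left _ _

lemma tent_le (t : ℝ) : tentF del t ≤ del := by
  apply max_le hdel
  rcases le_total t (2 * del - t) with h | h
  · rw [min_eq_left h]; linarith
  · rw [min_eq_right h]; linarith

lemma tent_zero_of_ge {t : ℝ} (ht : 2 * del ≤ t) : tentF del t = 0 := by
  apply max_eq_left
  apply le_trans (min_le_right _ _); linarith

lemma tent_at_zero : tentF del 0 = 0 := by
  apply max_eq_left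
  apply le_trans (min_le_left _ _); linarith

lemma tent_at_del : tentF del del = del := by
  rw [tentF]
  have : min del (2 * del - del) = del := by
    rw [min_eq_left]; linarith
  rw [this, max_eq_right hdel]

lemma tent_lip (a b : ℝ) : |tentF del a - tentF del b| ≤ |a - b| := by
  have h1 : |max (min a (2*del-a)) 0 - max (min b (2*del-b)) 0|
      ≤ |min a (2*del-a) - min b (2*del-b)| := abs_max_sub_max_le_abs _ _ _
  have h2 : |min a (2*del-a) - min b (2*del-b)| ≤ max |a-b| |(2*del-a)-(2*del-b)| :=
    abs_min_sub_min_le_max _ _ _ _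
  have h3 : (2*del-a)-(2*del-b) = -(a-b) := by ring
  rw [h3, abs_neg, max_self] at h2
  calc |tentF del a - tentF del b| = |max (min a (2*del-a)) 0 - max (min b (2*del-b)) 0| := by
        rw [tentF, tentF, max_comm 0 _, max_comm 0 _]
    _ ≤ |a - b| := le_trans h1 h2

end tent

section main
variable {X : Type*} [NormedAddCommGroup X] [NormedSpace ℝ X]

lemma exists_hole
    (C : Set X) (hC_bdd : Bornology.IsBounded C) (hC_conv : Convex ℝ C)
    (s : ℝ) (hs : s ∈ Set.Ioo (0 : ℝ) 1)
    (Γ : Set X) (hΓC : Γ ⊆ C)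
    (hΓ_sep : ∀ x ∈ Γ, ∀ y ∈ Γ, x ≠ y → s ≤ ‖y - x‖)
    (hΓ_nontriv : Γ.Nontrivial)
    (lam : ℝ) (hlam : lam ∈ Set.Ioo (0 : ℝ) 1)
    (g : NonexpMap C) (r : ℝ) (hr : 0 < r)
    (hrr : r ≤ Metric.diam C * (1 - lam) / 2) :
    ∃ H : NonexpMap C, dist H g ≤ r / 2 ∧
      ∀ f : NonexpMap C,
        dist f H < (1 - lam) * s / (4096 * Metric.diam C) * r →
        lam + (1 - lam) / 4 ≤
          sInf {L : ℝ | ∃ x : ↥C, (x : X) ∈ Γ ∧ L = LipScale (⇑(f.1)) x s} := by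
  classical
  obtain ⟨p₁, hp₁, p₂, hp₂, hp12⟩ := hΓ_nontriv
  have hp₁C : p₁ ∈ C := hΓC hp₁
  have hp₂C : p₂ ∈ C := hΓC hp₂
  obtain ⟨hspos, hs1⟩ := hs
  obtain ⟨hlam0, hlam1⟩ := hlam
  have hsep12 : s ≤ ‖p₂ - p₁‖ := hΓ_sep p₁ hp₁ p₂ hp₂ hp12
  set D := Metric.diam C with hDdef
  have hsD : s ≤ D := by
    have h1 : dist p₂ p₁ ≤ D := Metric.dist_le_diam_of_mem hC_bdd hp₂C hp₁C
    rw [dist_eq_norm] at h1; linarith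
  have hDpos : 0 < D := lt_of_lt_of_le hspos hsD
  have hdiam : ∀ a b : X, a ∈ C → b ∈ C → dist a b ≤ D := fun a b ha hb =>
    Metric.dist_le_diam_of_mem hC_bdd ha hb
  -- constants
  set mu := (1 + lam) / 2 with hmudef
  have hmu0 : 0 < mu := by rw [hmudef]; linarith
  have hmu1 : mu ≤ 1 := by rw [hmudef]; linarith
  set rho := r * s / (64 * D) with hrhodef
  have hrhopos : 0 < rho := by rw [hrhodef]; positivity
  set R := s / 4 with hRdef
  have hRpos : 0 < R := by rw [hRdef]; positivity
  have hr2D : r ≤ 2 * D := by nlinarith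
  have h8 : 8 * rho ≤ R := by
    rw [hrhodef, hRdef]
    rw [show (8:ℝ) * (r * s / (64 * D)) = r * s / (8 * D) by field_simp; ring]
    rw [div_le_div_iff₀ (by positivity) (by norm_num)]
    nlinarith
  set del := rho / 4 with hdeldef
  have hdel0 : 0 ≤ del := by rw [hdeldef]; positivity
  have hdelpos : 0 < del := by rw [hdeldef]; positivity
  have h2del : 2 * del ≤ rho := by rw [hdeldef]; linarith
  set eps := rho / R with hepsdef
  have hepspos : 0 < eps := div_pos hrhopos hRpos
  have heps8 : eps ≤ 1 / 8 := heps_le hrhopos h8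
  have heps_eq : eps = r / (16 * D) := by
    rw [hepsdef, hrhodef, hRdef]; field_simp; ring
  have heps_lam : eps ≤ (1 - lam) / 32 := by
    rw [heps_eq, div_le_div_iff₀ (by positivity) (by norm_num)]
    nlinarith
  set bet := 4 * eps with hbetdef
  have hbet0 : 0 ≤ bet := by rw [hbetdef]; positivity
  have hbet_lam : bet ≤ (1 - lam) / 8 := by rw [hbetdef]; linarith
  have hbet1 : bet ≤ 1 / 2 := by nlinarith
  -- the nonexpansive map g
  set g' : ↥C → ↥C := ⇑(g.1) with hg'def
  have hg : ∀ a b : ↥C, dist (g' a) (g' b) ≤ dist a b := by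
    intro a b
    have := g.2.dist_le_mul a b
    simpa using this
  have hgnorm : ∀ a b : ↥C, ‖(↑(g' a) : X) - ↑(g' b)‖ ≤ dist a b := by
    intro a b
    rw [← dist_eq_norm, ← Subtype.dist_eq]
    exact hg a b
  -- direction points
  set wPt : ↥C → X := fun x => if s / 2 ≤ ‖p₁ - (↑(g' x) : X)‖ then p₁ else p₂ with hwdef
  have hw : ∀ x : ↥C, wPt x ∈ C ∧ s / 2 ≤ ‖wPt x - ↑(g' x)‖ := by
    intro x
    simp only [hwdef]
    by_cases h : s / 2 ≤ ‖p₁ - (↑(g' x) : X)‖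
    · rw [if_pos h]; exact ⟨hp₁C, h⟩
    · rw [if_neg h]
      push_neg at h
      refine ⟨hp₂C, ?_⟩
      have h1 : ‖p₂ - p₁‖ ≤ ‖p₂ - ↑(g' x)‖ + ‖p₁ - ↑(g' x)‖ := by
        have := norm_sub_le (p₂ - (↑(g' x):X)) (p₁ - ↑(g' x))
        simpa using this
      linarith
  set eV : ↥C → X := fun x => ‖wPt x - ↑(g' x)‖⁻¹ • (wPt x - ↑(g' x)) with heVdef
  have heV : ∀ x : ↥C, ‖eV x‖ = 1 := by
    intro x
    have hpos : 0 < ‖wPt x - (↑(g' x):X)‖ := lt_of_lt_of_le (by positivity) (hw x).2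
    simp only [heVdef, norm_smul, norm_inv, norm_norm]
    exact inv_mul_cancel₀ (ne_of_gt hpos)
  -- local model
  set Pt : ↥C → ↥C → X := fun x y => ↑(g' x) + (mu * tentF del (dist y x)) • eV x with hPtdef
  have hPtC : ∀ x y : ↥C, Pt x y ∈ C := by
    intro x y
    have hpos : 0 < ‖wPt x - (↑(g' x):X)‖ := lt_of_lt_of_le (by positivity) (hw x).2
    set th := mu * tentF del (dist y x) / ‖wPt x - (↑(g' x):X)‖ with hthdef
    have hth0 : 0 ≤ th := by
      rw [hthdef]
      have := tent_nonneg hdel0 (dist y x)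
      positivity
    have hth1 : th ≤ 1 := by
      rw [hthdef, div_le_one hpos]
      have h1 : tentF del (dist y x) ≤ del := tent_le hdel0 _
      have h2 : del ≤ s / 2 := by
        have h8' := h8
        rw [hRdef] at h8'
        rw [hdeldef]; linarith
      nlinarith [tent_nonneg hdel0 (dist y x), (hw x).2]
    have key : Pt x y = (1 - th) • (↑(g' x):X) + th • wPt x := by
      simp only [hPtdef, hthdef, heVdef, smul_smul, sub_smul, one_smul, smul_sub]
      rw [div_eq_inv_mul, mul_comm ‖wPt x - (↑(g' x):X)‖⁻¹ (mu * tentF del (dist y x))]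
      abel
    rw [key]
    exact hC_conv (g' x).2 (hw x).1 (by linarith) hth0 (by ring)

  -- the perturbed map (before final contraction)
  set GF : ↥C → X := fun y =>
    if h : ∃ x : ↥C, (↑x : X) ∈ Γ ∧ dist y x < R then
      (1 - chiF rho R (dist y h.choose)) • (↑(g' y) : X)
        + chiF rho R (dist y h.choose) • Pt h.choose y
    else ↑(g' y) with hGFdef
  have huniq : ∀ (x x' : ↥C), (↑x : X) ∈ Γ → (↑x' : X) ∈ Γ →
      ∀ y : ↥C, dist y x < R → dist y x' < R → x = x' := by
    intro x x' hx hx' y h1 h2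
    by_contra hne
    have hcne : (↑x : X) ≠ ↑x' := fun hc => hne (Subtype.ext hc)
    have hsep' : s ≤ ‖(↑x' : X) - ↑x‖ := hΓ_sep _ hx _ hx' hcne
    have htr : dist (↑x : X) ↑x' ≤ dist y x + dist y x' := by
      rw [← Subtype.dist_eq]
      calc dist x x' ≤ dist x y + dist y x' := dist_triangle x y x'
        _ = dist y x + dist y x' := by rw [dist_comm x y]
    rw [dist_eq_norm, norm_sub_rev] at htr
    have hRs : R = s / 4 := hRdef
    linarith
  have hGF_ball : ∀ (y x : ↥C), (↑x : X) ∈ Γ → dist y x < R →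
      GF y = (1 - chiF rho R (dist y x)) • (↑(g' y) : X) + chiF rho R (dist y x) • Pt x y := by
    intro y x hx hyx
    have hex : ∃ x' : ↥C, (↑x' : X) ∈ Γ ∧ dist y x' < R := ⟨x, hx, hyx⟩
    simp only [hGFdef, dif_pos hex]
    have hxeq : hex.choose = x := huniq _ _ hex.choose_spec.1 hx y hex.choose_spec.2 hyx
    rw [hxeq]
  have hGF_out : ∀ y : ↥C, (∀ x : ↥C, (↑x : X) ∈ Γ → R ≤ dist y x) → GF y = ↑(g' y) := by
    intro y hy
    have hne : ¬ ∃ x : ↥C, (↑x : X) ∈ Γ ∧ dist y x < R := by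
      rintro ⟨x, hx, hd⟩
      exact absurd hd (not_lt.mpr (hy x hx))
    simp only [hGFdef, dif_neg hne]
  have hForm_far : ∀ (x y : ↥C), (↑x : X) ∈ Γ → R ≤ dist y x → GF y = ↑(g' y) →
      GF y = (1 - chiF rho R (dist y x)) • (↑(g' y) : X) + chiF rho R (dist y x) • Pt x y := by
    intro x y hx hyx hGFy
    rw [hGFy, chi_eq_zero hrhopos h8 hyx]
    simp
  -- the same-center estimate
  have est_same : ∀ (x y y' : ↥C), (↑x : X) ∈ Γ →
      GF y = (1 - chiF rho R (dist y x)) • (↑(g' y) : X) + chiF rho R (dist y x) • Pt x y →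
      GF y' = (1 - chiF rho R (dist y' x)) • (↑(g' y') : X) + chiF rho R (dist y' x) • Pt x y' →
      dist y' x ≤ dist y x →
      ‖GF y - GF y'‖ ≤ (1 + 3 * eps) * dist y y' := by
    intro x y y' hx hFy hFy' hle
    have ht'0 : (0:ℝ) ≤ dist y' x := dist_nonneg
    have hd0 : (0:ℝ) ≤ dist y y' := dist_nonneg
    have habs : |dist y x - dist y' x| ≤ dist y y' := abs_dist_sub_le y y' x
    have htd : dist y x - dist y' x ≤ dist y y' :=
      le_trans (le_abs_self _) habs
    have heps3 : (0:ℝ) ≤ 1 + 3 * eps := by positivity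
    have hchit1 : chiF rho R (dist y x) ≤ 1 := chi_le_one hrhopos h8 _
    have hchit0 : 0 ≤ chiF rho R (dist y x) := chi_nonneg hrhopos h8 _
    rcases le_total (dist y x) rho with hB1 | hB1
    · -- inner zone : both cutoffs equal one
      have hc1 : chiF rho R (dist y x) = 1 := chi_eq_one hrhopos h8 hB1
      have hc1' : chiF rho R (dist y' x) = 1 := chi_eq_one hrhopos h8 (le_trans hle hB1)
      rw [hFy, hFy', hc1, hc1']
      simp only [sub_self, zero_smul, one_smul, zero_add]
      have hdiff : Pt x y - Pt x y'
          = (mu * tentF del (dist y x) - mu * tentF del (dist y' x)) • eV x := by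
        simp only [hPtdef, sub_smul]
        abel
      rw [hdiff, norm_smul, heV x, mul_one]
      have h1 : |mu * tentF del (dist y x) - mu * tentF del (dist y' x)|
          = mu * |tentF del (dist y x) - tentF del (dist y' x)| := by
        rw [← mul_sub, abs_mul, abs_of_pos hmu0]
      rw [Real.norm_eq_abs, h1]
      have h2 : |tentF del (dist y x) - tentF del (dist y' x)| ≤ |dist y x - dist y' x| :=
        tent_lip hdel0 _ _
      have h4 : mu * |tentF del (dist y x) - tentF del (dist y' x)|
          ≤ |tentF del (dist y x) - tentF del (dist y' x)| := by
        nlinarith [abs_nonneg (tentF del (dist y x) - tentF del (dist y' x))]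
      have h5 : (0:ℝ) ≤ 3 * eps * dist y y' := by positivity
      linarith
    · rcases le_total (dist y' x) (2 * del) with hB2 | hB3
      · -- middle zone against the tent region
        have hc1' : chiF rho R (dist y' x) = 1 := chi_eq_one hrhopos h8 (by linarith)
        have htent : tentF del (dist y x) = 0 := tent_zero_of_ge hdel0 (by linarith)
        have hkey : GF y - GF y'
            = (1 - chiF rho R (dist y x)) • ((↑(g' y) : X) - ↑(g' x))
              - (mu * tentF del (dist y' x)) • eV x := by
          rw [hFy, hFy', hc1']
          simp only [hPtdef, htent, mul_zero, zero_smul, add_zero, sub_self, one_smul, zero_add,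
            sub_smul, smul_sub]
          abel
        rw [hkey]
        have htnn : 0 ≤ mu * tentF del (dist y' x) :=
          mul_nonneg (le_of_lt hmu0) (tent_nonneg hdel0 _)
        have hn1 : ‖(1 - chiF rho R (dist y x)) • ((↑(g' y) : X) - ↑(g' x))
              - (mu * tentF del (dist y' x)) • eV x‖
            ≤ (1 - chiF rho R (dist y x)) * dist y x + mu * tentF del (dist y' x) := by
          calc _ ≤ ‖(1 - chiF rho R (dist y x)) • ((↑(g' y) : X) - ↑(g' x))‖
                + ‖(mu * tentF del (dist y' x)) • eV x‖ := norm_sub_le _ _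
            _ ≤ (1 - chiF rho R (dist y x)) * dist y x + mu * tentF del (dist y' x) := by
                rw [norm_smul, norm_smul, heV x, mul_one, Real.norm_eq_abs, Real.norm_eq_abs,
                  abs_of_nonneg (by linarith), abs_of_nonneg htnn]
                have hstep : (1 - chiF rho R (dist y x)) * ‖(↑(g' y) : X) - ↑(g' x)‖
                    ≤ (1 - chiF rho R (dist y x)) * dist y x :=
                  mul_le_mul_of_nonneg_left (hgnorm y x) (by linarith)
                linarith
        have hn2 : mu * tentF del (dist y' x) ≤ rho / 4 := by
          have h1 := tent_le hdel0 (dist y' x)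
          have h2 := tent_nonneg hdel0 (dist y' x)
          have h3 : del = rho / 4 := hdeldef
          nlinarith
        have hb2 := chi_b2 hrhopos h8 hB1
        have hfin : (1 + 3 * eps) * (dist y x - rho / 2) ≤ (1 + 3 * eps) * dist y y' := by
          apply mul_le_mul_of_nonneg_left _ heps3
          have h6 : del = rho / 4 := hdeldef
          linarith
        rw [← hepsdef] at hb2
        linarith
      · -- outer zone : tents vanish
        have htent : tentF del (dist y x) = 0 := tent_zero_of_ge hdel0 (by linarith)
        have htent' : tentF del (dist y' x) = 0 := tent_zero_of_ge hdel0 hB3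
        have hkey : GF y - GF y'
            = (1 - chiF rho R (dist y x)) • ((↑(g' y) : X) - ↑(g' y'))
              - (chiF rho R (dist y' x) - chiF rho R (dist y x)) • ((↑(g' x) : X) - ↑(g' y')) := by
          rw [hFy, hFy']
          simp only [hPtdef, htent, htent', mul_zero, zero_smul, add_zero, sub_smul, one_smul,
            smul_sub]
          abel
        rw [hkey]
        have hmono : chiF rho R (dist y x) ≤ chiF rho R (dist y' x) := chi_anti hrhopos h8 hle
        have hmaster := chi_master hrhopos h8 ht'0 hle
        rw [← hepsdef] at hmaster
        have hn1 : ‖(1 - chiF rho R (dist y x)) • ((↑(g' y) : X) - ↑(g' y'))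
              - (chiF rho R (dist y' x) - chiF rho R (dist y x)) • ((↑(g' x) : X) - ↑(g' y'))‖
            ≤ (1 - chiF rho R (dist y x)) * dist y y'
              + (chiF rho R (dist y' x) - chiF rho R (dist y x)) * dist y' x := by
          calc _ ≤ ‖(1 - chiF rho R (dist y x)) • ((↑(g' y) : X) - ↑(g' y'))‖
                + ‖(chiF rho R (dist y' x) - chiF rho R (dist y x)) • ((↑(g' x) : X) - ↑(g' y'))‖ :=
              norm_sub_le _ _
            _ ≤ _ := by
                rw [norm_smul, norm_smul, Real.norm_eq_abs, Real.norm_eq_abs,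
                  abs_of_nonneg (by linarith), abs_of_nonneg (by linarith)]
                have h2 := hgnorm x y'
                rw [dist_comm x y'] at h2
                have hs1' : (1 - chiF rho R (dist y x)) * ‖(↑(g' y) : X) - ↑(g' y')‖
                    ≤ (1 - chiF rho R (dist y x)) * dist y y' :=
                  mul_le_mul_of_nonneg_left (hgnorm y y') (by linarith)
                have hs2' : (chiF rho R (dist y' x) - chiF rho R (dist y x))
                      * ‖(↑(g' x) : X) - ↑(g' y')‖
                    ≤ (chiF rho R (dist y' x) - chiF rho R (dist y x)) * dist y' x :=
                  mul_le_mul_of_nonneg_left h2 (by linarith)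
                linarith
        have hstep : (chiF rho R (dist y x) + 2 * eps) * (dist y x - dist y' x)
            ≤ (chiF rho R (dist y x) + 2 * eps) * dist y y' :=
          mul_le_mul_of_nonneg_left htd (by linarith)
        have hfin : (0:ℝ) ≤ eps * dist y y' := by positivity
        linarith
  -- distance of GF from g'
  have hGdist : ∀ y : ↥C, ‖GF y - ↑(g' y)‖ ≤ 2 * rho := by
    intro y
    by_cases hy : ∃ x : ↥C, (↑x : X) ∈ Γ ∧ dist y x < R
    · obtain ⟨x, hx, hyx⟩ := hy
      rw [hGF_ball y x hx hyx]
      have hdiff : (1 - chiF rho R (dist y x)) • (↑(g' y) : X)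
            + chiF rho R (dist y x) • Pt x y - ↑(g' y)
          = chiF rho R (dist y x) • (Pt x y - ↑(g' y)) := by
        rw [sub_smul, one_smul, smul_sub]; abel
      rw [hdiff, norm_smul, Real.norm_eq_abs, abs_of_nonneg (chi_nonneg hrhopos h8 _)]
      have ht0 : (0:ℝ) ≤ dist y x := dist_nonneg
      have hgxy : ‖(↑(g' x) : X) - ↑(g' y)‖ ≤ dist y x := by
        have := hgnorm x y
        rwa [dist_comm x y] at this
      rcases le_total (dist y x) rho with h | h
      · have h1 : ‖Pt x y - (↑(g' y) : X)‖ ≤ dist y x + del := by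
          have hpe : Pt x y - (↑(g' y) : X)
              = ((↑(g' x) : X) - ↑(g' y)) + (mu * tentF del (dist y x)) • eV x := by
            simp only [hPtdef]; abel
          rw [hpe]
          calc _ ≤ ‖(↑(g' x) : X) - ↑(g' y)‖ + ‖(mu * tentF del (dist y x)) • eV x‖ :=
              norm_add_le _ _
            _ ≤ dist y x + del := by
                rw [norm_smul, heV x, mul_one, Real.norm_eq_abs,
                  abs_of_nonneg (mul_nonneg (le_of_lt hmu0) (tent_nonneg hdel0 _))]
                have := tent_le hdel0 (dist y x)
                have := tent_nonneg hdel0 (dist y x)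
                nlinarith
        have hchi1 := chi_le_one hrhopos h8 (dist y x)
        have hchi0 := chi_nonneg hrhopos h8 (dist y x)
        have hPnn : 0 ≤ ‖Pt x y - (↑(g' y) : X)‖ := norm_nonneg _
        have hdd : del = rho / 4 := hdeldef
        have hstep : chiF rho R (dist y x) * ‖Pt x y - (↑(g' y) : X)‖
            ≤ 1 * ‖Pt x y - (↑(g' y) : X)‖ := mul_le_mul_of_nonneg_right hchi1 hPnn
        linarith
      · have htent : tentF del (dist y x) = 0 := tent_zero_of_ge hdel0 (by linarith)
        have h1 : ‖Pt x y - (↑(g' y) : X)‖ ≤ dist y x := by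
          have hpe : Pt x y - (↑(g' y) : X) = ((↑(g' x) : X) - ↑(g' y)) := by
            simp only [hPtdef, htent, mul_zero, zero_smul, add_zero]
          rw [hpe]; exact hgxy
        have h2 := chi_mul_le hrhopos h8 ht0
        have hchi0 := chi_nonneg hrhopos h8 (dist y x)
        have hstep : chiF rho R (dist y x) * ‖Pt x y - (↑(g' y) : X)‖
            ≤ chiF rho R (dist y x) * dist y x := mul_le_mul_of_nonneg_left h1 hchi0
        linarith
    · have hfar : ∀ x : ↥C, (↑x : X) ∈ Γ → R ≤ dist y x := by
        push_neg at hy; exact hy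
      rw [hGF_out y hfar]
      simp only [sub_self, norm_zero]
      positivity
  -- global Lipschitz estimate for GF
  have hGest : ∀ y y' : ↥C, ‖GF y - GF y'‖ ≤ (1 + 3 * eps) * dist y y' := by
    intro y y'
    have hd0 : (0:ℝ) ≤ dist y y' := dist_nonneg
    by_cases hy : ∃ x : ↥C, (↑x : X) ∈ Γ ∧ dist y x < R
    · by_cases hy' : ∃ x : ↥C, (↑x : X) ∈ Γ ∧ dist y' x < R
      · obtain ⟨x, hx, hyx⟩ := hy
        obtain ⟨x', hx', hyx'⟩ := hy'
        by_cases hxx : x = x'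
        · subst hxx
          have hFy := hGF_ball y x hx hyx
          have hFy' := hGF_ball y' x hx hyx'
          rcases le_total (dist y' x) (dist y x) with h | h
          · exact est_same x y y' hx hFy hFy' h
          · rw [norm_sub_rev, dist_comm]
            exact est_same x y' y hx hFy' hFy h
        · -- different centres
          have hcne : (↑x : X) ≠ ↑x' := fun hc => hxx (Subtype.ext hc)
          have hsepxx : s ≤ dist x x' := by
            have h := hΓ_sep _ hx _ hx' hcne
            rw [Subtype.dist_eq, dist_eq_norm, norm_sub_rev]
            exact h
          have hd2 : s / 2 ≤ dist y y' := by
            have t1 : dist x x' ≤ dist x y + dist y y' + dist y' x' := dist_triangle4 x y y' x'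
            have t2 : dist x y = dist y x := dist_comm x y
            have hRs : R = s / 4 := hRdef
            linarith
          have b1 := hGdist y
          have b2 := hGdist y'
          have hgy := hgnorm y y'
          have hnorm : ‖GF y - GF y'‖ ≤ 2 * rho + dist y y' + 2 * rho := by
            have hdec : GF y - GF y'
                = (GF y - ↑(g' y)) + ((↑(g' y) : X) - ↑(g' y')) + ((↑(g' y') : X) - GF y') := by
              abel
            rw [hdec]
            calc _ ≤ ‖GF y - ↑(g' y)‖ + ‖(↑(g' y) : X) - ↑(g' y')‖ + ‖(↑(g' y') : X) - GF y'‖ :=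
                norm_add₃_le
              _ ≤ 2 * rho + dist y y' + 2 * rho := by
                  have : ‖(↑(g' y') : X) - GF y'‖ = ‖GF y' - ↑(g' y')‖ := norm_sub_rev _ _
                  rw [this]
                  linarith
          have hrhod : 4 * rho ≤ 3 * eps * dist y y' := by
            have hkey : eps * (s / 2) = 2 * rho := by
              rw [hepsdef, hRdef]; field_simp; ring
            have h5 : eps * (s / 2) ≤ eps * dist y y' :=
              mul_le_mul_of_nonneg_left hd2 (le_of_lt hepspos)
            linarith
          linarith
      · obtain ⟨x, hx, hyx⟩ := hy
        have hfar : ∀ x'' : ↥C, (↑x'' : X) ∈ Γ → R ≤ dist y' x'' := by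
          push_neg at hy'; exact hy'
        have hFy := hGF_ball y x hx hyx
        have hFy' := hForm_far x y' hx (hfar x hx) (hGF_out y' hfar)
        have h : dist y x ≤ dist y' x := le_trans (le_of_lt hyx) (hfar x hx)
        rw [norm_sub_rev, dist_comm]
        exact est_same x y' y hx hFy' hFy h
    · by_cases hy' : ∃ x : ↥C, (↑x : X) ∈ Γ ∧ dist y' x < R
      · obtain ⟨x, hx, hyx'⟩ := hy'
        have hfar : ∀ x'' : ↥C, (↑x'' : X) ∈ Γ → R ≤ dist y x'' := by
          push_neg at hy; exact hy
        have hFy := hForm_far x y hx (hfar x hx) (hGF_out y hfar)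
        have hFy' := hGF_ball y' x hx hyx'
        have h : dist y' x ≤ dist y x := le_trans (le_of_lt hyx') (hfar x hx)
        exact est_same x y y' hx hFy hFy' h
      · have hfary : ∀ x : ↥C, (↑x : X) ∈ Γ → R ≤ dist y x := by
          push_neg at hy; exact hy
        have hfary' : ∀ x : ↥C, (↑x : X) ∈ Γ → R ≤ dist y' x := by
          push_neg at hy'; exact hy'
        rw [hGF_out y hfary, hGF_out y' hfary']
        have h1 := hgnorm y y'
        have h2 : (0:ℝ) ≤ 3 * eps * dist y y' := by positivity
        linarith

  -- membership of GF values
  have hGFC : ∀ y : ↥C, GF y ∈ C := by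
    intro y
    by_cases hy : ∃ x : ↥C, (↑x : X) ∈ Γ ∧ dist y x < R
    · obtain ⟨x, hx, hyx⟩ := hy
      rw [hGF_ball y x hx hyx]
      have hchi1 := chi_le_one hrhopos h8 (dist y x)
      have hchi0 := chi_nonneg hrhopos h8 (dist y x)
      exact hC_conv (g' y).2 (hPtC x y) (by linarith) hchi0 (by ring)
    · have hfar : ∀ x : ↥C, (↑x : X) ∈ Γ → R ≤ dist y x := by
        push_neg at hy; exact hy
      rw [hGF_out y hfar]
      exact (g' y).2
  -- the centre of the hole
  have hHmem : ∀ y : ↥C, (1 - bet) • GF y + bet • p₁ ∈ C := by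
    intro y
    exact hC_conv (hGFC y) hp₁C (by linarith) hbet0 (by ring)
  set Hfun : ↥C → ↥C := fun y => ⟨(1 - bet) • GF y + bet • p₁, hHmem y⟩ with hHfundef
  have hHdiff : ∀ y y' : ↥C, (↑(Hfun y) : X) - ↑(Hfun y') = (1 - bet) • (GF y - GF y') := by
    intro y y'
    simp only [hHfundef, smul_sub]
    abel
  have hHlip1 : ∀ y y' : ↥C, dist (Hfun y) (Hfun y') ≤ dist y y' := by
    intro y y'
    rw [Subtype.dist_eq, dist_eq_norm, hHdiff y y', norm_smul, Real.norm_eq_abs,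
      abs_of_nonneg (by linarith : (0:ℝ) ≤ 1 - bet)]
    have h1 := hGest y y'
    have h2 : (1 - bet) * ‖GF y - GF y'‖ ≤ (1 - bet) * ((1 + 3 * eps) * dist y y') :=
      mul_le_mul_of_nonneg_left h1 (by linarith)
    have h3 : (1 - bet) * ((1 + 3 * eps) * dist y y') ≤ 1 * dist y y' := by
      rw [← mul_assoc]
      apply mul_le_mul_of_nonneg_right _ dist_nonneg
      have hb4 : bet = 4 * eps := hbetdef
      rw [hb4]
      nlinarith [sq_nonneg eps, hepspos]
    linarith
  have hHlip : LipschitzWith 1 Hfun := by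
    apply LipschitzWith.of_dist_le_mul
    intro a b
    rw [NNReal.coe_one, one_mul]
    exact hHlip1 a b
  set HB : BoundedContinuousFunction ↥C ↥C :=
    ⟨⟨Hfun, hHlip.continuous⟩, ⟨D, fun a b => by
      rw [Subtype.dist_eq]
      exact hdiam _ _ (Hfun a).2 (Hfun b).2⟩⟩ with hHBdef
  have hHBcoe : ∀ y : ↥C, HB y = Hfun y := fun y => rfl
  set HM : NonexpMap C := ⟨HB, hHlip⟩ with hHMdef
  refine ⟨HM, ?_, ?_⟩
  · -- distance to g
    rw [Subtype.dist_eq]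
    rw [BoundedContinuousFunction.dist_le (by positivity)]
    intro y
    have hdec : (↑(Hfun y) : X) - ↑(g' y)
        = (GF y - ↑(g' y)) + bet • (p₁ - GF y) := by
      simp only [hHfundef, sub_smul, one_smul, smul_sub]
      abel
    have h1 : dist (Hfun y) (g' y) ≤ 2 * rho + bet * D := by
      rw [Subtype.dist_eq, dist_eq_norm, hdec]
      calc _ ≤ ‖GF y - ↑(g' y)‖ + ‖bet • (p₁ - GF y)‖ := norm_add_le _ _
        _ ≤ 2 * rho + bet * D := by
            rw [norm_smul, Real.norm_eq_abs, abs_of_nonneg hbet0]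
            have h2 := hGdist y
            have h3 : ‖p₁ - GF y‖ ≤ D := by
              rw [← dist_eq_norm]
              exact hdiam _ _ hp₁C (hGFC y)
            have h4 : bet * ‖p₁ - GF y‖ ≤ bet * D := mul_le_mul_of_nonneg_left h3 hbet0
            linarith
    have h5 : 2 * rho + bet * D ≤ r / 2 := by
      have e1 : rho ≤ r / 64 := by
        rw [hrhodef, div_le_div_iff₀ (by positivity) (by norm_num)]
        nlinarith [mul_le_mul_of_nonneg_left hsD (le_of_lt hr)]
      have e2 : bet * D = r / 4 := by
        rw [hbetdef, heps_eq]; field_simp; ring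
      linarith
    exact le_trans h1 h5
  · -- robustness of the hole
    intro f hf
    set c0 := (1 - lam) * s / (4096 * D) with hc0def
    have hcr : c0 * r = (1 - lam) * del / 16 := by
      rw [hc0def, hdeldef, hrhodef]; field_simp; ring
    apply le_csInf
    · exact ⟨LipScale (⇑(f.1)) ⟨p₁, hp₁C⟩ s, ⟨p₁, hp₁C⟩, hp₁, rfl⟩
    · rintro L ⟨x, hxΓ, rfl⟩
      -- the stretched witness near x
      set z := if (↑x : X) = p₁ then p₂ else p₁ with hzdef
      have hzΓ : z ∈ Γ := by
        rw [hzdef]; split_ifs <;> assumption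
      have hzx : (↑x : X) ≠ z := by
        rw [hzdef]; split_ifs with h
        · rw [h]; exact hp12
        · exact h
      have hsz : s ≤ ‖z - ↑x‖ := hΓ_sep _ hxΓ _ hzΓ hzx
      have hnz : (0:ℝ) < ‖z - (↑x : X)‖ := lt_of_lt_of_le hspos hsz
      set th := del / ‖z - (↑x : X)‖ with hthdef2
      have hth0 : 0 ≤ th := by rw [hthdef2]; positivity
      have hdels : del ≤ s := by
        have h8' := h8
        rw [hRdef] at h8'
        rw [hdeldef]; linarith
      have hth1 : th ≤ 1 := by
        rw [hthdef2, div_le_one hnz]; linarith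
      have hymem : (↑x : X) + th • (z - ↑x) ∈ C := by
        have hkey : (↑x : X) + th • (z - ↑x) = (1 - th) • (↑x : X) + th • z := by
          rw [sub_smul, one_smul, smul_sub]; abel
        rw [hkey]
        exact hC_conv x.2 (hΓC hzΓ) (by linarith) hth0 (by ring)
      set ystar : ↥C := ⟨(↑x : X) + th • (z - ↑x), hymem⟩ with hystardef
      have hyd : dist ystar x = del := by
        rw [Subtype.dist_eq, dist_eq_norm]
        simp only [hystardef]
        rw [add_sub_cancel_left, norm_smul, Real.norm_eq_abs, abs_of_nonneg hth0, hthdef2]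
        field_simp
      have hydR : dist ystar x < R := by
        rw [hyd, hdeldef]; linarith
      have hxxR : dist x x < R := by rw [dist_self]; exact hRpos
      -- value of GF at ystar and x
      have hGys : GF ystar = ↑(g' x) + (mu * del) • eV x := by
        rw [hGF_ball ystar x hxΓ hydR, hyd, chi_eq_one hrhopos h8 (by rw [hdeldef]; linarith)]
        simp only [hPtdef, sub_self, zero_smul, one_smul, zero_add]
        rw [hyd, tent_at_del hdel0]
      have hGx : GF x = ↑(g' x) := by
        rw [hGF_ball x x hxΓ hxxR, chi_eq_one hrhopos h8 (by rw [dist_self]; linarith)]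
        simp only [hPtdef, sub_self, zero_smul, one_smul, zero_add, dist_self]
        rw [tent_at_zero hdel0, mul_zero, zero_smul, add_zero]
      have hHdist : dist (Hfun ystar) (Hfun x) = (1 - bet) * (mu * del) := by
        rw [Subtype.dist_eq, dist_eq_norm, hHdiff ystar x, hGys, hGx]
        rw [add_sub_cancel_left]
        rw [norm_smul, norm_smul, heV x, mul_one, Real.norm_eq_abs, Real.norm_eq_abs,
          abs_of_nonneg (by linarith : (0:ℝ) ≤ 1 - bet),
          abs_of_nonneg (by positivity : (0:ℝ) ≤ mu * del)]
      -- f is close to HM pointwise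
      have hfH : ∀ y : ↥C, dist (f.1 y) (Hfun y) ≤ dist f HM := by
        intro y
        have h1 : dist (f.1 y) (HB y) ≤ dist f.1 HB :=
          BoundedContinuousFunction.dist_coe_le_dist y
        rw [Subtype.dist_eq, hHMdef]
        exact h1
      have hfHM : dist f HM < c0 * r := hf
      have hkey : (1 - bet) * (mu * del) - 2 * (c0 * r) ≤ dist (f.1 ystar) (f.1 x) := by
        have t1 : dist (Hfun ystar) (Hfun x)
            ≤ dist (Hfun ystar) (f.1 ystar) + dist (f.1 ystar) (f.1 x) + dist (f.1 x) (Hfun x) :=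
          dist_triangle4 _ _ _ _
        have t2 : dist (Hfun ystar) (f.1 ystar) ≤ c0 * r := by
          rw [dist_comm]; exact le_of_lt (lt_of_le_of_lt (hfH ystar) hfHM)
        have t3 : dist (f.1 x) (Hfun x) ≤ c0 * r :=
          le_of_lt (lt_of_le_of_lt (hfH x) hfHM)
        rw [hHdist] at t1
        linarith
      -- the ratio at the witness
      have hratio : lam + (1 - lam) / 4 ≤ dist (f.1 ystar) (f.1 x) / dist ystar x := by
        rw [hyd, le_div_iff₀ hdelpos]
        have hnum : (lam + (1 - lam) / 4) * del
            ≤ (1 - bet) * (mu * del) - 2 * (c0 * r) := by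
          rw [hcr]
          have hbm' : (mu - bet) * del ≤ (1 - bet) * (mu * del) := by
            have h := mul_nonneg (mul_nonneg hbet0 (by linarith : (0:ℝ) ≤ 1 - mu))
              (le_of_lt hdelpos)
            nlinarith [h]
          have hsc : (lam + (1 - lam) / 4 + 2 * ((1 - lam) / 16)) * del ≤ (mu - bet) * del := by
            apply mul_le_mul_of_nonneg_right _ (le_of_lt hdelpos)
            rw [hmudef]; linarith
          nlinarith [hbm', hsc]
        linarith [hkey]
      -- LipScale dominates the ratio
      have hLip : dist (f.1 ystar) (f.1 x) / dist ystar x ≤ LipScale (⇑(f.1)) x s := by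
        apply le_csSup
        · refine ⟨1, ?_⟩
          rintro v ⟨y, ⟨hy1, hy2⟩, rfl⟩
          have hfle : dist (f.1 y) (f.1 x) ≤ dist y x := by
            have := f.2.dist_le_mul y x
            simpa using this
          rw [div_le_one hy1]
          exact hfle
        · refine ⟨ystar, ⟨?_, ?_⟩, rfl⟩
          · rw [hyd]; exact hdelpos
          · rw [hyd]; exact hdels
      linarith

end main

/-- Let `C` be a bounded, convex, non-empty subset of a normed space,
`s ∈ (0,1)`, `Γ ⊆ C` an `s`-separated set with at least two points and `λ ∈ (0,1)`.
Then `N = {f ∈ M(C) : inf_{x ∈ Γ} Lip(f,x,s) ≤ λ}` is lower porous at every point of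
`M(C)`. -/
theorem stmt_10 {X : Type*} [NormedAddCommGroup X] [NormedSpace ℝ X]
    (C : Set X) (hC_bdd : Bornology.IsBounded C) (hC_conv : Convex ℝ C)
    (hC_ne : C.Nonempty)
    (s : ℝ) (hs : s ∈ Set.Ioo (0 : ℝ) 1)
    (Γ : Set X) (hΓC : Γ ⊆ C)
    (hΓ_sep : ∀ x ∈ Γ, ∀ y ∈ Γ, x ≠ y → s ≤ ‖y - x‖)
    (hΓ_nontriv : Γ.Nontrivial)
    (lam : ℝ) (hlam : lam ∈ Set.Ioo (0 : ℝ) 1) :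
    ∀ g : NonexpMap C,
      IsLowerPorousAt
        {f : NonexpMap C |
          sInf {L : ℝ | ∃ x : ↥C, (x : X) ∈ Γ ∧ L = LipScale (⇑(f.1)) x s} ≤ lam} g := by
  classical
  intro g
  set Nset : Set (NonexpMap C) :=
    {f : NonexpMap C |
      sInf {L : ℝ | ∃ x : ↥C, (x : X) ∈ Γ ∧ L = LipScale (⇑(f.1)) x s} ≤ lam} with hNdef
  obtain ⟨p₁, hp₁, p₂, hp₂, hp12⟩ := hΓ_nontriv
  have hp₁C : p₁ ∈ C := hΓC hp₁
  have hp₂C : p₂ ∈ C := hΓC hp₂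
  have hspos : 0 < s := hs.1
  have hlam0 : 0 < lam := hlam.1
  have hlam1 : lam < 1 := hlam.2
  have hsep12 : s ≤ ‖p₂ - p₁‖ := hΓ_sep p₁ hp₁ p₂ hp₂ hp12
  set D := Metric.diam C with hDdef
  have hsD : s ≤ D := by
    have h1 : dist p₂ p₁ ≤ D := Metric.dist_le_diam_of_mem hC_bdd hp₂C hp₁C
    rw [dist_eq_norm] at h1; linarith
  have hDpos : 0 < D := lt_of_lt_of_le hspos hsD
  set r0 := D * (1 - lam) / 2 with hr0def
  have hr0pos : 0 < r0 := by
    rw [hr0def]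
    apply div_pos (mul_pos hDpos (by linarith)) (by norm_num)
  set c0 := (1 - lam) * s / (4096 * D) with hc0def
  have hc0pos : 0 < c0 := by
    rw [hc0def]
    apply div_pos (mul_pos (by linarith) hspos) (by positivity)
  have hc0half : c0 ≤ 1 / 2 := by
    rw [hc0def, div_le_div_iff₀ (by positivity) (by norm_num)]
    nlinarith
  -- the constant map, a member of Nset
  set cN : NonexpMap C :=
    ⟨BoundedContinuousFunction.const ↥C ⟨p₁, hp₁C⟩,
      (LipschitzWith.const (⟨p₁, hp₁C⟩ : ↥C)).weaken zero_le_one⟩ with hcNdef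
  have hcN_mem : cN ∈ Nset := by
    rw [hNdef, Set.mem_setOf_eq]
    set xbar : ↥C := ⟨p₁, hp₁C⟩ with hxbardef
    have hLip0 : LipScale (⇑(cN.1)) xbar s ≤ lam := by
      apply Real.sSup_le _ (le_of_lt hlam0)
      rintro v ⟨y, ⟨hy1, hy2⟩, rfl⟩
      have hv : dist ((cN.1) y) ((cN.1) xbar) = 0 := by
        have hcc : (cN.1) y = (cN.1) xbar := rfl
        rw [hcc, dist_self]
      simp only []
      rw [hv, zero_div]
      exact le_of_lt hlam0
    have hbelow : BddBelow {L : ℝ | ∃ x : ↥C, (x : X) ∈ Γ ∧ L = LipScale (⇑(cN.1)) x s} := by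
      refine ⟨0, ?_⟩
      rintro L ⟨x, hx, rfl⟩
      apply Real.sSup_nonneg
      rintro v ⟨y, hy, rfl⟩
      positivity
    have hmem : LipScale (⇑(cN.1)) xbar s
        ∈ {L : ℝ | ∃ x : ↥C, (x : X) ∈ Γ ∧ L = LipScale (⇑(cN.1)) x s} := ⟨xbar, hp₁, rfl⟩
    exact le_trans (csInf_le hbelow hmem) hLip0
  -- bounded above
  have hbdd : ∀ rr : ℝ, BddAbove (porHoles Nset g rr) := by
    intro rr
    refine ⟨dist cN g + rr, ?_⟩
    rintro s' ⟨hs'0, y, hy⟩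
    have h1 : cN ∉ Metric.ball y s' := fun hc => (hy hc).2 hcN_mem
    have h2 : y ∈ Metric.ball g rr := (hy (Metric.mem_ball_self hs'0)).1
    have h3 : s' ≤ dist cN y := not_lt.mp (fun hc => h1 (Metric.mem_ball.mpr hc))
    have h4 : dist cN y ≤ dist cN g + dist g y := dist_triangle cN g y
    rw [Metric.mem_ball] at h2
    rw [dist_comm g y] at h4
    linarith
  -- the holes
  have hole : ∀ rr : ℝ, 0 < rr → rr ≤ r0 → c0 * rr ∈ porHoles Nset g rr := by
    intro rr hrr hrr0
    obtain ⟨H, hH1, hH2⟩ := exists_hole C hC_bdd hC_conv s hs Γ hΓC hΓ_sep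
      ⟨p₁, hp₁, p₂, hp₂, hp12⟩ lam hlam g rr hrr (by rw [hr0def, hDdef] at hrr0; exact hrr0)
    refine ⟨by positivity, H, ?_⟩
    intro f hf
    rw [Metric.mem_ball] at hf
    constructor
    · rw [Metric.mem_ball]
      have h1 : dist f g ≤ dist f H + dist H g := dist_triangle f H g
      have h3 : c0 * rr ≤ (1 / 2) * rr := mul_le_mul_of_nonneg_right hc0half (le_of_lt hrr)
      linarith
    · intro hfN
      rw [hNdef, Set.mem_setOf_eq] at hfN
      have h5 := hH2 f (by rw [hc0def, hDdef] at hf; exact hf)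
      linarith
  constructor
  · -- non-emptiness of the holes
    intro rr hrr
    have hr'0 : 0 < min rr r0 := lt_min hrr hr0pos
    obtain ⟨hpos, H, hsub⟩ := hole (min rr r0) hr'0 (min_le_right _ _)
    refine ⟨c0 * min rr r0, hpos, H, ?_⟩
    intro f hf
    have h1 := hsub hf
    exact ⟨Metric.ball_subset_ball (min_le_left rr r0) h1.1, h1.2⟩
  · -- liminf bound
    have hev : ∀ᶠ rr in nhdsWithin (0:ℝ) (Set.Ioi 0),
        (c0 : EReal) ≤ (((fun t => t) (porGamma Nset g rr) / rr : ℝ) : EReal) := by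
      filter_upwards [Ioc_mem_nhdsGT_of_mem (Set.mem_Ico.mpr ⟨le_refl (0:ℝ), hr0pos⟩)] with rr hrr
      obtain ⟨hrr0, hrrle⟩ := hrr
      have hmem := hole rr hrr0 hrrle
      have hsup : c0 * rr ≤ porGamma Nset g rr := le_csSup (hbdd rr) hmem
      have hdivle : c0 ≤ porGamma Nset g rr / rr := by
        rw [le_div_iff₀ hrr0]; linarith
      exact_mod_cast hdivle
    have hlim := Filter.le_liminf_of_le (by isBoundedDefault) hev
    refine lt_of_lt_of_le ?_ hlim
    exact_mod_cast hc0pos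
end

section
/- Let X be a Banach space, let C ⊆ X be a bounded, convex, non-empty set containing at least two points, let x ∈ C, and let M = M(C) denote the space of non-expansive mappings C → C equipped with the supremum metric. Then the set V_x := {f ∈ M : Lip(f,x) < 1} is σ-lower porous in M. -/
open Filter Metric Set Topology

private lemma master_ineq {b p1 p2 : ℝ} (hb : 0 < b) (h1 : 0 ≤ p1) (h12 : p1 ≤ p2) :
    (b / (p1 + b) - b / (p2 + b)) * p2
      + |b / (p1 + b) * min p1 b - b / (p2 + b) * min p2 b|
      ≤ b / (p1 + b) * (p2 - p1) := by
  have hp1 : 0 < p1 + b := by linarith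
  have hp2 : 0 < p2 + b := by linarith
  have hc1 : b / (p1 + b) * (p1 + b) = b := div_mul_cancel₀ _ (ne_of_gt hp1)
  have hc2 : b / (p2 + b) * (p2 + b) = b := div_mul_cancel₀ _ (ne_of_gt hp2)
  set c1 := b / (p1 + b) with hc1def
  set c2 := b / (p2 + b) with hc2def
  have hc1pos : 0 < c1 := div_pos hb hp1
  have hc2pos : 0 < c2 := div_pos hb hp2
  have hc1' : c1 * p1 + c1 * b = b := by linear_combination hc1
  have hc2' : c2 * p2 + c2 * b = b := by linear_combination hc2
  have hle : c2 ≤ c1 := by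
    rw [hc1def, hc2def, div_le_div_iff₀ hp2 hp1]
    nlinarith
  rcases le_total p2 b with h2b | h2b
  · have h1b : p1 ≤ b := h12.trans h2b
    rw [min_eq_left h1b, min_eq_left h2b]
    have hE : c1 * p1 ≤ c2 * p2 := by
      rw [hc1def, hc2def, div_mul_eq_mul_div, div_mul_eq_mul_div, div_le_div_iff₀ hp1 hp2]
      nlinarith [mul_nonneg (mul_nonneg hb.le hb.le) (sub_nonneg.2 h12)]
    rw [abs_of_nonpos (by linarith : c1 * p1 - c2 * p2 ≤ 0)]
    ring_nf
    nlinarith []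
  · rcases le_total p1 b with h1b | h1b
    · rw [min_eq_left h1b, min_eq_right h2b]
      have key1 : c1 * p1 ≤ c1 * b := mul_le_mul_of_nonneg_left h1b hc1pos.le
      have key2 : c2 * b ≤ c2 * p2 := mul_le_mul_of_nonneg_left h2b hc2pos.le
      have habs : |c1 * p1 - c2 * b| ≤ c2 * p2 - c1 * p1 :=
        abs_le.2 ⟨by linarith, by linarith⟩
      have hring : (c1 - c2) * p2 + (c2 * p2 - c1 * p1) = c1 * (p2 - p1) := by ring
      linarith
    · rw [min_eq_right h1b, min_eq_right (h1b.trans h12)]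
      have habs : |c1 * b - c2 * b| = c1 * b - c2 * b :=
        abs_of_nonneg (by nlinarith : (0:ℝ) ≤ c1 * b - c2 * b)
      rw [habs]
      nlinarith [hc1', hc2']

private lemma stretch_numeric {ε r : ℝ} (hε0 : 0 < ε) (hε1 : ε ≤ 1) (hr0 : 0 < r) :
    (1 - ε / 2) * (ε * r / 8) ≤
      (r / 2) / (ε * r / 8 + r / 2) * (ε * r / 8)
        - (1 - (r / 2) / (ε * r / 8 + r / 2)) * ((1 - ε) * (ε * r / 8)) := by
  set t : ℝ := ε * r / 8 with ht_def
  set b : ℝ := r / 2 with hb_def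
  have ht0 : 0 < t := by positivity
  have hb0 : 0 < b := by positivity
  have htb0 : 0 < t + b := by linarith
  set ct : ℝ := b / (t + b) with hct_def
  have hct1 : ct ≤ 1 := by rw [hct_def, div_le_one htb0]; linarith
  have hct_ub : 1 - ct ≤ ε / 4 := by
    have heq : 1 - ct = t / (t + b) := by rw [hct_def]; field_simp; ring
    rw [heq, div_le_iff₀ htb0]
    have h1 : t = ε * b / 4 := by rw [ht_def, hb_def]; ring
    nlinarith [sq_nonneg ε, mul_pos hε0 hb0]
  have h3 : (1 - ct) * (2 - ε) ≤ ε / 2 := by nlinarith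
  have h4 : t * ((1 - ct) * (2 - ε)) ≤ t * (ε / 2) :=
    mul_le_mul_of_nonneg_left h3 ht0.le
  nlinarith [h4]

private lemma hole_lemma {X : Type*} [NormedAddCommGroup X] [NormedSpace ℝ X]
    {C : Set X} (hC_conv : Convex ℝ C) {x : X} (hx : x ∈ C)
    {u0 : X} (hu0 : u0 ∈ C) (hu0x : u0 ≠ x)
    {D0 : ℝ} (hD0 : ∀ ⦃z : X⦄, z ∈ C → ∀ ⦃w : X⦄, w ∈ C → dist z w ≤ D0)
    (f : NonexpMap C) {ε r : ℝ} (hε0 : 0 < ε) (hε1 : ε ≤ 1)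
    (hr0 : 0 < r) (hrL : r ≤ ‖u0 - x‖)
    (hflat : ∀ y : ↥C, dist y (⟨x, hx⟩ : ↥C) ≤ ε * r / 8 →
      dist (f.1 y) (f.1 ⟨x, hx⟩) ≤ (1 - ε) * dist y (⟨x, hx⟩ : ↥C)) :
    ∃ g : NonexpMap C, dist g f ≤ r / 2 ∧ ∃ ystar : ↥C,
      dist ystar (⟨x, hx⟩ : ↥C) = ε * r / 8 ∧
      (1 - ε / 2) * (ε * r / 8) ≤ dist (g.1 ystar) (g.1 ⟨x, hx⟩) := by
  set xh : ↥C := (⟨x, hx⟩ : ↥C) with hxh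
  set t : ℝ := ε * r / 8 with ht_def
  have ht0 : 0 < t := by positivity
  set b : ℝ := r / 2 with hb_def
  have hb0 : 0 < b := by positivity
  have htb : t ≤ b := by rw [ht_def, hb_def]; nlinarith
  set L : ℝ := ‖u0 - x‖ with hL_def
  have hL0 : 0 < L := norm_pos_iff.2 (sub_ne_zero.2 hu0x)
  -- abbreviation for the value of f at xh
  set vx : X := (f.1 xh : X) with hvx
  have hvxC : vx ∈ C := (f.1 xh).2
  -- nonexpansiveness of f, in norm form
  have hFnorm : ∀ z w : ↥C, ‖(f.1 z : X) - (f.1 w : X)‖ ≤ dist z w := by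
    intro z w
    have h := f.2.dist_le_mul z w
    rw [NNReal.coe_one, one_mul] at h
    rwa [Subtype.dist_eq (f.1 z) (f.1 w), dist_eq_norm] at h
  -- choose a far point q
  obtain ⟨q, hqC, hqb⟩ : ∃ q ∈ C, b ≤ ‖q - vx‖ := by
    have htri : L ≤ ‖u0 - vx‖ + ‖x - vx‖ := by
      have h := dist_triangle u0 vx x
      rw [dist_eq_norm, dist_eq_norm, dist_eq_norm] at h
      rw [hL_def]
      calc ‖u0 - x‖ ≤ ‖u0 - vx‖ + ‖vx - x‖ := h
        _ = ‖u0 - vx‖ + ‖x - vx‖ := by rw [norm_sub_rev vx x]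
    rcases le_total (L / 2) ‖u0 - vx‖ with h | h
    · exact ⟨u0, hu0, by rw [hb_def]; linarith⟩
    · exact ⟨x, hx, by rw [hb_def]; linarith⟩
  set Q : ℝ := ‖q - vx‖ with hQ_def
  have hQ0 : 0 < Q := lt_of_lt_of_le hb0 hqb
  -- the perturbed map, X-valued
  set G : ↥C → X := fun z =>
    (1 - b / (dist z xh + b)) • ((f.1 z : X)) +
      (b / (dist z xh + b)) • (vx + (min (dist z xh) b / Q) • (q - vx)) with hG_def
  have hp_nonneg : ∀ z : ↥C, (0:ℝ) ≤ dist z xh := fun z => dist_nonneg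
  have hc_pos : ∀ z : ↥C, 0 < b / (dist z xh + b) :=
    fun z => div_pos hb0 (by linarith [hp_nonneg z])
  have hc_le1 : ∀ z : ↥C, b / (dist z xh + b) ≤ 1 := by
    intro z
    rw [div_le_one (by linarith [hp_nonneg z])]
    linarith [hp_nonneg z]
  have harmC : ∀ z : ↥C, vx + (min (dist z xh) b / Q) • (q - vx) ∈ C := by
    intro z
    have h0 : 0 ≤ min (dist z xh) b / Q := div_nonneg (le_min (hp_nonneg z) hb0.le) hQ0.le
    have h1 : min (dist z xh) b / Q ≤ 1 := by
      rw [div_le_one hQ0]; exact le_trans (min_le_right _ _) hqb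
    have hrw : vx + (min (dist z xh) b / Q) • (q - vx)
        = (1 - min (dist z xh) b / Q) • vx + (min (dist z xh) b / Q) • q := by
      module
    rw [hrw]
    exact hC_conv hvxC hqC (by linarith) h0 (by ring)
  have hGmem : ∀ z : ↥C, G z ∈ C := by
    intro z
    have := hc_pos z; have := hc_le1 z
    exact hC_conv (f.1 z).2 (harmC z) (by linarith) (by linarith) (by ring)
  -- key Lipschitz estimate
  have hkey : ∀ z1 z2 : ↥C, dist z1 xh ≤ dist z2 xh → ‖G z1 - G z2‖ ≤ dist z1 z2 := by
    intro z1 z2 h12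
    have hid : G z1 - G z2 =
        (1 - b / (dist z1 xh + b)) • ((f.1 z1 : X) - (f.1 z2 : X))
        - (b / (dist z1 xh + b) - b / (dist z2 xh + b)) • ((f.1 z2 : X) - vx)
        + ((b / (dist z1 xh + b) * min (dist z1 xh) b
            - b / (dist z2 xh + b) * min (dist z2 xh) b) / Q) • (q - vx) := by
      simp only [hG_def]
      module
    have hp1 : (0:ℝ) ≤ dist z1 xh := hp_nonneg z1
    have hmain := master_ineq hb0 hp1 h12
    have hc1pos := hc_pos z1
    have hc1le1 := hc_le1 z1
    have hcmono : b / (dist z2 xh + b) ≤ b / (dist z1 xh + b) := by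
      rw [div_le_div_iff₀ (by linarith [hp_nonneg z2]) (by linarith)]
      nlinarith [hp_nonneg z2]
    have hUb : ‖(f.1 z1 : X) - (f.1 z2 : X)‖ ≤ dist z1 z2 := hFnorm z1 z2
    have hWb : ‖(f.1 z2 : X) - vx‖ ≤ dist z2 xh := hFnorm z2 xh
    have hd21 : dist z2 xh - dist z1 xh ≤ dist z1 z2 := by
      have h := abs_dist_sub_le z2 z1 xh
      have h2 := le_abs_self (dist z2 xh - dist z1 xh)
      calc dist z2 xh - dist z1 xh ≤ |dist z2 xh - dist z1 xh| := h2
        _ ≤ dist z2 z1 := h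
        _ = dist z1 z2 := dist_comm _ _
    rw [hid]
    have step1 : ‖(1 - b / (dist z1 xh + b)) • ((f.1 z1 : X) - (f.1 z2 : X))
        - (b / (dist z1 xh + b) - b / (dist z2 xh + b)) • ((f.1 z2 : X) - vx)
        + ((b / (dist z1 xh + b) * min (dist z1 xh) b
            - b / (dist z2 xh + b) * min (dist z2 xh) b) / Q) • (q - vx)‖
        ≤ (1 - b / (dist z1 xh + b)) * dist z1 z2
          + (b / (dist z1 xh + b) - b / (dist z2 xh + b)) * dist z2 xh
          + |b / (dist z1 xh + b) * min (dist z1 xh) b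
              - b / (dist z2 xh + b) * min (dist z2 xh) b| := by
      refine le_trans (norm_add_le _ _) ?_
      have hA : ‖(1 - b / (dist z1 xh + b)) • ((f.1 z1 : X) - (f.1 z2 : X))
          - (b / (dist z1 xh + b) - b / (dist z2 xh + b)) • ((f.1 z2 : X) - vx)‖
          ≤ (1 - b / (dist z1 xh + b)) * dist z1 z2
            + (b / (dist z1 xh + b) - b / (dist z2 xh + b)) * dist z2 xh := by
        refine le_trans (norm_sub_le _ _) ?_
        rw [norm_smul, norm_smul, Real.norm_eq_abs, Real.norm_eq_abs,
          abs_of_nonneg (by linarith : (0:ℝ) ≤ 1 - b / (dist z1 xh + b)),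
          abs_of_nonneg (by linarith : (0:ℝ) ≤ b / (dist z1 xh + b) - b / (dist z2 xh + b))]
        exact add_le_add (mul_le_mul_of_nonneg_left hUb (by linarith))
          (mul_le_mul_of_nonneg_left hWb (by linarith))
      have hB : ‖((b / (dist z1 xh + b) * min (dist z1 xh) b
            - b / (dist z2 xh + b) * min (dist z2 xh) b) / Q) • (q - vx)‖
          = |b / (dist z1 xh + b) * min (dist z1 xh) b
              - b / (dist z2 xh + b) * min (dist z2 xh) b| := by
        rw [norm_smul, Real.norm_eq_abs, abs_div, abs_of_pos hQ0, ← hQ_def]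
        exact div_mul_cancel₀ _ hQ0.ne'
      rw [hB]
      linarith
    refine le_trans step1 ?_
    have hlast : b / (dist z1 xh + b) * (dist z2 xh - dist z1 xh)
        ≤ b / (dist z1 xh + b) * dist z1 z2 :=
      mul_le_mul_of_nonneg_left hd21 hc1pos.le
    linarith
  -- the perturbed map as a NonexpMap
  have hGlip : LipschitzWith 1 (fun z : ↥C => (⟨G z, hGmem z⟩ : ↥C)) := by
    apply LipschitzWith.of_dist_le_mul
    intro z1 z2
    rw [NNReal.coe_one, one_mul, Subtype.dist_eq, dist_eq_norm]
    rcases le_total (dist z1 xh) (dist z2 xh) with h | h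
    · exact hkey z1 z2 h
    · rw [norm_sub_rev, dist_comm]
      exact hkey z2 z1 h
  set gmap : ↥C → ↥C := fun z => (⟨G z, hGmem z⟩ : ↥C) with hgmap
  set gB : BoundedContinuousFunction ↥C ↥C :=
    BoundedContinuousFunction.mkOfBound ⟨gmap, hGlip.continuous⟩ D0
      (fun z1 z2 => by
        rw [Subtype.dist_eq]
        exact hD0 (hGmem z1) (hGmem z2)) with hgB
  have hgBcoe : ⇑gB = gmap := rfl
  set g : NonexpMap C := ⟨gB, by rw [hgBcoe]; exact hGlip⟩ with hg
  refine ⟨g, ?_, ?_⟩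
  · -- distance bound
    rw [Subtype.dist_eq]
    show dist gB f.1 ≤ r / 2
    rw [BoundedContinuousFunction.dist_le (by positivity)]
    intro z
    have : dist (gB z) (f.1 z) = ‖G z - (f.1 z : X)‖ := by
      rw [hgBcoe, Subtype.dist_eq, dist_eq_norm]
    rw [this]
    have hid2 : G z - (f.1 z : X)
        = (b / (dist z xh + b)) • ((vx - (f.1 z : X)) + (min (dist z xh) b / Q) • (q - vx)) := by
      simp only [hG_def]
      module
    rw [hid2, norm_smul, Real.norm_eq_abs, abs_of_pos (hc_pos z)]
    have hinner : ‖(vx - (f.1 z : X)) + (min (dist z xh) b / Q) • (q - vx)‖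
        ≤ dist z xh + b := by
      refine le_trans (norm_add_le _ _) ?_
      have h1 : ‖vx - (f.1 z : X)‖ ≤ dist z xh := by
        rw [norm_sub_rev]; exact hFnorm z xh
      have h2 : ‖(min (dist z xh) b / Q) • (q - vx)‖ ≤ b := by
        rw [norm_smul, Real.norm_eq_abs, abs_div, abs_of_pos hQ0, ← hQ_def,
          div_mul_cancel₀ _ hQ0.ne']
        rw [abs_of_nonneg (le_min (hp_nonneg z) hb0.le)]
        exact min_le_right _ _
      linarith
    calc b / (dist z xh + b) * ‖(vx - (f.1 z : X)) + (min (dist z xh) b / Q) • (q - vx)‖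
        ≤ b / (dist z xh + b) * (dist z xh + b) :=
          mul_le_mul_of_nonneg_left hinner (hc_pos z).le
      _ = b := div_mul_cancel₀ _ (by linarith [hp_nonneg z] : dist z xh + b ≠ 0)
      _ ≤ r / 2 := by rw [hb_def]
  · -- the witness point and the stretch estimate
    have hθ0 : (0:ℝ) ≤ t / L := div_nonneg ht0.le hL0.le
    have htL : t ≤ L := by
      have : t ≤ r := by rw [ht_def]; nlinarith
      linarith
    have hθ1 : t / L ≤ 1 := by rw [div_le_one hL0]; exact htL
    have hymem : x + (t / L) • (u0 - x) ∈ C := by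
      have hrw : x + (t / L) • (u0 - x) = (1 - t / L) • x + (t / L) • u0 := by module
      rw [hrw]
      exact hC_conv hx hu0 (by linarith) hθ0 (by ring)
    set ystar : ↥C := ⟨x + (t / L) • (u0 - x), hymem⟩ with hystar
    have hyd : dist ystar xh = t := by
      rw [Subtype.dist_eq, dist_eq_norm]
      show ‖x + (t / L) • (u0 - x) - x‖ = t
      rw [add_sub_cancel_left, norm_smul, Real.norm_eq_abs, abs_of_nonneg hθ0, ← hL_def]
      field_simp
    refine ⟨ystar, hyd, ?_⟩
    -- value at xh
    have hGx : G xh = vx := by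
      show (1 - b / (dist xh xh + b)) • ((f.1 xh : X)) +
        (b / (dist xh xh + b)) • (vx + (min (dist xh xh) b / Q) • (q - vx)) = vx
      rw [dist_self, zero_add, div_self hb0.ne', sub_self, zero_smul, zero_add, one_smul,
        min_eq_left hb0.le, zero_div, zero_smul, add_zero]
    have hdist_eq : dist (g.1 ystar) (g.1 xh) = ‖G ystar - vx‖ := by
      have : dist (g.1 ystar) (g.1 xh) = dist (gmap ystar) (gmap xh) := rfl
      rw [this, Subtype.dist_eq, dist_eq_norm]
      show ‖G ystar - G xh‖ = ‖G ystar - vx‖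
      rw [hGx]
    rw [hdist_eq]
    set ct : ℝ := b / (t + b) with hct_def
    have hct0 : 0 < ct := div_pos hb0 (by linarith)
    have hct1 : ct ≤ 1 := by rw [hct_def, div_le_one (by linarith)]; linarith
    have harm : G ystar - vx
        = (1 - ct) • ((f.1 ystar : X) - vx) + (ct * (t / Q)) • (q - vx) := by
      simp only [hG_def, hyd, min_eq_left htb, hct_def]
      module
    have hBn : ‖(ct * (t / Q)) • (q - vx)‖ = ct * t := by
      rw [norm_smul, Real.norm_eq_abs, ← hQ_def,
        abs_of_nonneg (by positivity : (0:ℝ) ≤ ct * (t / Q))]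
      field_simp
    have hAn : ‖(1 - ct) • ((f.1 ystar : X) - vx)‖ ≤ (1 - ct) * ((1 - ε) * t) := by
      rw [norm_smul, Real.norm_eq_abs, abs_of_nonneg (by linarith : (0:ℝ) ≤ 1 - ct)]
      refine mul_le_mul_of_nonneg_left ?_ (by linarith)
      have hfl := hflat ystar (by rw [hyd])
      rw [hyd] at hfl
      rwa [Subtype.dist_eq, dist_eq_norm] at hfl
    have hlow : ct * t - (1 - ct) * ((1 - ε) * t) ≤ ‖G ystar - vx‖ := by
      rw [harm]
      have h := abs_norm_sub_norm_le
        ((1 - ct) • ((f.1 ystar : X) - vx) + (ct * (t / Q)) • (q - vx))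
        ((ct * (t / Q)) • (q - vx))
      rw [add_sub_cancel_right] at h
      have h2 := (abs_le.1 h).1
      rw [hBn] at h2
      linarith [hAn, h2]
    -- numeric estimate
    have hnum := stretch_numeric hε0 hε1 hr0
    rw [← ht_def, ← hb_def, ← hct_def] at hnum
    linarith [hnum, hlow]

/-- Let `C` be a bounded, convex, nontrivial subset of a Banach space
and `x ∈ C`.  Then `V_x = {f ∈ M(C) : Lip(f,x) < 1}` is σ-lower porous in `M(C)`. -/
theorem stmt_11 {X : Type*} [NormedAddCommGroup X] [NormedSpace ℝ X] [CompleteSpace X]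
    (C : Set X) (hC_bdd : Bornology.IsBounded C) (hC_conv : Convex ℝ C)
    (hC_nontriv : C.Nontrivial) (x : X) (hx : x ∈ C) :
    IsSigmaLowerPorous {f : NonexpMap C | LipPt (⇑(f.1)) ⟨x, hx⟩ < 1} := by
  classical
  obtain ⟨D0, hD0⟩ := Metric.isBounded_iff.mp hC_bdd
  obtain ⟨q1, hq1, q2, hq2, hq12⟩ := hC_nontriv
  obtain ⟨u0, hu0C, hu0x⟩ : ∃ u0 ∈ C, u0 ≠ x := by
    by_cases h : q1 = x
    · exact ⟨q2, hq2, fun hh => hq12 (h.trans hh.symm)⟩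
    · exact ⟨q1, hq1, h⟩
  set xh : ↥C := (⟨x, hx⟩ : ↥C) with hxh
  set L : ℝ := ‖u0 - x‖ with hL
  have hL0 : 0 < L := norm_pos_iff.2 (sub_ne_zero.2 hu0x)
  -- points on the segment from x towards u0, at all small scales
  have hseg : ∀ r : ℝ, 0 < r → ∃ y : ↥C, 0 < dist y xh ∧ dist y xh ≤ r := by
    intro r hr
    have hm0 : 0 < min r L := lt_min hr hL0
    have hθ0 : (0:ℝ) ≤ min r L / L := by positivity
    have hθ1 : min r L / L ≤ 1 := by
      rw [div_le_one hL0]; exact min_le_right _ _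
    have hmem : x + (min r L / L) • (u0 - x) ∈ C := by
      have hrw : x + (min r L / L) • (u0 - x)
          = (1 - min r L / L) • x + (min r L / L) • u0 := by module
      rw [hrw]; exact hC_conv hx hu0C (by linarith) hθ0 (by ring)
    have hd : dist (⟨x + (min r L / L) • (u0 - x), hmem⟩ : ↥C) xh = min r L := by
      rw [Subtype.dist_eq, dist_eq_norm]
      show ‖x + (min r L / L) • (u0 - x) - x‖ = min r L
      rw [add_sub_cancel_left, norm_smul, Real.norm_eq_abs, abs_of_nonneg hθ0, ← hL]
      field_simp
    exact ⟨⟨x + (min r L / L) • (u0 - x), hmem⟩, by rw [hd]; exact hm0,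
      by rw [hd]; exact min_le_left _ _⟩
  -- basic facts about LipScale
  have hbddA : ∀ (w : NonexpMap C) (rr : ℝ),
      BddAbove ((fun y : ↥C => dist (w.1 y) (w.1 xh) / dist y xh) ''
        {y : ↥C | 0 < dist y xh ∧ dist y xh ≤ rr}) := by
    intro w rr
    refine ⟨1, ?_⟩
    rintro v ⟨y, ⟨hy0, _⟩, rfl⟩
    dsimp only
    rw [div_le_one hy0]
    have hd := w.2.dist_le_mul y xh
    rwa [NNReal.coe_one, one_mul] at hd
  have hLSle : ∀ (w : NonexpMap C) {y : ↥C} {rr : ℝ}, 0 < dist y xh → dist y xh ≤ rr →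
      dist (w.1 y) (w.1 xh) / dist y xh ≤ LipScale (⇑w.1) xh rr := by
    intro w y rr hy0 hyr
    exact le_csSup (hbddA w rr) ⟨y, ⟨hy0, hyr⟩, rfl⟩
  have hLS_nonneg : ∀ (w : NonexpMap C) (rr : ℝ), 0 < rr → 0 ≤ LipScale (⇑w.1) xh rr := by
    intro w rr hr
    obtain ⟨y, hy0, hyr⟩ := hseg rr hr
    exact le_trans (div_nonneg dist_nonneg dist_nonneg) (hLSle w hy0 hyr)
  have hLS_mono : ∀ (w : NonexpMap C) {r1 r2 : ℝ}, 0 < r1 → r1 ≤ r2 →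
      LipScale (⇑w.1) xh r1 ≤ LipScale (⇑w.1) xh r2 := by
    intro w r1 r2 hr1 h12
    apply csSup_le_csSup (hbddA w r2)
    · obtain ⟨y, hy0, hyr⟩ := hseg r1 hr1
      exact ⟨_, ⟨y, ⟨hy0, hyr⟩, rfl⟩⟩
    · apply Set.image_mono
      rintro y ⟨h0, hle⟩
      exact ⟨h0, hle.trans h12⟩
  refine ⟨fun n => {w : NonexpMap C |
      LipScale (⇑w.1) xh (1 / ((n:ℝ) + 2)) ≤ 1 - 1 / ((n:ℝ) + 2)}, ?_, ?_⟩
  · -- the covering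
    ext w
    simp only [Set.mem_setOf_eq, Set.mem_iUnion]
    constructor
    · intro hw
      have hne : ((fun rr => LipScale (⇑w.1) xh rr) '' Set.Ioi 0).Nonempty :=
        ⟨LipScale (⇑w.1) xh 1, ⟨1, by norm_num, rfl⟩⟩
      have hbd : BddBelow ((fun rr => LipScale (⇑w.1) xh rr) '' Set.Ioi 0) := by
        refine ⟨0, ?_⟩
        rintro v ⟨rr, hrr, rfl⟩
        exact hLS_nonneg w rr (Set.mem_Ioi.1 hrr)
      have hw' : sInf ((fun rr => LipScale (⇑w.1) xh rr) '' Set.Ioi 0) < 1 := hw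
      obtain ⟨v, ⟨r0, hr0, rfl⟩, hv1⟩ := (csInf_lt_iff hbd hne).1 hw'
      have hr0' : (0:ℝ) < r0 := Set.mem_Ioi.1 hr0
      dsimp only at hv1
      have hθ0 : 0 < 1 - LipScale (⇑w.1) xh r0 := by linarith
      obtain ⟨n, hn⟩ := exists_nat_one_div_lt (lt_min hθ0 hr0')
      refine ⟨n, ?_⟩
      have h12 : (1:ℝ) / ((n:ℝ) + 2) ≤ 1 / ((n:ℝ) + 1) :=
        one_div_le_one_div_of_le (by positivity) (by linarith)
      have hlt : (1:ℝ) / ((n:ℝ) + 2) < min (1 - LipScale (⇑w.1) xh r0) r0 :=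
        lt_of_le_of_lt h12 hn
      have hler0 : (1:ℝ) / ((n:ℝ) + 2) ≤ r0 := (hlt.trans_le (min_le_right _ _)).le
      have hleθ : (1:ℝ) / ((n:ℝ) + 2) ≤ 1 - LipScale (⇑w.1) xh r0 :=
        (hlt.trans_le (min_le_left _ _)).le
      calc LipScale (⇑w.1) xh (1 / ((n:ℝ) + 2))
          ≤ LipScale (⇑w.1) xh r0 := hLS_mono w (by positivity) hler0
        _ ≤ 1 - 1 / ((n:ℝ) + 2) := by linarith
    · rintro ⟨n, hn⟩
      have hpos : (0:ℝ) < 1 / ((n:ℝ) + 2) := by positivity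
      have h1 : LipPt (⇑w.1) xh ≤ LipScale (⇑w.1) xh (1 / ((n:ℝ) + 2)) := by
        show sInf ((fun rr => LipScale (⇑w.1) xh rr) '' Set.Ioi 0) ≤ _
        apply csInf_le
        · refine ⟨0, ?_⟩
          rintro v ⟨rr, hrr, rfl⟩
          exact hLS_nonneg w rr (Set.mem_Ioi.1 hrr)
        · exact ⟨_, Set.mem_Ioi.2 hpos, rfl⟩
      linarith
  · -- each piece is lower porous
    intro n u hu
    have hu_ineq : LipScale (⇑u.1) xh (1 / ((n:ℝ) + 2)) ≤ 1 - 1 / ((n:ℝ) + 2) := hu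
    set ε : ℝ := 1 / ((n:ℝ) + 2) with hεdef
    have hε0 : 0 < ε := by positivity
    have hε1 : ε ≤ 1 := by
      rw [hεdef, div_le_one (by positivity)]
      have : (0:ℝ) ≤ (n:ℝ) := Nat.cast_nonneg n
      linarith
    have hflatP : ∀ y : ↥C, dist y xh ≤ ε → dist (u.1 y) (u.1 xh) ≤ (1 - ε) * dist y xh := by
      intro y hy
      rcases eq_or_lt_of_le (dist_nonneg : (0:ℝ) ≤ dist y xh) with h0 | h0
      · have hyx : y = xh := dist_le_zero.1 (le_of_eq h0.symm)
        rw [hyx]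
        simp [dist_self]
      · have hr := (hLSle u h0 hy).trans hu_ineq
        rwa [div_le_iff₀ h0] at hr
    set r0 : ℝ := min L 1 with hr0def
    have hr00 : 0 < r0 := lt_min hL0 one_pos
    have holeE : ∀ rr : ℝ, 0 < rr → rr ≤ r0 →
        (ε ^ 2 * rr / 64) ∈ porHoles {w : NonexpMap C |
          LipScale (⇑w.1) xh ε ≤ 1 - ε} u rr := by
      intro rr hrr hrler0
      have hrL : rr ≤ L := hrler0.trans (min_le_left _ _)
      have hr1 : rr ≤ 1 := hrler0.trans (min_le_right _ _)
      have hflatr : ∀ y : ↥C, dist y xh ≤ ε * rr / 8 →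
          dist (u.1 y) (u.1 xh) ≤ (1 - ε) * dist y xh := by
        intro y hy
        apply hflatP
        refine hy.trans ?_
        nlinarith [mul_le_mul_of_nonneg_left hr1 hε0.le]
      obtain ⟨g, hgdist, ystar, hyd, hstr⟩ :=
        hole_lemma hC_conv hx hu0C hu0x hD0 u hε0 hε1 hrr hrL hflatr
      rw [← hxh] at hyd hstr
      have hs0 : 0 < ε ^ 2 * rr / 64 := by positivity
      refine ⟨hs0, g, ?_⟩
      intro w hw
      have hwg : dist w g < ε ^ 2 * rr / 64 := mem_ball.1 hw
      constructor
      · rw [mem_ball]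
        have htri := dist_triangle w g u
        have hsq : ε ^ 2 ≤ 1 := by nlinarith
        have hb1 : ε ^ 2 * rr ≤ rr := by nlinarith
        linarith
      · -- w is not in the piece
        intro hwP
        have hwP' : LipScale (⇑w.1) xh ε ≤ 1 - ε := hwP
        set t : ℝ := ε * rr / 8 with htdef
        have ht0 : 0 < t := by positivity
        have hvals : ∀ z : ↥C, dist (w.1 z) (g.1 z) ≤ dist w g := by
          intro z
          rw [Subtype.dist_eq w g]
          exact BoundedContinuousFunction.dist_coe_le_dist z
        have htri := dist_triangle4 (g.1 ystar) (w.1 ystar) (w.1 xh) (g.1 xh)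
        have h1 : dist (g.1 ystar) (w.1 ystar) ≤ dist w g := by
          rw [dist_comm]; exact hvals ystar
        have h2 : dist (w.1 xh) (g.1 xh) ≤ dist w g := hvals xh
        have hts : 2 * (ε ^ 2 * rr / 64) ≤ ε / 4 * t := le_of_eq (by rw [htdef]; ring)
        have hrid : (1 - ε/2) * t - ε/4 * t = (1 - ε) * t + ε/4 * t := by ring
        have hεt : 0 < ε/4 * t := by positivity
        have hstretch_w : (1 - ε) * t < dist (w.1 ystar) (w.1 xh) := by
          linarith [hstr, htri, h1, h2, hwg, hts, hrid, hεt]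
        have hy0 : 0 < dist ystar xh := by rw [hyd]; exact ht0
        have hyε : dist ystar xh ≤ ε := by
          rw [hyd, htdef]
          nlinarith [mul_le_mul_of_nonneg_left hr1 hε0.le]
        have hrat := hLSle w hy0 hyε
        have hgt : (1 - ε) < LipScale (⇑w.1) xh ε := by
          refine lt_of_lt_of_le ?_ hrat
          rw [hyd, lt_div_iff₀ ht0]
          linarith [hstretch_w]
        linarith
    constructor
    · -- holes are nonempty for every radius
      intro rr hrr
      rcases le_total rr r0 with h | h
      · exact ⟨_, holeE rr hrr h⟩
      · obtain ⟨hs0, g, hsub⟩ := holeE r0 hr00 le_rfl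
        refine ⟨_, hs0, g, ?_⟩
        intro w hw
        obtain ⟨hin, hout⟩ := hsub hw
        exact ⟨mem_ball.2 (lt_of_lt_of_le (mem_ball.1 hin) h), hout⟩
    · -- the liminf is positive
      have hbddH : ∀ rr : ℝ, 0 < rr → BddAbove (porHoles {w : NonexpMap C |
          LipScale (⇑w.1) xh ε ≤ 1 - ε} u rr) := by
        intro rr hrr
        refine ⟨rr, ?_⟩
        rintro s ⟨hs0, y, hsub⟩
        have hyin := hsub (mem_ball_self hs0)
        have hfno : u ∉ Metric.ball y s := fun hmem' => (hsub hmem').2 hu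
        have hsy : s ≤ dist u y := le_of_not_gt (fun hlt => hfno (mem_ball.2 hlt))
        have hyu : dist y u < rr := mem_ball.1 hyin.1
        calc s ≤ dist u y := hsy
          _ = dist y u := dist_comm _ _
          _ ≤ rr := hyu.le
      have hγ : ∀ rr : ℝ, 0 < rr → rr ≤ r0 →
          ε ^ 2 / 64 ≤ porGamma {w : NonexpMap C |
            LipScale (⇑w.1) xh ε ≤ 1 - ε} u rr / rr := by
        intro rr hrr hrler0
        have hle := le_csSup (hbddH rr hrr) (holeE rr hrr hrler0)
        rw [le_div_iff₀ hrr]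
        calc ε ^ 2 / 64 * rr = ε ^ 2 * rr / 64 := by ring
          _ ≤ _ := hle
      have hcoe : (0 : EReal) < ((ε ^ 2 / 64 : ℝ) : EReal) :=
        EReal.coe_pos.2 (by positivity)
      refine lt_of_lt_of_le hcoe ?_
      refine Filter.le_liminf_of_le (by isBoundedDefault) ?_
      filter_upwards [Ioc_mem_nhdsGT_of_mem
        (show (0:ℝ) ∈ Set.Ico (0:ℝ) r0 from ⟨le_refl (0:ℝ), hr00⟩)] with rr hrr
      exact EReal.coe_le_coe_iff.2 (hγ rr hrr.1 hrr.2)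
end
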